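/- arXiv:1412.6516 — 7 statements merged into one kernel-verified Lean document; each statement's English description precedes it below -/
import Mathlib

section
/- With Γ = ℤⁿ acting freely, properly discontinuously, cocompactly on a length space (X,d), let 𝒵 ≤ Γ be the subgroup generated by n linearly independent elements of Σ_D = {γ : d(γx₀, x₀) ≤ 3D}, where D ≥ diam(Γ\X) and ω(Γ,d) ≤ Ω. Then the index satisfies [Γ:𝒵] ≤ (n!/2ⁿ)·Ω·(3D)ⁿ. -/
open Filter

open Finset in
lemma exists_gap_fun (n k : ℕ) (hn : 0 < n) :
    ∃ a : {S // S ∈ Finset.powersetCard n (Finset.Icc 1 k)} → (Fin n → ℤ),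
      Function.Injective a ∧ (∀ S i, 1 ≤ a S i) ∧ (∀ S, ∑ i, a S i ≤ (k : ℤ)) := by
  classical
  -- data for each S
  have hmem : ∀ S : {S // S ∈ Finset.powersetCard n (Finset.Icc 1 k)},
      (S : Finset ℕ).card = n ∧ (S : Finset ℕ) ⊆ Finset.Icc 1 k := by
    intro S
    have := S.2
    rw [Finset.mem_powersetCard] at this
    exact ⟨this.2, this.1⟩
  set g : {S // S ∈ Finset.powersetCard n (Finset.Icc 1 k)} → Fin n → ℕ :=
    fun S i => (S : Finset ℕ).orderEmbOfFin (hmem S).1 i with hg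
  -- partial "ℕ-indexed" version, with s 0 = 0
  set t : {S // S ∈ Finset.powersetCard n (Finset.Icc 1 k)} → ℕ → ℤ :=
    fun S j => if h : j - 1 < n ∧ j ≠ 0 then (g S ⟨j - 1, h.1⟩ : ℤ) else 0 with ht
  refine ⟨fun S i => t S ((i : ℕ) + 1) - t S i, ?_, ?_, ?_⟩
  · -- injectivity
    intro S S' hSS'
    -- partial sums recover g
    have key : ∀ S₀ (i : Fin n), ∑ j ∈ Finset.range ((i : ℕ) + 1), (t S₀ (j + 1) - t S₀ j)
        = (g S₀ i : ℤ) := by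
      intro S₀ i
      rw [Finset.sum_range_sub (t S₀)]
      have h0 : t S₀ 0 = 0 := by simp [ht]
      have h1 : t S₀ ((i : ℕ) + 1) = (g S₀ i : ℤ) := by
        simp [ht, i.isLt]
      rw [h0, h1, sub_zero]
    have hgeq : ∀ i : Fin n, g S i = g S' i := by
      intro i
      have : (g S i : ℤ) = (g S' i : ℤ) := by
        rw [← key S i, ← key S' i]
        apply Finset.sum_congr rfl
        intro j hj
        have := congrFun hSS' -- function Fin n → ℤ equality
        have hjr := Finset.mem_range.1 hj
        have hin := i.isLt
        have hjn : j < n := by omega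
        have := congrFun hSS' ⟨j, hjn⟩
        simpa using this
      exact_mod_cast this
    -- recover S from g
    have : ((S : Finset ℕ) : Set ℕ) = ((S' : Finset ℕ) : Set ℕ) := by
      have hfun : ⇑((S : Finset ℕ).orderEmbOfFin (hmem S).1)
          = ⇑((S' : Finset ℕ).orderEmbOfFin (hmem S').1) := funext fun i => hgeq i
      rw [← Finset.range_orderEmbOfFin _ (hmem S).1, hfun, Finset.range_orderEmbOfFin]
    exact Subtype.ext (Finset.coe_injective this)
  · -- positivity
    intro S i
    have hmono := ((S : Finset ℕ).orderEmbOfFin (hmem S).1).strictMono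
    have hIcc : ∀ j : Fin n, g S j ∈ Finset.Icc 1 k :=
      fun j => (hmem S).2 (Finset.orderEmbOfFin_mem _ (hmem S).1 j)
    show 1 ≤ t S ((i : ℕ) + 1) - t S (i : ℕ)
    rcases Nat.eq_zero_or_pos (i : ℕ) with h0 | hpos
    · have h1 : t S ((i : ℕ) + 1) = (g S i : ℤ) := by simp [ht, i.isLt]
      have h2 : t S (i : ℕ) = 0 := by simp [ht, h0]
      rw [h1, h2, sub_zero]
      have := (Finset.mem_Icc.1 (hIcc i)).1
      exact_mod_cast this
    · have hlt : (i : ℕ) - 1 < n := lt_of_le_of_lt (Nat.sub_le _ _) i.isLt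
      have h1 : t S ((i : ℕ) + 1) = (g S i : ℤ) := by simp [ht, i.isLt]
      have h2 : t S (i : ℕ) = (g S ⟨(i : ℕ) - 1, hlt⟩ : ℤ) := by
        simp [ht, hlt, Nat.pos_iff_ne_zero.1 hpos]
      rw [h1, h2]
      have : g S ⟨(i : ℕ) - 1, hlt⟩ < g S i := by
        apply hmono
        simp [Fin.lt_def]
        omega
      omega
  · -- sum bound
    intro S
    have hIcc : ∀ j : Fin n, g S j ∈ Finset.Icc 1 k :=
      fun j => (hmem S).2 (Finset.orderEmbOfFin_mem _ (hmem S).1 j)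
    have : ∑ i : Fin n, (t S ((i : ℕ) + 1) - t S i)
        = ∑ j ∈ Finset.range n, (t S (j + 1) - t S j) := by
      rw [Finset.sum_range fun j => t S (j + 1) - t S j]
    rw [this, Finset.sum_range_sub (t S)]
    have h0 : t S 0 = 0 := by simp [ht]
    have hn1 : n - 1 < n := Nat.sub_lt hn one_pos
    have h1 : t S n = (g S ⟨n - 1, hn1⟩ : ℤ) := by
      simp [ht, hn1, Nat.pos_iff_ne_zero.1 hn]
    rw [h0, h1, sub_zero]
    have := (Finset.mem_Icc.1 (hIcc ⟨n - 1, hn1⟩)).2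
    exact_mod_cast this

lemma tendsto_linear_div (b c d : ℝ) (hc : 0 < c) :
    Tendsto (fun x : ℝ => (x + b) / (c * x + d)) atTop (nhds (1 / c)) := by
  have hden : Tendsto (fun x : ℝ => c * x + d) atTop atTop :=
    tendsto_atTop_add_const_right atTop d (Tendsto.const_mul_atTop hc tendsto_id)
  have hev : ∀ᶠ x : ℝ in atTop, (1 + b / x) / (c + d / x) = (x + b) / (c * x + d) := by
    filter_upwards [eventually_gt_atTop (0 : ℝ), hden.eventually_gt_atTop 0] with x hx hcx
    have h1 : c + d / x = (c * x + d) / x := by field_simp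
    have hne : c + d / x ≠ 0 := by rw [h1]; exact (div_pos hcx hx).ne'
    rw [div_eq_div_iff hne (ne_of_gt hcx)]
    field_simp
    try ring
  have h1 : Tendsto (fun x : ℝ => (1 + b / x) / (c + d / x)) atTop (nhds ((1 + 0) / (c + 0))) := by
    apply Tendsto.div
    · exact tendsto_const_nhds.add (tendsto_const_nhds.div_atTop tendsto_id)
    · exact tendsto_const_nhds.add (tendsto_const_nhds.div_atTop tendsto_id)
    · simpa using hc.ne'
  simpa using Tendsto.congr' hev h1

/-- if `𝒵 ≤ Γ = ℤⁿ` is generated by `n` linearly independent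
elements of `Σ_D = {γ : d(γ.x₀,x₀) ≤ 3D}`, where `diam(Γ\X) ≤ D` and
`ω(Γ,d) ≤ Ω`, then `[Γ:𝒵] ≤ (n!/2ⁿ)·Ω·(3D)ⁿ`. -/
theorem index_bound_of_independent_generators
    {X : Type*} [MetricSpace X] (n : ℕ)
    (ρ : (Fin n → ℤ) → X → X)
    (hiso : ∀ γ x y, dist (ρ γ x) (ρ γ y) = dist x y)
    (hadd : ∀ γ γ' x, ρ (γ + γ') x = ρ γ (ρ γ' x))
    (hzero : ∀ x, ρ 0 x = x)
    (hfree : ∀ γ x, ρ γ x = x → γ = 0)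
    (hpd : ∀ (x : X) (r : ℝ), {γ : Fin n → ℤ | dist x (ρ γ x) ≤ r}.Finite)
    (hlength : ∀ x y : X, ∀ ε > (0:ℝ), ∃ z : X,
      dist x z ≤ dist x y / 2 + ε ∧ dist z y ≤ dist x y / 2 + ε)
    (x₀ : X) (D Ω ω : ℝ)
    (hcodiam : ∀ x y : X, ∃ γ : Fin n → ℤ, dist x (ρ γ y) ≤ D)
    (hω : Tendsto (fun R : ℝ =>
        (({γ : Fin n → ℤ | dist x₀ (ρ γ x₀) < R}.ncard : ℝ)) / R ^ n)
      atTop (nhds ω))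
    (hΩ : ω ≤ Ω)
    (v : Fin n → (Fin n → ℤ))
    (hv : LinearIndependent ℤ v)
    (hvdisp : ∀ i, dist (ρ (v i) x₀) x₀ ≤ 3 * D) :
    ((AddSubgroup.closure (Set.range v)).index : ℝ)
      ≤ ((n.factorial : ℝ) / 2 ^ n) * Ω * (3 * D) ^ n := by
  classical
  set H := AddSubgroup.closure (Set.range v) with hH
  have hωnonneg : 0 ≤ ω := by
    refine le_of_tendsto_of_tendsto tendsto_const_nhds hω ?_
    filter_upwards [eventually_gt_atTop (0 : ℝ)] with R hR
    positivity
  -- the case n = 0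
  rcases Nat.eq_zero_or_pos n with hn0 | hn
  · subst hn0
    haveI : Unique (Fin 0 → ℤ) := ⟨⟨0⟩, fun f => funext fun i => i.elim0⟩
    have hidx : H.index = 1 := by
      have hHt : H = ⊤ := by
        ext x
        simp only [AddSubgroup.mem_top, iff_true]
        rw [Subsingleton.elim x (0 : Fin 0 → ℤ)]
        exact H.zero_mem
      rw [hHt, AddSubgroup.index_top]
    have hω1 : ω = 1 := by
      refine tendsto_nhds_unique hω ?_
      have hev : ∀ᶠ R : ℝ in atTop,
          (1 : ℝ) = (({γ : Fin 0 → ℤ | dist x₀ (ρ γ x₀) < R}.ncard : ℝ)) / R ^ 0 := by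
        filter_upwards [eventually_gt_atTop (0 : ℝ)] with R hR
        have hset : {γ : Fin 0 → ℤ | dist x₀ (ρ γ x₀) < R} = Set.univ := by
          ext γ
          simp only [Set.mem_setOf_eq, Set.mem_univ, iff_true]
          rw [Subsingleton.elim γ (0 : Fin 0 → ℤ), hzero, dist_self]
          exact hR
        rw [hset, Set.ncard_univ]
        simp
      exact Tendsto.congr' hev tendsto_const_nhds
    rw [hidx]
    simp only [Nat.factorial_zero, pow_zero, Nat.cast_one, one_div, inv_one, one_mul, mul_one]
    linarith [hω1 ▸ hΩ]
  -- now n ≥ 1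
  have h3D0 : 0 ≤ 3 * D := le_trans dist_nonneg (hvdisp ⟨0, hn⟩)
  by_cases hidx0 : H.index = 0
  · rw [hidx0]
    push_cast
    exact mul_nonneg (mul_nonneg (by positivity) (le_trans hωnonneg hΩ))
      (pow_nonneg h3D0 n)
  -- 3D > 0
  have h3D : 0 < 3 * D := by
    rcases lt_or_ge 0 (3 * D) with h | h
    · exact h
    · exfalso
      have hz : dist (ρ (v ⟨0, hn⟩) x₀) x₀ = 0 :=
        le_antisymm ((hvdisp ⟨0, hn⟩).trans h) dist_nonneg
      exact hv.ne_zero ⟨0, hn⟩ (hfree _ _ (by rwa [dist_eq_zero] at hz))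
  -- the displacement "norm"
  set φ : (Fin n → ℤ) → ℝ := fun γ => dist x₀ (ρ γ x₀) with hφ
  have φ_nonneg : ∀ γ, 0 ≤ φ γ := fun γ => dist_nonneg
  have φ_zero : φ 0 = 0 := by simp [hφ, hzero]
  have φ_add : ∀ γ γ', φ (γ + γ') ≤ φ γ + φ γ' := by
    intro γ γ'
    have h1 : dist (ρ γ x₀) (ρ (γ + γ') x₀) = φ γ' := by
      rw [hadd, hiso]
    calc dist x₀ (ρ (γ + γ') x₀) ≤ dist x₀ (ρ γ x₀) + dist (ρ γ x₀) (ρ (γ + γ') x₀) :=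
          dist_triangle _ _ _
      _ = φ γ + φ γ' := by rw [h1]
  have φ_neg : ∀ γ, φ (-γ) = φ γ := by
    intro γ
    have : dist x₀ (ρ (-γ) x₀) = dist (ρ γ x₀) (ρ γ (ρ (-γ) x₀)) := (hiso γ _ _).symm
    rw [hφ]
    simp only
    rw [this, ← hadd, add_neg_cancel, hzero, dist_comm]
  have φ_nsmul : ∀ (c : ℕ) γ, φ (c • γ) ≤ c * φ γ := by
    intro c γ
    induction c with
    | zero => simp [φ_zero]
    | succ c ih =>
        rw [succ_nsmul]
        calc φ (c • γ + γ) ≤ φ (c • γ) + φ γ := φ_add _ _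
          _ ≤ c * φ γ + φ γ := by linarith
          _ = (c + 1 : ℕ) * φ γ := by push_cast; ring
  have φ_zsmul : ∀ (c : ℤ) γ, φ (c • γ) ≤ (c.natAbs : ℝ) * φ γ := by
    intro c γ
    rcases Int.natAbs_eq c with h | h
    · have he : c • γ = (c.natAbs : ℕ) • γ := by
        rw [← natCast_zsmul]; exact congrArg (· • γ) h
      rw [he]; exact φ_nsmul _ _
    · have he : c • γ = -((c.natAbs : ℕ) • γ) := by
        rw [← natCast_zsmul, ← neg_zsmul]; exact congrArg (· • γ) h
      rw [he, φ_neg]; exact φ_nsmul _ _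
  have φ_sum : ∀ (f : Fin n → (Fin n → ℤ)),
      φ (∑ i, f i) ≤ ∑ i, φ (f i) := by
    intro f
    refine Finset.cons_induction ?_ ?_ Finset.univ
    · simpa using φ_zero.le
    · intro a s ha ih
      rw [Finset.sum_cons, Finset.sum_cons]
      calc φ (f a + ∑ i ∈ s, f i) ≤ φ (f a) + φ (∑ i ∈ s, f i) := φ_add _ _
        _ ≤ φ (f a) + ∑ i ∈ s, φ (f i) := by linarith
  -- coset representatives
  haveI hfinQ : Finite ((Fin n → ℤ) ⧸ H) :=
    Nat.finite_of_card_ne_zero (by rwa [← AddSubgroup.index_eq_card])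
  haveI : Fintype ((Fin n → ℤ) ⧸ H) := Fintype.ofFinite _
  set C := ∑ q : (Fin n → ℤ) ⧸ H, φ (Quotient.out q) with hC
  have hC0 : 0 ≤ C := Finset.sum_nonneg fun q _ => φ_nonneg _
  have hCle : ∀ q : (Fin n → ℤ) ⧸ H, φ (Quotient.out q) ≤ C := fun q =>
    Finset.single_le_sum (fun r _ => φ_nonneg _) (Finset.mem_univ q)
  set Rf : ℕ → ℝ := fun k => 3 * D * k + C + 1 with hRf
  have hRfpos : ∀ k : ℕ, 0 < Rf k := by
    intro k
    have h1 : 0 ≤ 3 * D * (k : ℝ) := mul_nonneg h3D0 (Nat.cast_nonneg k)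
    simp only [hRf]
    linarith
  have hfin : ∀ R : ℝ, {γ : Fin n → ℤ | dist x₀ (ρ γ x₀) < R}.Finite := by
    intro R
    apply (hpd x₀ R).subset
    intro γ hγ
    simp only [Set.mem_setOf_eq] at hγ ⊢
    exact hγ.le
  -- the key counting estimate
  have hkey : ∀ k : ℕ, H.index * (2 ^ n * (k + 1 - n) ^ n)
      ≤ n.factorial * {γ : Fin n → ℤ | dist x₀ (ρ γ x₀) < Rf k}.ncard := by
    intro k
    obtain ⟨a, hainj, hapos, hasum⟩ := exists_gap_fun n k hn
    haveI instS : Fintype {S // S ∈ Finset.powersetCard n (Finset.Icc 1 k)} :=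
      FinsetCoe.fintype _
    set c : (Fin n → Bool) → {S // S ∈ Finset.powersetCard n (Finset.Icc 1 k)} → Fin n → ℤ :=
      fun σ S i => if σ i then a S i else -(a S i) with hc
    set F : ((Fin n → ℤ) ⧸ H) × (Fin n → Bool) × {S // S ∈ Finset.powersetCard n (Finset.Icc 1 k)} →
        (Fin n → ℤ) := fun p => Quotient.out p.1 + ∑ i, c p.2.1 p.2.2 i • v i with hF
    have hzH : ∀ σ S, (∑ i, c σ S i • v i) ∈ H := fun σ S =>
      AddSubgroup.sum_mem H fun i _ =>
        AddSubgroup.zsmul_mem H (AddSubgroup.subset_closure ⟨i, rfl⟩) _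
    have hcabs : ∀ σ S i, ((c σ S i).natAbs : ℤ) = a S i := by
      intro σ S i
      have h1 := hapos S i
      simp only [hc]
      split_ifs <;> omega
    -- F maps into the ball
    have hmaps : ∀ p, F p ∈ (hfin (Rf k)).toFinset := by
      intro p
      rw [Set.Finite.mem_toFinset]
      show dist x₀ (ρ (F p) x₀) < Rf k
      have h1 : φ (F p) ≤ φ (Quotient.out p.1) + φ (∑ i, c p.2.1 p.2.2 i • v i) := φ_add _ _
      have h2 : φ (∑ i, c p.2.1 p.2.2 i • v i) ≤ ∑ i, φ (c p.2.1 p.2.2 i • v i) :=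
        φ_sum _
      have h3 : ∀ i, φ (c p.2.1 p.2.2 i • v i) ≤ ((a p.2.2 i : ℤ) : ℝ) * (3 * D) := by
        intro i
        refine (φ_zsmul _ _).trans ?_
        have habs : (((c p.2.1 p.2.2 i).natAbs : ℝ)) = ((a p.2.2 i : ℤ) : ℝ) := by
          rw [← hcabs p.2.1 p.2.2 i]
          simp [Nat.cast_natAbs]
        rw [habs]
        have hvφ : φ (v i) ≤ 3 * D := by
          rw [hφ]
          simp only
          rw [dist_comm]
          exact hvdisp i
        have hanneg : (0 : ℝ) ≤ ((a p.2.2 i : ℤ) : ℝ) := by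
          have := hapos p.2.2 i
          exact_mod_cast le_trans zero_le_one this
        exact mul_le_mul_of_nonneg_left hvφ hanneg
      have hsum_le : ∑ i, φ (c p.2.1 p.2.2 i • v i) ≤ (k : ℝ) * (3 * D) := by
        calc ∑ i, φ (c p.2.1 p.2.2 i • v i) ≤ ∑ i, ((a p.2.2 i : ℤ) : ℝ) * (3 * D) :=
              Finset.sum_le_sum fun i _ => h3 i
          _ = ((∑ i, a p.2.2 i : ℤ) : ℝ) * (3 * D) := by push_cast; rw [Finset.sum_mul]
          _ ≤ (k : ℝ) * (3 * D) := by
              have : ((∑ i, a p.2.2 i : ℤ) : ℝ) ≤ (k : ℝ) := by exact_mod_cast hasum p.2.2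
              exact mul_le_mul_of_nonneg_right this h3D0
      have h6 : φ (Quotient.out p.1) ≤ C := hCle _
      have hRfk : Rf k = 3 * D * k + C + 1 := rfl
      show φ (F p) < Rf k
      rw [hRfk]
      nlinarith [h1, h2, hsum_le, h6]
    -- F is injective
    have hinj : Function.Injective F := by
      rintro ⟨q1, σ1, S1⟩ ⟨q2, σ2, S2⟩ hpp'
      simp only [hF] at hpp'
      have hmk : ∀ (r : (Fin n → ℤ) ⧸ H) σ S,
          (QuotientAddGroup.mk' H) (Quotient.out r + ∑ i, c σ S i • v i) = r := by
        intro r σ S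
        rw [map_add]
        have hz0 : (QuotientAddGroup.mk' H) (∑ i, c σ S i • v i) = 0 :=
          (QuotientAddGroup.eq_zero_iff _).2 (hzH σ S)
        rw [hz0, add_zero, QuotientAddGroup.mk'_apply, QuotientAddGroup.out_eq']
      have hq : q1 = q2 := by
        have := congrArg (QuotientAddGroup.mk' H) hpp'
        rwa [hmk q1 σ1 S1, hmk q2 σ2 S2] at this
      have hzz : ∑ i, c σ1 S1 i • v i = ∑ i, c σ2 S2 i • v i := by
        rw [hq] at hpp'
        exact add_left_cancel hpp'
      have hdiff : ∑ i, (c σ1 S1 i - c σ2 S2 i) • v i = 0 := by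
        simp only [sub_smul]
        rw [Finset.sum_sub_distrib, hzz, sub_self]
      have hcc : ∀ i, c σ1 S1 i = c σ2 S2 i := by
        intro i
        have := Fintype.linearIndependent_iff.1 hv _ hdiff i
        exact sub_eq_zero.1 this
      have hσ : σ1 = σ2 := by
        funext i
        have h1 := hapos S1 i
        have h2 := hapos S2 i
        have h3 := hcc i
        simp only [hc] at h3
        cases hb : σ1 i <;> cases hb' : σ2 i <;> rw [hb, hb'] at h3 <;>
          simp only [if_true, if_false, Bool.false_eq_true] at h3 <;>
          first | rfl | omega
      have ha : S1 = S2 := by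
        apply hainj
        funext i
        have h3 := hcc i
        simp only [hc, hσ] at h3
        cases hb : σ2 i <;> rw [hb] at h3 <;>
          simp only [if_true, if_false, Bool.false_eq_true, neg_inj] at h3 <;> exact h3
      rw [hq, hσ, ha]
    -- counting
    have hcardle : Fintype.card
        (((Fin n → ℤ) ⧸ H) × (Fin n → Bool) × {S // S ∈ Finset.powersetCard n (Finset.Icc 1 k)})
        ≤ (hfin (Rf k)).toFinset.card := by
      rw [← Finset.card_univ]
      exact Finset.card_le_card_of_injOn F (fun p _ => hmaps p) hinj.injOn
    have hc1 : Fintype.card ((Fin n → ℤ) ⧸ H) = H.index := by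
      rw [AddSubgroup.index_eq_card, Nat.card_eq_fintype_card]
    have hc2 : Fintype.card (Fin n → Bool) = 2 ^ n := by simp
    have hc3 : Fintype.card {S // S ∈ Finset.powersetCard n (Finset.Icc 1 k)}
        = Nat.choose k n := by
      rw [Fintype.card_coe, Finset.card_powersetCard, Nat.card_Icc]
      congr 1
    have hkey0 : H.index * (2 ^ n * Nat.choose k n) ≤ (hfin (Rf k)).toFinset.card := by
      calc H.index * (2 ^ n * Nat.choose k n)
          = Fintype.card (((Fin n → ℤ) ⧸ H) × (Fin n → Bool) ×
            {S // S ∈ Finset.powersetCard n (Finset.Icc 1 k)}) := by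
            rw [Fintype.card_prod, Fintype.card_prod, hc1, hc2, hc3]
        _ ≤ _ := hcardle
    have hd : (k + 1 - n) ^ n ≤ n.factorial * Nat.choose k n := by
      rw [← Nat.descFactorial_eq_factorial_mul_choose]
      exact Nat.pow_sub_le_descFactorial k n
    calc H.index * (2 ^ n * (k + 1 - n) ^ n)
        ≤ H.index * (2 ^ n * (n.factorial * Nat.choose k n)) :=
          Nat.mul_le_mul_left _ (Nat.mul_le_mul_left _ hd)
      _ = n.factorial * (H.index * (2 ^ n * Nat.choose k n)) := by ring
      _ ≤ n.factorial * (hfin (Rf k)).toFinset.card := Nat.mul_le_mul_left _ hkey0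
      _ = n.factorial * {γ : Fin n → ℤ | dist x₀ (ρ γ x₀) < Rf k}.ncard := by
          rw [Set.ncard_eq_toFinset_card _ (hfin (Rf k))]
  -- limit comparison
  have hRtend : Tendsto Rf atTop atTop := by
    have h1 : Tendsto (fun k : ℕ => 3 * D * (k : ℝ)) atTop atTop :=
      Tendsto.const_mul_atTop h3D tendsto_natCast_atTop_atTop
    exact tendsto_atTop_add_const_right _ 1 (tendsto_atTop_add_const_right _ C h1)
  have hωcomp : Tendsto (fun k : ℕ =>
      ({γ : Fin n → ℤ | dist x₀ (ρ γ x₀) < Rf k}.ncard : ℝ) / (Rf k) ^ n)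
      atTop (nhds ω) := hω.comp hRtend
  set L : ℝ := (H.index : ℝ) * 2 ^ n / (n.factorial : ℝ) * (1 / (3 * D)) ^ n with hL
  have hgl : Tendsto (fun k : ℕ => (H.index : ℝ) * 2 ^ n / (n.factorial : ℝ)
      * (((k + 1 - n : ℕ) : ℝ) / Rf k) ^ n) atTop (nhds L) := by
    rw [hL]
    apply Tendsto.const_mul
    apply Tendsto.pow
    have hbase : Tendsto (fun x : ℝ => (x + (1 - (n : ℝ))) / (3 * D * x + (C + 1)))
        atTop (nhds (1 / (3 * D))) := tendsto_linear_div _ _ _ h3D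
    refine Tendsto.congr' ?_ (hbase.comp tendsto_natCast_atTop_atTop)
    filter_upwards [eventually_ge_atTop n] with k hk
    have hcast : ((k + 1 - n : ℕ) : ℝ) = (k : ℝ) + (1 - (n : ℝ)) := by
      have hle : n ≤ k + 1 := by omega
      rw [Nat.cast_sub hle]
      push_cast
      ring
    simp only [Function.comp_apply, hRf, hcast]
    ring_nf
  have hcompare : ∀ᶠ k : ℕ in atTop,
      (H.index : ℝ) * 2 ^ n / (n.factorial : ℝ) * (((k + 1 - n : ℕ) : ℝ) / Rf k) ^ n
      ≤ ({γ : Fin n → ℤ | dist x₀ (ρ γ x₀) < Rf k}.ncard : ℝ) / (Rf k) ^ n := by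
    apply Eventually.of_forall
    intro k
    have hkey' : (H.index : ℝ) * (2 ^ n * ((k + 1 - n : ℕ) : ℝ) ^ n)
        ≤ (n.factorial : ℝ) * ({γ : Fin n → ℤ | dist x₀ (ρ γ x₀) < Rf k}.ncard : ℝ) := by
      exact_mod_cast hkey k
    have hR := hRfpos k
    have hnf : (0 : ℝ) < (n.factorial : ℝ) := by exact_mod_cast n.factorial_pos
    rw [div_pow, div_mul_div_comm, div_le_div_iff₀ (by positivity) (by positivity)]
    nlinarith [mul_le_mul_of_nonneg_right hkey' (pow_nonneg hR.le n), pow_nonneg hR.le n]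
  have hLΩ : L ≤ Ω := (le_of_tendsto_of_tendsto hgl hωcomp hcompare).trans hΩ
  -- final algebra
  have hnf : (n.factorial : ℝ) ≠ 0 := by
    have : (0 : ℝ) < (n.factorial : ℝ) := by exact_mod_cast n.factorial_pos
    exact this.ne'
  have h2n : ((2 : ℝ)) ^ n ≠ 0 := by positivity
  have h3Dn : ((3 * D) : ℝ) ^ n ≠ 0 := (pow_pos h3D n).ne'
  have hfac : (0 : ℝ) < (n.factorial : ℝ) / 2 ^ n * (3 * D) ^ n := by
    apply mul_pos (div_pos ?_ (by positivity)) (pow_pos h3D n)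
    exact_mod_cast n.factorial_pos
  have hmul := mul_le_mul_of_nonneg_right hLΩ hfac.le
  have hsimp : L * ((n.factorial : ℝ) / 2 ^ n * (3 * D) ^ n) = (H.index : ℝ) := by
    rw [hL]
    field_simp
    try ring
    have hD : D ≠ 0 := by linarith
    rw [one_div, inv_pow, inv_pow, mul_inv_cancel₀ (pow_ne_zero n hD), one_mul,
      inv_mul_cancel₀ (pow_ne_zero n (by norm_num : (3:ℝ) ≠ 0))]
  calc ((H.index : ℝ)) = L * ((n.factorial : ℝ) / 2 ^ n * (3 * D) ^ n) := hsimp.symm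
    _ ≤ Ω * ((n.factorial : ℝ) / 2 ^ n * (3 * D) ^ n) := hmul
    _ = ((n.factorial : ℝ) / 2 ^ n) * Ω * (3 * D) ^ n := by ring
end

section
/- With the hypotheses above (Γ = ℤⁿ cocompact on a length space, D ≥ diam(Γ\X), ω(Γ,d) ≤ Ω, 𝒵 = ⟨Σ_n⟩ generated by n linearly independent elements of Σ_D), every γ ∈ Γ satisfies d_{x₀}(γ, 𝒵) ≤ (n!/2ⁿ)·Ω·(3D)^{n+1}, and hence diam(𝒵\X) ≤ D + (n!/2ⁿ)·Ω·(3D)^{n+1}. -/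
open Filter

section Aux

variable {X : Type*} [MetricSpace X] {n : ℕ}
  {ρ : (Fin n → ℤ) → X → X}

theorem aux_dist_rho (hiso : ∀ γ x y, dist (ρ γ x) (ρ γ y) = dist x y)
    (hadd : ∀ γ γ' x, ρ (γ + γ') x = ρ γ (ρ γ' x))
    (hzero : ∀ x, ρ 0 x = x)
    (a b : Fin n → ℤ) (y : X) :
    dist (ρ a y) (ρ b y) = dist y (ρ (b - a) y) := by
  have h1 : ρ (-a) (ρ a y) = y := by
    rw [← hadd]; simp [hzero]
  have h2 : ρ (-a) (ρ b y) = ρ (b - a) y := by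
    rw [← hadd]; congr 1; ring
  calc dist (ρ a y) (ρ b y) = dist (ρ (-a) (ρ a y)) (ρ (-a) (ρ b y)) := (hiso _ _ _).symm
    _ = dist y (ρ (b - a) y) := by rw [h1, h2]

theorem aux_disp_add (hiso : ∀ γ x y, dist (ρ γ x) (ρ γ y) = dist x y)
    (hadd : ∀ γ γ' x, ρ (γ + γ') x = ρ γ (ρ γ' x))
    (hzero : ∀ x, ρ 0 x = x)
    (a b : Fin n → ℤ) (y : X) :
    dist y (ρ (a + b) y) ≤ dist y (ρ a y) + dist y (ρ b y) := by
  have h2 : dist (ρ a y) (ρ (a + b) y) = dist y (ρ b y) := by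
    rw [aux_dist_rho hiso hadd hzero]; congr 2; ring
  calc dist y (ρ (a + b) y) ≤ dist y (ρ a y) + dist (ρ a y) (ρ (a + b) y) := dist_triangle _ _ _
    _ = dist y (ρ a y) + dist y (ρ b y) := by rw [h2]

theorem aux_disp_neg (hiso : ∀ γ x y, dist (ρ γ x) (ρ γ y) = dist x y)
    (hadd : ∀ γ γ' x, ρ (γ + γ') x = ρ γ (ρ γ' x))
    (hzero : ∀ x, ρ 0 x = x)
    (a : Fin n → ℤ) (y : X) :
    dist y (ρ (-a) y) = dist y (ρ a y) := by
  have := aux_dist_rho hiso hadd hzero a 0 y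
  rw [hzero, zero_sub] at this
  rw [← this, dist_comm]

theorem aux_disp_list (hiso : ∀ γ x y, dist (ρ γ x) (ρ γ y) = dist x y)
    (hadd : ∀ γ γ' x, ρ (γ + γ') x = ρ γ (ρ γ' x))
    (hzero : ∀ x, ρ 0 x = x)
    (y : X) (c : ℝ) :
    ∀ l : List (Fin n → ℤ), (∀ a ∈ l, dist y (ρ a y) ≤ c) →
      dist y (ρ l.sum y) ≤ l.length * c := by
  intro l
  induction l with
  | nil => intro _; simp [hzero]
  | cons a t ih =>
    intro h
    have h1 : dist y (ρ (a + t.sum) y) ≤ dist y (ρ a y) + dist y (ρ t.sum y) :=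
      aux_disp_add hiso hadd hzero _ _ _
    have h2 := ih (fun b hb => h b (List.mem_cons_of_mem _ hb))
    have h3 := h a List.mem_cons_self
    simp only [List.sum_cons, List.length_cons]
    push_cast
    calc dist y (ρ (a + t.sum) y) ≤ c + t.length * c := by linarith
      _ = (t.length + 1) * c := by ring

theorem aux_disp_nsmul (hiso : ∀ γ x y, dist (ρ γ x) (ρ γ y) = dist x y)
    (hadd : ∀ γ γ' x, ρ (γ + γ') x = ρ γ (ρ γ' x))
    (hzero : ∀ x, ρ 0 x = x)
    (a : Fin n → ℤ) (y : X) :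
    ∀ k : ℕ, dist y (ρ ((k : ℤ) • a) y) ≤ k * dist y (ρ a y) := by
  intro k
  induction k with
  | zero => simp [hzero]
  | succ k ih =>
    have : ((k : ℤ) + 1) • a = (k : ℤ) • a + a := by rw [add_smul]; simp
    push_cast
    rw [this]
    calc dist y (ρ ((k:ℤ) • a + a) y) ≤ dist y (ρ ((k:ℤ) • a) y) + dist y (ρ a y) :=
          aux_disp_add hiso hadd hzero _ _ _
      _ ≤ k * dist y (ρ a y) + dist y (ρ a y) := by linarith
      _ = (k + 1) * dist y (ρ a y) := by ring

theorem aux_disp_zsmul (hiso : ∀ γ x y, dist (ρ γ x) (ρ γ y) = dist x y)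
    (hadd : ∀ γ γ' x, ρ (γ + γ' ) x = ρ γ (ρ γ' x))
    (hzero : ∀ x, ρ 0 x = x)
    (a : Fin n → ℤ) (y : X) (z : ℤ) :
    dist y (ρ (z • a) y) ≤ |z| * dist y (ρ a y) := by
  have h1 : z • a = (z.natAbs : ℤ) • a ∨ z • a = -((z.natAbs : ℤ) • a) := by
    rcases Int.natAbs_eq z with h | h
    · left; rw [← h]
    · right; rw [← neg_smul, ← h]
  have h2 := aux_disp_nsmul hiso hadd hzero a y z.natAbs
  have habs : ((|z| : ℤ) : ℝ) = (z.natAbs : ℝ) := by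
    rw [Nat.cast_natAbs]
  rcases h1 with h | h
  · rw [h, habs]; exact h2
  · rw [h, aux_disp_neg hiso hadd hzero, habs]; exact h2

theorem aux_disp_sum (hiso : ∀ γ x y, dist (ρ γ x) (ρ γ y) = dist x y)
    (hadd : ∀ γ γ' x, ρ (γ + γ') x = ρ γ (ρ γ' x))
    (hzero : ∀ x, ρ 0 x = x)
    (y : X) (f : Fin n → (Fin n → ℤ)) (s : Finset (Fin n)) :
    dist y (ρ (∑ i ∈ s, f i) y) ≤ ∑ i ∈ s, dist y (ρ (f i) y) := by
  classical
  induction s using Finset.cons_induction with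
  | empty => simp [hzero]
  | cons a s' ha ih =>
    rw [Finset.sum_cons, Finset.sum_cons]
    calc dist y (ρ (f a + ∑ i ∈ s', f i) y) ≤ dist y (ρ (f a) y) + dist y (ρ (∑ i ∈ s', f i) y) :=
          aux_disp_add hiso hadd hzero _ _ _
      _ ≤ _ := by linarith

end Aux
section Aux2
variable {X : Type*} [MetricSpace X] {n : ℕ} {ρ : (Fin n → ℤ) → X → X}

theorem aux_generation (hiso : ∀ γ x y, dist (ρ γ x) (ρ γ y) = dist x y)
    (hadd : ∀ γ γ' x, ρ (γ + γ') x = ρ γ (ρ γ' x))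
    (hzero : ∀ x, ρ 0 x = x)
    (hpd : ∀ (x : X) (r : ℝ), {γ : Fin n → ℤ | dist x (ρ γ x) ≤ r}.Finite)
    (hlength : ∀ x y : X, ∀ ε > (0:ℝ), ∃ z : X,
      dist x z ≤ dist x y / 2 + ε ∧ dist z y ≤ dist x y / 2 + ε)
    {D : ℝ} (hD : 0 ≤ D)
    (hcodiam : ∀ x y : X, ∃ γ : Fin n → ℤ, dist x (ρ γ y) ≤ D)
    (y : X) (γ : Fin n → ℤ) :
    γ ∈ AddSubgroup.closure {σ : Fin n → ℤ | dist y (ρ σ y) ≤ 3 * D} := by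
  set S : Set (Fin n → ℤ) := {σ : Fin n → ℤ | dist y (ρ σ y) ≤ 3 * D} with hS
  have key : ∀ k : ℕ, ∀ γ : Fin n → ℤ,
      {δ : Fin n → ℤ | dist y (ρ δ y) < dist y (ρ γ y)}.ncard ≤ k →
      γ ∈ AddSubgroup.closure S := by
    intro k
    induction k with
    | zero =>
      intro γ hcard
      by_cases hγ : dist y (ρ γ y) ≤ 3 * D
      · exact AddSubgroup.subset_closure hγ
      · exfalso
        push_neg at hγ
        set d := dist y (ρ γ y) with hd
        have hd2 : 0 < d / 2 - D := by linarith
        obtain ⟨z, hz1, hz2⟩ := hlength y (ρ γ y) ((d / 2 - D) / 2) (by linarith)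
        obtain ⟨β, hβ⟩ := hcodiam z y
        have hβd : dist y (ρ β y) < d := by
          calc dist y (ρ β y) ≤ dist y z + dist z (ρ β y) := dist_triangle _ _ _
            _ < d := by rw [hd] at hz1 ⊢; linarith
        have hne : ({δ : Fin n → ℤ | dist y (ρ δ y) < d}).Nonempty := ⟨β, hβd⟩
        have hfin : ({δ : Fin n → ℤ | dist y (ρ δ y) < d}).Finite :=
          (hpd y d).subset (Set.setOf_subset_setOf.2 fun δ hδ => le_of_lt hδ)
        have := Set.ncard_pos hfin |>.mpr hne
        omega
    | succ k ih =>
      intro γ hcard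
      by_cases hγ : dist y (ρ γ y) ≤ 3 * D
      · exact AddSubgroup.subset_closure hγ
      push_neg at hγ
      set d := dist y (ρ γ y) with hd
      have hd2 : 0 < d / 2 - D := by linarith
      obtain ⟨z, hz1, hz2⟩ := hlength y (ρ γ y) ((d / 2 - D) / 2) (by linarith)
      obtain ⟨β, hβ⟩ := hcodiam z y
      have hβd : dist y (ρ β y) < d := by
        calc dist y (ρ β y) ≤ dist y z + dist z (ρ β y) := dist_triangle _ _ _
          _ < d := by rw [hd] at hz1 ⊢; linarith
      have hγβ : dist y (ρ (γ - β) y) < d := by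
        have : dist y (ρ (γ - β) y) = dist (ρ β y) (ρ γ y) :=
          (aux_dist_rho hiso hadd hzero β γ y).symm
        rw [this]
        calc dist (ρ β y) (ρ γ y) ≤ dist (ρ β y) z + dist z (ρ γ y) := dist_triangle _ _ _
          _ < d := by rw [dist_comm (ρ β y) z] at *; rw [hd] at hz2 ⊢; linarith
      have hfin : ({δ : Fin n → ℤ | dist y (ρ δ y) < d}).Finite :=
        (hpd y d).subset (Set.setOf_subset_setOf.2 fun δ hδ => le_of_lt hδ)
      have hlt : ∀ α : Fin n → ℤ, dist y (ρ α y) < d →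
          {δ : Fin n → ℤ | dist y (ρ δ y) < dist y (ρ α y)}.ncard ≤ k := by
        intro α hα
        have hss : {δ : Fin n → ℤ | dist y (ρ δ y) < dist y (ρ α y)} ⊂
            {δ : Fin n → ℤ | dist y (ρ δ y) < d} := by
          constructor
          · intro δ hδ; exact lt_trans hδ hα
          · intro hsub
            have := hsub hα
            simp only [Set.mem_setOf_eq] at this
            exact lt_irrefl _ this
        have := Set.ncard_lt_ncard hss hfin
        omega
      have h1 : β ∈ AddSubgroup.closure S := ih β (hlt β hβd)
      have h2 : γ - β ∈ AddSubgroup.closure S := ih (γ - β) (hlt _ hγβ)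
      have : β + (γ - β) = γ := by ring
      rw [← this]
      exact AddSubgroup.add_mem _ h1 h2
  exact key _ γ le_rfl

end Aux2
section Aux3

theorem aux_sum_map_neg {G : Type*} [AddCommGroup G] :
    ∀ l : List G, (l.map (fun a => -a)).sum = -l.sum := by
  intro l
  induction l with
  | nil => simp
  | cons a t ih => simp [ih]; abel

theorem aux_exists_list {G : Type*} [AddCommGroup G] {S : Set G}
    (hneg : ∀ a ∈ S, -a ∈ S) {γ : G} (h : γ ∈ AddSubgroup.closure S) :
    ∃ l : List G, (∀ a ∈ l, a ∈ S) ∧ l.sum = γ := by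
  induction h using AddSubgroup.closure_induction with
  | mem a ha => exact ⟨[a], by simpa using ha, by simp⟩
  | zero => exact ⟨[], by simp, by simp⟩
  | add a b _ _ iha ihb =>
    obtain ⟨la, hla, hsa⟩ := iha
    obtain ⟨lb, hlb, hsb⟩ := ihb
    exact ⟨la ++ lb, by
      intro x hx
      rcases List.mem_append.1 hx with h | h
      exacts [hla x h, hlb x h], by simp [hsa, hsb]⟩
  | neg a _ iha =>
    obtain ⟨la, hla, hsa⟩ := iha
    refine ⟨la.map (fun a => -a), ?_, ?_⟩
    · intro x hx
      obtain ⟨b, hb, rfl⟩ := List.mem_map.1 hx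
      exact hneg b (hla b hb)
    · rw [aux_sum_map_neg, hsa]

theorem aux_shorten {G : Type*} [AddCommGroup G] (Z : AddSubgroup G) [Finite (G ⧸ Z)]
    (S : Set G) :
    ∀ l : List G, (∀ a ∈ l, a ∈ S) →
      ∃ l' : List G, (∀ a ∈ l', a ∈ S) ∧ l'.length ≤ Nat.card (G ⧸ Z) ∧
        (QuotientAddGroup.mk' Z) l'.sum = (QuotientAddGroup.mk' Z) l.sum := by
  classical
  letI : Fintype (G ⧸ Z) := Fintype.ofFinite _
  set N := Nat.card (G ⧸ Z) with hN
  have key : ∀ k : ℕ, ∀ l : List G, l.length ≤ k → (∀ a ∈ l, a ∈ S) →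
      ∃ l' : List G, (∀ a ∈ l', a ∈ S) ∧ l'.length ≤ N ∧
        (QuotientAddGroup.mk' Z) l'.sum = (QuotientAddGroup.mk' Z) l.sum := by
    intro k
    induction k using Nat.strong_induction_on with
    | _ k ih =>
      intro l hlen hmem
      by_cases hl : l.length ≤ N
      · exact ⟨l, hmem, hl, rfl⟩
      push_neg at hl
      -- pigeonhole on prefixes
      have hcard : Fintype.card (G ⧸ Z) < Fintype.card (Fin (l.length + 1)) := by
        rw [Fintype.card_fin, ← Nat.card_eq_fintype_card]
        omega
      obtain ⟨i, j, hij, hfeq⟩ := Fintype.exists_ne_map_eq_of_card_lt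
        (fun i : Fin (l.length + 1) => (QuotientAddGroup.mk' Z) (l.take i).sum) hcard
      have main : ∀ i j : Fin (l.length + 1), (i : ℕ) < (j : ℕ) →
          (QuotientAddGroup.mk' Z) (l.take (i:ℕ)).sum
            = (QuotientAddGroup.mk' Z) (l.take (j:ℕ)).sum →
          ∃ l' : List G, (∀ a ∈ l', a ∈ S) ∧ l'.length ≤ N ∧
            (QuotientAddGroup.mk' Z) l'.sum = (QuotientAddGroup.mk' Z) l.sum := by
        clear hij hfeq i j
        intro i j hlt hfeq
        set l' := l.take (i:ℕ) ++ l.drop (j:ℕ) with hl'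
        have hmem' : ∀ a ∈ l', a ∈ S := by
          intro a ha
          rcases List.mem_append.1 ha with h | h
          · exact hmem a (List.mem_of_mem_take h)
          · exact hmem a (List.mem_of_mem_drop h)
        have hj : (j : ℕ) ≤ l.length := Nat.lt_succ_iff.1 j.2
        have hlen' : l'.length < l.length := by
          rw [hl', List.length_append, List.length_take, List.length_drop]
          omega
        have hsum : (QuotientAddGroup.mk' Z) l'.sum = (QuotientAddGroup.mk' Z) l.sum := by
          have h1 : l = l.take (j : ℕ) ++ l.drop (j : ℕ) := (List.take_append_drop _ _).symm
          have hmk : ∀ a b : G, (QuotientAddGroup.mk' Z) (a + b) =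
              (QuotientAddGroup.mk' Z) a + (QuotientAddGroup.mk' Z) b := fun a b => map_add _ _ _
          calc (QuotientAddGroup.mk' Z) l'.sum
              = (QuotientAddGroup.mk' Z) (l.take (i:ℕ)).sum
                + (QuotientAddGroup.mk' Z) (l.drop (j:ℕ)).sum := by
                rw [hl', List.sum_append, hmk]
            _ = (QuotientAddGroup.mk' Z) (l.take (j:ℕ)).sum
                + (QuotientAddGroup.mk' Z) (l.drop (j:ℕ)).sum := by rw [hfeq]
            _ = (QuotientAddGroup.mk' Z) l.sum := by
                rw [← hmk, ← List.sum_append, ← h1]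
        obtain ⟨l'', h1, h2, h3⟩ := ih l'.length (by omega) l' le_rfl hmem'
        exact ⟨l'', h1, h2, by rw [h3, hsum]⟩
      rcases (Fin.val_ne_of_ne hij).lt_or_gt with hlt | hlt
      · exact main i j hlt hfeq
      · exact main j i hlt hfeq.symm
  intro l hmem
  exact key l.length l le_rfl hmem

end Aux3
section Aux4

theorem aux_sum_smul_mem {n : ℕ} (v : Fin n → (Fin n → ℤ)) (w : Fin n → ℤ) :
    (∑ i, w i • v i) ∈ AddSubgroup.closure (Set.range v) :=
  AddSubgroup.sum_mem _ fun i _ =>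
    AddSubgroup.zsmul_mem _ (AddSubgroup.subset_closure (Set.mem_range_self i)) (w i)

theorem aux_finite_quotient {n : ℕ} (v : Fin n → (Fin n → ℤ))
    (hv : LinearIndependent ℤ v) :
    Finite ((Fin n → ℤ) ⧸ AddSubgroup.closure (Set.range v)) := by
  classical
  set Z := AddSubgroup.closure (Set.range v) with hZ
  set M : Matrix (Fin n) (Fin n) ℤ := Matrix.of v with hM
  have hvec : ∀ w : Fin n → ℤ, Matrix.vecMul w M = ∑ i, w i • v i := by
    intro w
    funext j
    simp [Matrix.vecMul, dotProduct, hM, Finset.sum_apply]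
  have hvecmem : ∀ w : Fin n → ℤ, Matrix.vecMul w M ∈ Z := by
    intro w; rw [hvec]; exact aux_sum_smul_mem v w
  have hc : M.det ≠ 0 := by
    rw [Ne, ← Matrix.exists_vecMul_eq_zero_iff]
    rintro ⟨w, hw, hww⟩
    apply hw
    rw [hvec] at hww
    funext i
    exact Fintype.linearIndependent_iff.mp hv w hww i
  set c := M.det with hcdef
  have hcmem : ∀ γ : Fin n → ℤ, c • γ ∈ Z := by
    intro γ
    have h1 : Matrix.vecMul (Matrix.vecMul γ M.adjugate) M = c • γ := by
      rw [Matrix.vecMul_vecMul, Matrix.adjugate_mul]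
      funext j
      simp [Matrix.vecMul, dotProduct, Matrix.one_apply, mul_ite,
        Finset.sum_ite_eq, mul_comm]
      exact Or.inl rfl
    rw [← h1]
    exact hvecmem _
  set m := c.natAbs with hm
  haveI : NeZero m := ⟨fun h => hc (Int.natAbs_eq_zero.mp h)⟩
  set f : (Fin n → ZMod m) → ((Fin n → ℤ) ⧸ Z) :=
    fun x => QuotientAddGroup.mk' Z (fun i => ((x i).val : ℤ)) with hf
  have hsurj : Function.Surjective f := by
    intro q
    obtain ⟨γ, rfl⟩ := QuotientAddGroup.mk'_surjective Z q
    refine ⟨fun i => ((γ i : ZMod m)), ?_⟩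
    rw [hf]
    set γ' : Fin n → ℤ := fun i => (((γ i : ZMod m)).val : ℤ) with hγ'
    have key : ∀ i, ((γ' i : ℤ) : ZMod m) = ((γ i) : ZMod m) := by
      intro i
      have h := ZMod.natCast_rightInverse (n := m) ((γ i : ZMod m))
      simp only [hγ']
      simpa using h
    have hdvd : ∀ i, c ∣ (γ - γ') i := by
      intro i
      rw [← Int.natAbs_dvd, ← ZMod.intCast_zmod_eq_zero_iff_dvd]
      have h2 : ((γ - γ') i : ℤ) = γ i - γ' i := rfl
      rw [h2, Int.cast_sub, key i, sub_self]
    set w : Fin n → ℤ := fun i => (γ - γ') i / c with hw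
    have hcw : γ - γ' = c • w := by
      funext i
      rw [hw]
      simp only [Pi.smul_apply, smul_eq_mul]
      exact (Int.mul_ediv_cancel' (hdvd i)).symm
    have hmem : γ - γ' ∈ Z := by rw [hcw]; exact hcmem w
    rw [QuotientAddGroup.mk'_eq_mk']
    exact ⟨γ - γ', hmem, by abel⟩
  exact Finite.of_surjective f hsurj

end Aux4
section Aux5
open Filter

variable {X : Type*} [MetricSpace X] {n : ℕ} {ρ : (Fin n → ℤ) → X → X}

theorem aux_count_multiset {m : ℕ} (μ : Sym (Fin (n+1)) m) :
    (∑ i : Fin n, Multiset.count (Fin.castSucc i) (μ : Multiset (Fin (n+1))))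
      + Multiset.count (Fin.last n) (μ : Multiset (Fin (n+1))) = m := by
  classical
  have h3 : ∑ j : Fin (n+1), Multiset.count j (μ : Multiset (Fin (n+1)))
      = Multiset.card (μ : Multiset (Fin (n+1))) := by
    rw [← Multiset.toFinset_sum_count_eq]
    exact (Finset.sum_subset (Finset.subset_univ _)
      (fun x _ hx => Multiset.count_eq_zero.2 (by simpa using hx))).symm
  have h4 : Multiset.card (μ : Multiset (Fin (n+1))) = m := μ.2
  rw [← Fin.sum_univ_castSucc (f := fun j => Multiset.count j (μ : Multiset (Fin (n+1))))]
  rw [h3, h4]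

theorem aux_card_bound
    (hiso : ∀ γ x y, dist (ρ γ x) (ρ γ y) = dist x y)
    (hadd : ∀ γ γ' x, ρ (γ + γ') x = ρ γ (ρ γ' x))
    (hzero : ∀ x, ρ 0 x = x)
    (hpd : ∀ (x : X) (r : ℝ), {γ : Fin n → ℤ | dist x (ρ γ x) ≤ r}.Finite)
    (x₀ : X) {D ω : ℝ} (hD : 0 < D)
    (hω : Tendsto (fun R : ℝ =>
        (({γ : Fin n → ℤ | dist x₀ (ρ γ x₀) < R}.ncard : ℝ)) / R ^ n)
      atTop (nhds ω))
    (v : Fin n → (Fin n → ℤ))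
    (hv : LinearIndependent ℤ v)
    (hvdisp : ∀ i, dist x₀ (ρ (v i) x₀) ≤ 3 * D)
    (Z : AddSubgroup (Fin n → ℤ)) (hvZ : ∀ i, v i ∈ Z)
    [Finite ((Fin n → ℤ) ⧸ Z)]
    {C : ℝ} (hC : 0 ≤ C)
    (g : ((Fin n → ℤ) ⧸ Z) → (Fin n → ℤ))
    (hg1 : ∀ q, QuotientAddGroup.mk' Z (g q) = q)
    (hg2 : ∀ q, dist x₀ (ρ (g q) x₀) ≤ C) :
    (Nat.card ((Fin n → ℤ) ⧸ Z) : ℝ) ≤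
      ((n.factorial : ℝ) / 2 ^ n) * ω * (3 * D) ^ n := by
  classical
  set N := Nat.card ((Fin n → ℤ) ⧸ Z) with hNdef
  set R : ℕ → ℝ := fun m => 3 * D * ((m : ℝ) + n) + C + 1 with hRdef
  have hRpos : ∀ m : ℕ, 0 < R m := by
    intro m
    show (0:ℝ) < 3 * D * ((m : ℝ) + n) + C + 1
    have : (0:ℝ) ≤ (m:ℝ) + n := by positivity
    nlinarith
  have hsummem : ∀ w : Fin n → ℤ, (∑ i, w i • v i) ∈ Z :=
    fun w => AddSubgroup.sum_mem _ fun i _ => AddSubgroup.zsmul_mem _ (hvZ i) (w i)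
  -- counting inequality
  have count : ∀ m : ℕ, N * 2 ^ n * Nat.choose (n + m) m ≤
      {γ : Fin n → ℤ | dist x₀ (ρ γ x₀) < R m}.ncard := by
    intro m
    set B := {γ : Fin n → ℤ | dist x₀ (ρ γ x₀) < R m} with hBdef
    have hBfin : B.Finite :=
      (hpd x₀ (R m)).subset (Set.setOf_subset_setOf.2 fun δ hδ => le_of_lt hδ)
    haveI : Finite B := hBfin.to_subtype
    set wf : (Fin n → Bool) → Sym (Fin (n+1)) m → Fin n → ℤ :=
      fun ε μ i => (if ε i then (1:ℤ) else -1) *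
        ((Multiset.count (Fin.castSucc i) (μ : Multiset (Fin (n+1))) + 1 : ℕ) : ℤ) with hwf
    have habs : ∀ ε μ i, |wf ε μ i| =
        ((Multiset.count (Fin.castSucc i) (μ : Multiset (Fin (n+1))) + 1 : ℕ) : ℤ) := by
      intro ε μ i
      rw [hwf]
      simp only
      rw [abs_mul]
      have h1 : |(if ε i then (1:ℤ) else -1)| = 1 := by
        rcases Bool.eq_false_or_eq_true (ε i) with h | h <;> rw [h] <;> norm_num
      rw [h1, one_mul, abs_of_nonneg (by positivity)]
    have hcntsum : ∀ μ : Sym (Fin (n+1)) m,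
        (∑ i : Fin n, (Multiset.count (Fin.castSucc i) (μ : Multiset (Fin (n+1))) + 1)) ≤
          m + n := by
      intro μ
      have h1 := aux_count_multiset μ
      rw [Finset.sum_add_distrib]
      simp only [Finset.sum_const, Finset.card_univ, Fintype.card_fin, smul_eq_mul, mul_one]
      omega
    set Φ : (((Fin n → ℤ) ⧸ Z) × ((Fin n → Bool) × Sym (Fin (n+1)) m)) → (Fin n → ℤ) :=
      fun t => g t.1 + ∑ i, wf t.2.1 t.2.2 i • v i with hΦ
    have hΦB : ∀ t, Φ t ∈ B := by
      rintro ⟨q, ε, μ⟩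
      have h1 : dist x₀ (ρ (Φ (q, ε, μ)) x₀) ≤
          dist x₀ (ρ (g q) x₀) + dist x₀ (ρ (∑ i, wf ε μ i • v i) x₀) :=
        aux_disp_add hiso hadd hzero _ _ _
      have h2 : dist x₀ (ρ (∑ i, wf ε μ i • v i) x₀) ≤
          ∑ i, dist x₀ (ρ (wf ε μ i • v i) x₀) := aux_disp_sum hiso hadd hzero _ _ _
      have h3 : ∀ i, dist x₀ (ρ (wf ε μ i • v i) x₀) ≤
          ((Multiset.count (Fin.castSucc i) (μ : Multiset (Fin (n+1))) + 1 : ℕ) : ℝ) *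
            (3 * D) := by
        intro i
        have hz := aux_disp_zsmul hiso hadd hzero (v i) x₀ (wf ε μ i)
        have h5 : ((|wf ε μ i| : ℤ) : ℝ) =
            ((Multiset.count (Fin.castSucc i) (μ : Multiset (Fin (n+1))) + 1 : ℕ) : ℝ) := by
          exact_mod_cast congrArg (Int.cast : ℤ → ℝ) (habs ε μ i)
        rw [h5] at hz
        calc dist x₀ (ρ (wf ε μ i • v i) x₀)
            ≤ ((Multiset.count (Fin.castSucc i) (μ : Multiset (Fin (n+1))) + 1 : ℕ) : ℝ) *
              dist x₀ (ρ (v i) x₀) := hz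
          _ ≤ _ := mul_le_mul_of_nonneg_left (hvdisp i) (by positivity)
      have h4 : ∑ i, dist x₀ (ρ (wf ε μ i • v i) x₀) ≤ ((m : ℝ) + n) * (3 * D) := by
        calc ∑ i, dist x₀ (ρ (wf ε μ i • v i) x₀)
            ≤ ∑ i : Fin n,
              ((Multiset.count (Fin.castSucc i) (μ : Multiset (Fin (n+1))) + 1 : ℕ) : ℝ) *
              (3 * D) := Finset.sum_le_sum (fun i _ => h3 i)
          _ = ((∑ i : Fin n,
                (Multiset.count (Fin.castSucc i) (μ : Multiset (Fin (n+1))) + 1) : ℕ) : ℝ) *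
              (3 * D) := by rw [← Finset.sum_mul]; push_cast; ring
          _ ≤ ((m : ℝ) + n) * (3 * D) := by
              have hcast : ((∑ i : Fin n,
                  (Multiset.count (Fin.castSucc i) (μ : Multiset (Fin (n+1))) + 1) : ℕ) : ℝ)
                  ≤ (m : ℝ) + n := by exact_mod_cast hcntsum μ
              exact mul_le_mul_of_nonneg_right hcast (by positivity)
      show dist x₀ (ρ (Φ (q, ε, μ)) x₀) < R m
      have h6 := hg2 q
      show dist x₀ (ρ (Φ (q, ε, μ)) x₀) < 3 * D * ((m : ℝ) + n) + C + 1
      nlinarith [h1, h2, h4, h6]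
    set Φ' : (((Fin n → ℤ) ⧸ Z) × ((Fin n → Bool) × Sym (Fin (n+1)) m)) → B :=
      fun t => ⟨Φ t, hΦB t⟩ with hΦ'
    have hinj : Function.Injective Φ' := by
      rintro ⟨q1, ε1, μ1⟩ ⟨q2, ε2, μ2⟩ heq
      have heq2 : Φ (q1, ε1, μ1) = Φ (q2, ε2, μ2) := congrArg Subtype.val heq
      rw [hΦ] at heq2
      simp only at heq2
      have hz1 : (∑ i, wf ε1 μ1 i • v i) ∈ Z := hsummem _
      have hz2 : (∑ i, wf ε2 μ2 i • v i) ∈ Z := hsummem _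
      have hq : q1 = q2 := by
        have h1 := congrArg (QuotientAddGroup.mk' Z) heq2
        have e1 : QuotientAddGroup.mk' Z (∑ i, wf ε1 μ1 i • v i) = 0 :=
          (QuotientAddGroup.eq_zero_iff _).2 hz1
        have e2 : QuotientAddGroup.mk' Z (∑ i, wf ε2 μ2 i • v i) = 0 :=
          (QuotientAddGroup.eq_zero_iff _).2 hz2
        rw [map_add, map_add, hg1, hg1, e1, e2, add_zero, add_zero] at h1
        exact h1
      subst hq
      have hsum : (∑ i, wf ε1 μ1 i • v i) = ∑ i, wf ε2 μ2 i • v i := add_left_cancel heq2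
      have hw : ∀ i, wf ε1 μ1 i = wf ε2 μ2 i := by
        have h0 : ∑ i, (wf ε1 μ1 i - wf ε2 μ2 i) • v i = 0 := by
          simp only [sub_smul]
          rw [Finset.sum_sub_distrib, hsum, sub_self]
        intro i
        have := Fintype.linearIndependent_iff.mp hv _ h0 i
        linarith [this]
      have hcnt : ∀ i, Multiset.count (Fin.castSucc i) (μ1 : Multiset (Fin (n+1)))
          = Multiset.count (Fin.castSucc i) (μ2 : Multiset (Fin (n+1))) ∧ ε1 i = ε2 i := by
        intro i
        have hwi := hw i
        rw [hwf] at hwi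
        simp only at hwi
        rcases Bool.eq_false_or_eq_true (ε1 i) with h1 | h1 <;>
          rcases Bool.eq_false_or_eq_true (ε2 i) with h2 | h2
        · rw [h1, h2] at hwi; norm_num at hwi; exact ⟨by omega, by rw [h1, h2]⟩
        · rw [h1, h2] at hwi; norm_num at hwi; exfalso; omega
        · rw [h1, h2] at hwi; norm_num at hwi; exfalso; omega
        · rw [h1, h2] at hwi; norm_num at hwi; exact ⟨by omega, by rw [h1, h2]⟩
      have hε : ε1 = ε2 := funext fun i => (hcnt i).2
      have hgoal : ∀ a, Multiset.count a (μ1 : Multiset (Fin (n+1)))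
          = Multiset.count a (μ2 : Multiset (Fin (n+1))) := by
        intro a
        induction a using Fin.lastCases with
        | last =>
          have k1 := aux_count_multiset μ1
          have k2 := aux_count_multiset μ2
          have : (∑ i : Fin n, Multiset.count (Fin.castSucc i) (μ1 : Multiset (Fin (n+1))))
              = ∑ i : Fin n, Multiset.count (Fin.castSucc i) (μ2 : Multiset (Fin (n+1))) :=
            Finset.sum_congr rfl (fun i _ => (hcnt i).1)
          omega
        | cast i => exact (hcnt i).1
      have hμ : μ1 = μ2 := Subtype.ext (Multiset.ext.2 hgoal)
      rw [hε, hμ]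
    have hcard1 : Nat.card ((((Fin n → ℤ) ⧸ Z)) × ((Fin n → Bool) × Sym (Fin (n+1)) m))
        ≤ Nat.card B := Nat.card_le_card_of_injective Φ' hinj
    have hcard2 : Nat.card ((((Fin n → ℤ) ⧸ Z)) × ((Fin n → Bool) × Sym (Fin (n+1)) m))
        = N * 2 ^ n * Nat.choose (n + m) m := by
      rw [Nat.card_prod, Nat.card_prod]
      have hb : Nat.card (Fin n → Bool) = 2 ^ n := by
        rw [Nat.card_eq_fintype_card]
        simp [Fintype.card_fun]
      have hs : Nat.card (Sym (Fin (n+1)) m) = Nat.choose (n + m) m := by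
        rw [Nat.card_eq_fintype_card, Sym.card_sym_eq_choose]
        congr 1
        rw [Fintype.card_fin]
        omega
      rw [hb, hs, hNdef]
      ring
    have hcard3 : Nat.card B = B.ncard := Nat.card_coe_set_eq B
    omega
  -- factorial / choose bound
  have hchoose : ∀ m : ℕ, (m+1)^n ≤ n.factorial * Nat.choose (n + m) m := by
    intro m
    have h1 : Nat.choose (n+m) m = Nat.choose (n+m) n := by
      have h := Nat.choose_symm (Nat.le_add_right n m)
      rwa [Nat.add_sub_cancel_left] at h
    have h2 : n.factorial * Nat.choose (n+m) n = (n+m).descFactorial n :=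
      (Nat.descFactorial_eq_factorial_mul_choose _ _).symm
    have h3 : (m+1)^n ≤ (n+m).descFactorial n := by
      have h := Nat.pow_sub_le_descFactorial (n+m) n
      have e : n + m + 1 - n = m + 1 := by omega
      rwa [e] at h
    rw [h1, h2]
    exact h3
  have hfp : (0:ℝ) < (n.factorial : ℝ) := by exact_mod_cast Nat.factorial_pos n
  have h3D : (0:ℝ) < 3 * D := by linarith
  have hreal : ∀ m : ℕ, (N:ℝ) * 2^n / (n.factorial : ℝ) * (((m:ℝ)+1)/R m)^n ≤
      ({γ : Fin n → ℤ | dist x₀ (ρ γ x₀) < R m}.ncard : ℝ) / (R m)^n := by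
    intro m
    have hRp := hRpos m
    have hineq : (N:ℝ) * 2^n * ((m:ℝ)+1)^n ≤
        (n.factorial : ℝ) * ({γ : Fin n → ℤ | dist x₀ (ρ γ x₀) < R m}.ncard : ℝ) := by
      have h1 : N * 2^n * (m+1)^n ≤
          n.factorial * {γ : Fin n → ℤ | dist x₀ (ρ γ x₀) < R m}.ncard := by
        calc N * 2^n * (m+1)^n ≤ N * 2^n * (n.factorial * Nat.choose (n+m) m) :=
              Nat.mul_le_mul_left _ (hchoose m)
          _ = n.factorial * (N * 2^n * Nat.choose (n+m) m) := by ring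
          _ ≤ n.factorial * {γ : Fin n → ℤ | dist x₀ (ρ γ x₀) < R m}.ncard :=
              Nat.mul_le_mul_left _ (count m)
      exact_mod_cast h1
    calc (N:ℝ) * 2^n / (n.factorial : ℝ) * (((m:ℝ)+1)/R m)^n
        = ((N:ℝ) * 2^n * ((m:ℝ)+1)^n) / ((n.factorial : ℝ) * (R m)^n) := by
          rw [div_pow]; ring
      _ ≤ ((n.factorial : ℝ) * ({γ : Fin n → ℤ | dist x₀ (ρ γ x₀) < R m}.ncard : ℝ)) /
            ((n.factorial : ℝ) * (R m)^n) := by gcongr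
      _ = ({γ : Fin n → ℤ | dist x₀ (ρ γ x₀) < R m}.ncard : ℝ) / (R m)^n := by
          rw [mul_div_mul_left _ _ (ne_of_gt hfp)]
  have hRtends : Tendsto (fun m : ℕ => R m) atTop atTop := by
    have h1 : Tendsto (fun m : ℕ => ((m:ℝ) + n)) atTop atTop :=
      tendsto_atTop_add_const_right _ _ tendsto_natCast_atTop_atTop
    have h2 : Tendsto (fun m : ℕ => 3 * D * ((m:ℝ) + n)) atTop atTop :=
      h1.const_mul_atTop h3D
    have h3 : Tendsto (fun m : ℕ => 3 * D * ((m:ℝ) + n) + C) atTop atTop :=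
      tendsto_atTop_add_const_right _ _ h2
    exact tendsto_atTop_add_const_right _ _ h3
  have hb : Tendsto (fun m : ℕ =>
      (({γ : Fin n → ℤ | dist x₀ (ρ γ x₀) < R m}.ncard : ℝ)) / (R m)^n)
      atTop (nhds ω) := hω.comp hRtends
  have hfrac : Tendsto (fun m : ℕ => ((m:ℝ)+1)/(R m)) atTop (nhds (1/(3*D))) := by
    have hz := tendsto_one_div_atTop_nhds_zero_nat (𝕜 := ℝ)
    have h1 : Tendsto (fun m : ℕ => 1 + 1/(m:ℝ)) atTop (nhds 1) := by
      have h := (tendsto_const_nhds : Tendsto (fun _ : ℕ => (1:ℝ)) atTop (nhds 1)).add hz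
      simpa using h
    have h3 : Tendsto (fun m : ℕ => (3*D*(n:ℝ) + C + 1) * (1/(m:ℝ))) atTop (nhds 0) := by
      have := hz.const_mul (3*D*(n:ℝ) + C + 1)
      simpa using this
    have h2 : Tendsto (fun m : ℕ => 3*D + (3*D*(n:ℝ) + C + 1) * (1/(m:ℝ)))
        atTop (nhds (3*D)) := by
      have h := (tendsto_const_nhds :
        Tendsto (fun _ : ℕ => 3*D) atTop (nhds (3*D))).add h3
      simpa using h
    have hdiv := h1.div h2 (ne_of_gt h3D)
    have hd2 : Tendsto (fun m : ℕ =>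
        (1 + 1/(m:ℝ)) / (3*D + (3*D*(n:ℝ) + C + 1) * (1/(m:ℝ))))
        atTop (nhds (1/(3*D))) := hdiv
    refine Tendsto.congr' ?_ hd2
    filter_upwards [eventually_gt_atTop 0] with m hm
    have hm' : (m:ℝ) ≠ 0 := Nat.cast_ne_zero.2 hm.ne'
    have hmpos : (0:ℝ) < (m:ℝ) := by positivity
    have he : (0:ℝ) < 3*D*(n:ℝ) + C + 1 := by
      have := mul_nonneg (le_of_lt h3D) (Nat.cast_nonneg (α := ℝ) n)
      linarith
    have hden : (0:ℝ) < 3*D + (3*D*(n:ℝ) + C + 1) * (1/(m:ℝ)) := by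
      have h1m : (0:ℝ) < 1/(m:ℝ) := by positivity
      nlinarith [mul_pos he h1m]
    show (1 + 1/(m:ℝ)) / (3*D + (3*D*(n:ℝ) + C + 1) * (1/(m:ℝ)))
        = ((m:ℝ)+1)/(3 * D * ((m : ℝ) + n) + C + 1)
    rw [div_eq_div_iff (ne_of_gt hden) (ne_of_gt (hRpos m))]
    have e1 : 1 + 1/(m:ℝ) = ((m:ℝ) + 1)/(m:ℝ) := by
      rw [add_div, div_self hm']
    have e2 : 3*D + (3*D*(n:ℝ) + C + 1) * (1/(m:ℝ))
        = (3 * D * ((m:ℝ) + (n:ℝ)) + C + 1)/(m:ℝ) := by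
      rw [eq_div_iff hm']
      field_simp
      ring
    rw [e1, e2, div_mul_eq_mul_div, mul_div_assoc]
  have ha : Tendsto (fun m : ℕ => (N:ℝ) * 2^n / (n.factorial : ℝ) * (((m:ℝ)+1)/R m)^n)
      atTop (nhds ((N:ℝ) * 2^n / (n.factorial : ℝ) * (1/(3*D))^n)) :=
    tendsto_const_nhds.mul (hfrac.pow n)
  have hfinal : (N:ℝ) * 2^n / (n.factorial : ℝ) * (1/(3*D))^n ≤ ω :=
    le_of_tendsto_of_tendsto' ha hb hreal
  have hKpos : (0:ℝ) < (n.factorial : ℝ)/2^n * (3*D)^n := by positivity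
  have hid : (N:ℝ) = ((N:ℝ) * 2^n / (n.factorial : ℝ) * (1/(3*D))^n) *
      ((n.factorial : ℝ)/2^n * (3*D)^n) := by
    have h2n : (2:ℝ)^n ≠ 0 := by positivity
    have h3Dn : ((3:ℝ)*D)^n ≠ 0 := by positivity
    field_simp
    rw [mul_assoc, ← mul_pow, one_div_mul_cancel (ne_of_gt h3D), one_pow, mul_one]
  calc (N:ℝ) = ((N:ℝ) * 2^n / (n.factorial : ℝ) * (1/(3*D))^n) *
      ((n.factorial : ℝ)/2^n * (3*D)^n) := hid
    _ ≤ ω * ((n.factorial : ℝ)/2^n * (3*D)^n) :=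
        mul_le_mul_of_nonneg_right hfinal (le_of_lt hKpos)
    _ = (n.factorial : ℝ)/2^n * ω * (3*D)^n := by ring

end Aux5

/-- with `𝒵 = ⟨Σ_n⟩` generated by `n` linearly independent
elements of `Σ_D`, every `γ ∈ Γ` satisfies
`d_{x₀}(γ,𝒵) ≤ (n!/2ⁿ)·Ω·(3D)^{n+1}`, and hence
`diam(𝒵\X) ≤ D + (n!/2ⁿ)·Ω·(3D)^{n+1}`. -/
theorem distance_to_subgroup_and_codiameter_bound
    {X : Type*} [MetricSpace X] (n : ℕ)
    (ρ : (Fin n → ℤ) → X → X)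
    (hiso : ∀ γ x y, dist (ρ γ x) (ρ γ y) = dist x y)
    (hadd : ∀ γ γ' x, ρ (γ + γ') x = ρ γ (ρ γ' x))
    (hzero : ∀ x, ρ 0 x = x)
    (hfree : ∀ γ x, ρ γ x = x → γ = 0)
    (hpd : ∀ (x : X) (r : ℝ), {γ : Fin n → ℤ | dist x (ρ γ x) ≤ r}.Finite)
    (hlength : ∀ x y : X, ∀ ε > (0:ℝ), ∃ z : X,
      dist x z ≤ dist x y / 2 + ε ∧ dist z y ≤ dist x y / 2 + ε)
    (x₀ : X) (D Ω ω : ℝ)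
    (hcodiam : ∀ x y : X, ∃ γ : Fin n → ℤ, dist x (ρ γ y) ≤ D)
    (hω : Tendsto (fun R : ℝ =>
        (({γ : Fin n → ℤ | dist x₀ (ρ γ x₀) < R}.ncard : ℝ)) / R ^ n)
      atTop (nhds ω))
    (hΩ : ω ≤ Ω)
    (v : Fin n → (Fin n → ℤ))
    (hv : LinearIndependent ℤ v)
    (hvdisp : ∀ i, dist (ρ (v i) x₀) x₀ ≤ 3 * D) :
    (∀ γ : Fin n → ℤ, ∃ z ∈ AddSubgroup.closure (Set.range v),
        dist (ρ γ x₀) (ρ z x₀) ≤ ((n.factorial : ℝ) / 2 ^ n) * Ω * (3 * D) ^ (n + 1)) ∧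
    ∀ x y : X, ∃ z ∈ AddSubgroup.closure (Set.range v),
      dist x (ρ z y) ≤ D + ((n.factorial : ℝ) / 2 ^ n) * Ω * (3 * D) ^ (n + 1) := by
  classical
  have hDnonneg : 0 ≤ D := by
    obtain ⟨γ, hγ⟩ := hcodiam x₀ x₀
    exact le_trans dist_nonneg hγ
  have hωnonneg : 0 ≤ ω := by
    have hev : ∀ᶠ R : ℝ in Filter.atTop,
        0 ≤ (({γ : Fin n → ℤ | dist x₀ (ρ γ x₀) < R}.ncard : ℝ)) / R ^ n := by
      filter_upwards [Filter.eventually_gt_atTop (0:ℝ)] with R hR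
      positivity
    exact ge_of_tendsto hω hev
  have hΩnonneg : 0 ≤ Ω := le_trans hωnonneg hΩ
  rcases Nat.eq_zero_or_pos n with hn0 | hn
  · -- degenerate case n = 0
    subst hn0
    have hbound : 0 ≤ ((Nat.factorial 0 : ℝ) / 2 ^ 0) * Ω * (3 * D) ^ (0 + 1) := by
      have h1 : (0:ℝ) ≤ Ω * (3 * D) := mul_nonneg hΩnonneg (by linarith)
      norm_num [Nat.factorial]
      linarith
    constructor
    · intro γ
      refine ⟨0, AddSubgroup.zero_mem _, ?_⟩
      have hγ0 : γ = 0 := funext fun i => i.elim0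
      rw [hγ0, dist_self]
      exact hbound
    · intro x y
      obtain ⟨γ, hγ⟩ := hcodiam x y
      have hγ0 : γ = 0 := funext fun i => i.elim0
      rw [hγ0] at hγ
      exact ⟨0, AddSubgroup.zero_mem _, by linarith⟩
  · -- main case
    have hD : 0 < D := by
      have hvne : v ⟨0, hn⟩ ≠ 0 := hv.ne_zero ⟨0, hn⟩
      have hne : ρ (v ⟨0, hn⟩) x₀ ≠ x₀ := fun h => hvne (hfree _ _ h)
      have h1 : 0 < dist (ρ (v ⟨0, hn⟩) x₀) x₀ := dist_pos.2 hne
      have h2 := hvdisp ⟨0, hn⟩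
      linarith
    set Z := AddSubgroup.closure (Set.range v) with hZ
    haveI : Finite ((Fin n → ℤ) ⧸ Z) := aux_finite_quotient v hv
    set N := Nat.card ((Fin n → ℤ) ⧸ Z) with hN
    have stepD : ∀ (y : X) (γ : Fin n → ℤ), ∃ z ∈ Z,
        dist (ρ γ y) (ρ z y) ≤ 3 * D * N := by
      intro y γ
      set S : Set (Fin n → ℤ) := {σ | dist y (ρ σ y) ≤ 3 * D} with hS
      have hgen : γ ∈ AddSubgroup.closure S :=
        aux_generation hiso hadd hzero hpd hlength (le_of_lt hD) hcodiam y γ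
      have hneg : ∀ a ∈ S, -a ∈ S := by
        intro a ha
        show dist y (ρ (-a) y) ≤ 3*D
        rw [aux_disp_neg hiso hadd hzero]
        exact ha
      obtain ⟨l, hl, hlsum⟩ := aux_exists_list hneg hgen
      obtain ⟨l', hl', hlen, hquot⟩ := aux_shorten Z S l hl
      refine ⟨γ - l'.sum, ?_, ?_⟩
      · have h1 : QuotientAddGroup.mk' Z (γ - l'.sum) = 0 := by
          rw [map_sub, hquot, hlsum, sub_self]
        exact (QuotientAddGroup.eq_zero_iff _).1 h1
      · have h2 : dist (ρ γ y) (ρ (γ - l'.sum) y) = dist y (ρ (-(l'.sum)) y) := by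
          rw [aux_dist_rho hiso hadd hzero]
          congr 2
          ring
        rw [h2, aux_disp_neg hiso hadd hzero]
        have h3 := aux_disp_list hiso hadd hzero y (3*D) l' (fun a ha => hl' a ha)
        have h4 : (l'.length : ℝ) * (3*D) ≤ N * (3*D) := by
          apply mul_le_mul_of_nonneg_right _ (by linarith)
          exact_mod_cast hlen
        calc dist y (ρ l'.sum y) ≤ l'.length * (3*D) := h3
          _ ≤ N * (3*D) := h4
          _ = 3 * D * N := by ring
    have hreps : ∀ q : (Fin n → ℤ) ⧸ Z, ∃ w : Fin n → ℤ,
        QuotientAddGroup.mk' Z w = q ∧ dist x₀ (ρ w x₀) ≤ 3*D*N := by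
      intro q
      obtain ⟨γ, hγ⟩ := QuotientAddGroup.mk'_surjective Z q
      obtain ⟨z, hzZ, hzd⟩ := stepD x₀ γ
      refine ⟨γ - z, ?_, ?_⟩
      · have hz0 : QuotientAddGroup.mk' Z z = 0 := (QuotientAddGroup.eq_zero_iff _).2 hzZ
        rw [map_sub, hγ, hz0, sub_zero]
      · have h5 := aux_dist_rho hiso hadd hzero z γ x₀
        rw [← h5, dist_comm]
        exact hzd
    choose g hg1 hg2 using hreps
    have hCge : (0:ℝ) ≤ 3*D*N := by positivity
    have hNbound : (N:ℝ) ≤ ((n.factorial : ℝ) / 2 ^ n) * ω * (3 * D) ^ n :=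
      aux_card_bound hiso hadd hzero hpd x₀ hD hω v hv
        (fun i => by rw [dist_comm]; exact hvdisp i)
        Z (fun i => AddSubgroup.subset_closure (Set.mem_range_self i)) hCge g hg1 hg2
    have hbound : 3*D*(N:ℝ) ≤ ((n.factorial : ℝ) / 2 ^ n) * Ω * (3 * D) ^ (n+1) := by
      have h3D : (0:ℝ) < 3*D := by linarith
      have hf : (0:ℝ) ≤ (n.factorial:ℝ)/2^n := by positivity
      have h3Dn : (0:ℝ) ≤ (3*D)^n := by positivity
      calc 3*D*(N:ℝ) ≤ 3*D*(((n.factorial : ℝ) / 2 ^ n) * ω * (3 * D) ^ n) :=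
            mul_le_mul_of_nonneg_left hNbound (le_of_lt h3D)
        _ ≤ 3*D*(((n.factorial : ℝ) / 2 ^ n) * Ω * (3 * D) ^ n) := by
            have h6 : ((n.factorial : ℝ) / 2 ^ n) * ω * (3 * D) ^ n ≤
                ((n.factorial : ℝ) / 2 ^ n) * Ω * (3 * D) ^ n := by
              apply mul_le_mul_of_nonneg_right _ h3Dn
              exact mul_le_mul_of_nonneg_left hΩ hf
            exact mul_le_mul_of_nonneg_left h6 (le_of_lt h3D)
        _ = ((n.factorial : ℝ) / 2 ^ n) * Ω * (3 * D) ^ (n+1) := by ring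
    constructor
    · intro γ
      obtain ⟨z, hzZ, hzd⟩ := stepD x₀ γ
      exact ⟨z, hzZ, le_trans hzd hbound⟩
    · intro x y
      obtain ⟨γ, hγ⟩ := hcodiam x y
      obtain ⟨z, hzZ, hzd⟩ := stepD y γ
      refine ⟨z, hzZ, ?_⟩
      calc dist x (ρ z y) ≤ dist x (ρ γ y) + dist (ρ γ y) (ρ z y) := dist_triangle _ _ _
        _ ≤ D + 3*D*N := add_le_add hγ hzd
        _ ≤ D + ((n.factorial : ℝ) / 2 ^ n) * Ω * (3 * D) ^ (n+1) := by linarith [hbound]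
end

section
/- Abelian Margulis Lemma, upper bound: If Γ = ℤⁿ acts freely and properly discontinuously by isometries on a length space (X,d) with cocompact quotient, then stsys(Γ,d) ≤ 2 / ω(Γ,d)^{1/n}, where stsys(Γ,d) = inf_{γ≠e} ‖γ‖_st and ω(Γ,d) is the asymptotic volume. -/
open Filter

/-- Abelian Margulis Lemma, upper bound: for a free, properly
discontinuous, cocompact isometric action of `ℤⁿ` on a length space,
`stsys(Γ,d) ≤ 2/ω(Γ,d)^{1/n}`. -/
theorem abelian_margulis_upper_bound
    {X : Type*} [MetricSpace X] (n : ℕ) (hn : 0 < n)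
    (ρ : (Fin n → ℤ) → X → X)
    (hiso : ∀ γ x y, dist (ρ γ x) (ρ γ y) = dist x y)
    (hadd : ∀ γ γ' x, ρ (γ + γ') x = ρ γ (ρ γ' x))
    (hzero : ∀ x, ρ 0 x = x)
    (hfree : ∀ γ x, ρ γ x = x → γ = 0)
    (hpd : ∀ (x : X) (r : ℝ), {γ : Fin n → ℤ | dist x (ρ γ x) ≤ r}.Finite)
    (hlength : ∀ x y : X, ∀ ε > (0:ℝ), ∃ z : X,
      dist x z ≤ dist x y / 2 + ε ∧ dist z y ≤ dist x y / 2 + ε)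
    (x₀ : X) (D : ℝ)
    (hcodiam : ∀ x y : X, ∃ γ : Fin n → ℤ, dist x (ρ γ y) ≤ D)
    (nst : (Fin n → ℤ) → ℝ)
    (hnst : ∀ γ : Fin n → ℤ,
      Tendsto (fun k : ℕ => dist x₀ (ρ (k • γ) x₀) / (k : ℝ)) atTop (nhds (nst γ)))
    (ω : ℝ)
    (hω : Tendsto (fun R : ℝ =>
        (({γ : Fin n → ℤ | dist x₀ (ρ γ x₀) < R}.ncard : ℝ)) / R ^ n)
      atTop (nhds ω)) :
    (⨅ γ : {g : Fin n → ℤ // g ≠ 0}, nst γ.1) ≤ 2 / ω ^ ((1 : ℝ) / n) := by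
  -- basic properties of f γ = dist x₀ (ρ γ x₀)
  have f_zero : dist x₀ (ρ (0 : Fin n → ℤ) x₀) = 0 := by rw [hzero]; simp
  have f_add : ∀ γ δ : Fin n → ℤ,
      dist x₀ (ρ (γ + δ) x₀) ≤ dist x₀ (ρ γ x₀) + dist x₀ (ρ δ x₀) := by
    intro γ δ
    calc dist x₀ (ρ (γ + δ) x₀) ≤ dist x₀ (ρ γ x₀) + dist (ρ γ x₀) (ρ (γ + δ) x₀) :=
          dist_triangle _ _ _
      _ = dist x₀ (ρ γ x₀) + dist x₀ (ρ δ x₀) := by rw [hadd, hiso]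
  have f_neg : ∀ γ : Fin n → ℤ, dist x₀ (ρ (-γ) x₀) = dist x₀ (ρ γ x₀) := by
    intro γ
    have h2 : ρ γ (ρ (-γ) x₀) = x₀ := by rw [← hadd]; simp [hzero]
    calc dist x₀ (ρ (-γ) x₀) = dist (ρ γ x₀) (ρ γ (ρ (-γ) x₀)) := (hiso γ _ _).symm
      _ = dist x₀ (ρ γ x₀) := by rw [h2, dist_comm]
  have f_nsmul : ∀ (k : ℕ) (γ : Fin n → ℤ),
      dist x₀ (ρ (k • γ) x₀) ≤ (k : ℝ) * dist x₀ (ρ γ x₀) := by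
    intro k γ
    induction k with
    | zero => simp [f_zero]
    | succ k ih =>
      rw [succ_nsmul]
      refine (f_add _ _).trans ?_
      push_cast
      linarith
  -- properties of nst
  have nst_nonneg : ∀ γ, 0 ≤ nst γ := fun γ =>
    ge_of_tendsto' (hnst γ) (fun k => div_nonneg dist_nonneg (Nat.cast_nonneg k))
  have nst_le : ∀ γ, nst γ ≤ dist x₀ (ρ γ x₀) := by
    intro γ
    refine le_of_tendsto (hnst γ) ?_
    filter_upwards [eventually_ge_atTop 1] with k hk
    have hk' : (0:ℝ) < k := by exact_mod_cast hk
    rw [div_le_iff₀ hk']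
    calc dist x₀ (ρ (k • γ) x₀) ≤ (k:ℝ) * dist x₀ (ρ γ x₀) := f_nsmul k γ
      _ = dist x₀ (ρ γ x₀) * k := mul_comm _ _
  have nst_neg : ∀ γ, nst (-γ) = nst γ := by
    intro γ
    have heq : (fun k : ℕ => dist x₀ (ρ (k • (-γ)) x₀) / (k:ℝ))
        = fun k : ℕ => dist x₀ (ρ (k • γ) x₀) / (k:ℝ) := by
      funext k; rw [smul_neg, f_neg]
    have h := hnst γ
    rw [← heq] at h
    exact tendsto_nhds_unique (hnst (-γ)) h
  have nst_add : ∀ γ δ, nst (γ + δ) ≤ nst γ + nst δ := by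
    intro γ δ
    refine le_of_tendsto_of_tendsto' (hnst (γ + δ)) ((hnst γ).add (hnst δ)) ?_
    intro k
    rcases Nat.eq_zero_or_pos k with h | h
    · simp [h, f_zero]
    · have hk' : (0:ℝ) < k := by exact_mod_cast h
      rw [smul_add, ← add_div]
      exact div_le_div_of_nonneg_right (f_add _ _) hk'.le |>.trans (le_of_eq rfl)
  have nst_nsmul : ∀ (m : ℕ) (γ : Fin n → ℤ), 1 ≤ m → nst (m • γ) = (m:ℝ) * nst γ := by
    intro m γ hm
    have hmono : Tendsto (fun k : ℕ => k * m) atTop atTop :=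
      tendsto_atTop_atTop.mpr (fun b => ⟨b, fun a ha => le_trans ha (Nat.le_mul_of_pos_right a hm)⟩)
    have h1 := (hnst γ).comp hmono
    have h2 := h1.mul_const ((m:ℝ))
    have h3 : ((fun k : ℕ => dist x₀ (ρ (k • γ) x₀) / (k:ℝ)) ∘ (fun k : ℕ => k * m))
        = fun k : ℕ => dist x₀ (ρ ((k * m) • γ) x₀) / ((k*m : ℕ) : ℝ) := rfl
    rw [h3] at h2
    have h4 : (fun k : ℕ => dist x₀ (ρ ((k * m) • γ) x₀) / ((k*m : ℕ) : ℝ) * (m:ℝ))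
        = fun k : ℕ => dist x₀ (ρ (k • (m • γ)) x₀) / (k:ℝ) := by
      funext k
      rw [smul_smul]
      rcases Nat.eq_zero_or_pos k with h | h
      · simp [h]
      · have hk' : (k:ℝ) ≠ 0 := by positivity
        have hm' : (m:ℝ) ≠ 0 := by positivity
        push_cast
        field_simp
    rw [h4] at h2
    exact (tendsto_nhds_unique (hnst (m • γ)) h2).trans (mul_comm _ _)
  -- counting sets
  set A : ℝ → Set (Fin n → ℤ) := fun r => {γ | dist x₀ (ρ γ x₀) < r} with hA
  have hωA : Tendsto (fun R : ℝ => ((A R).ncard : ℝ) / R ^ n) atTop (nhds ω) := by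
    simpa only [hA] using hω
  have hfin : ∀ r, (A r).Finite := fun r => (hpd x₀ r).subset (fun γ h => le_of_lt (show dist x₀ (ρ γ x₀) < r from h))
  have ω_nonneg : 0 ≤ ω := by
    refine ge_of_tendsto hωA ?_
    filter_upwards [eventually_ge_atTop (0:ℝ)] with R hR
    positivity
  -- the stable systole
  set s := ⨅ γ : {g : Fin n → ℤ // g ≠ 0}, nst γ.1 with hs
  have hbdd : BddBelow (Set.range fun γ : {g : Fin n → ℤ // g ≠ 0} => nst γ.1) :=
    ⟨0, by rintro _ ⟨γ, rfl⟩; exact nst_nonneg _⟩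
  have s_le : ∀ γ : Fin n → ℤ, γ ≠ 0 → s ≤ nst γ := fun γ hγ => ciInf_le hbdd ⟨γ, hγ⟩
  rcases le_or_gt s 0 with hs0 | hs0
  · refine hs0.trans (div_nonneg (by norm_num) (Real.rpow_nonneg ω_nonneg _))
  -- now s > 0.  First: ω > 0.
  have ω_pos : 0 < ω := by
    set M : ℝ := 1 + ∑ i : Fin n, dist x₀ (ρ (Pi.single i 1) x₀) with hM
    have hM1 : 1 ≤ M :=
      le_add_of_nonneg_right (Finset.sum_nonneg fun i _ => dist_nonneg)
    have f_sum : ∀ (g : Fin n → (Fin n → ℤ)) (t : Finset (Fin n)),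
        dist x₀ (ρ (∑ i ∈ t, g i) x₀) ≤ ∑ i ∈ t, dist x₀ (ρ (g i) x₀) := by
      intro g t
      induction t using Finset.induction with
      | empty => simp [f_zero]
      | @insert a t ha ih =>
        rw [Finset.sum_insert ha, Finset.sum_insert ha]
        exact (f_add _ _).trans (by linarith)
    have box : ∀ (k : ℕ) (γ : Fin n → ℤ), (∀ i, 0 ≤ γ i) → (∀ i, γ i ≤ (k:ℤ)) →
        dist x₀ (ρ γ x₀) < (k:ℝ) * M + 1 := by
      intro k γ h0 hk
      have hform : γ = ∑ i, γ i • Pi.single i (1:ℤ) := by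
        funext j
        simp [Pi.single_apply]
      have h1 : dist x₀ (ρ γ x₀) ≤ ∑ i, dist x₀ (ρ (γ i • Pi.single i (1:ℤ)) x₀) := by
        calc dist x₀ (ρ γ x₀) = dist x₀ (ρ (∑ i, γ i • Pi.single i (1:ℤ)) x₀) := by rw [← hform]
          _ ≤ _ := f_sum _ _
      have h2 : ∀ i : Fin n, dist x₀ (ρ (γ i • Pi.single i (1:ℤ)) x₀)
          ≤ (k:ℝ) * dist x₀ (ρ (Pi.single i (1:ℤ)) x₀) := by
        intro i
        obtain ⟨a, ha⟩ : ∃ a : ℕ, γ i = (a:ℤ) :=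
          ⟨(γ i).toNat, (Int.toNat_of_nonneg (h0 i)).symm⟩
        rw [ha, natCast_zsmul]
        refine (f_nsmul _ _).trans ?_
        have htn : (a : ℝ) ≤ (k:ℝ) := by
          have h' : (a:ℤ) ≤ (k:ℤ) := ha ▸ hk i
          exact_mod_cast h'
        exact mul_le_mul_of_nonneg_right htn dist_nonneg
      have h3 : dist x₀ (ρ γ x₀) ≤ (k:ℝ) * (M - 1) := by
        calc dist x₀ (ρ γ x₀) ≤ ∑ i, dist x₀ (ρ (γ i • Pi.single i (1:ℤ)) x₀) := h1
          _ ≤ ∑ i : Fin n, (k:ℝ) * dist x₀ (ρ (Pi.single i (1:ℤ)) x₀) :=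
              Finset.sum_le_sum (fun i _ => h2 i)
          _ = (k:ℝ) * (M - 1) := by rw [← Finset.mul_sum, hM]; ring
      have hk0 : (0:ℝ) ≤ (k:ℝ) := Nat.cast_nonneg k
      nlinarith
    have cube : ∀ k : ℕ, ((k+1:ℝ))^n ≤ ((A ((k:ℝ) * M + 1)).ncard : ℝ) := by
      intro k
      have hfin' := hfin ((k:ℝ)*M+1)
      haveI := hfin'.to_subtype
      let F : (Fin n → Fin (k+1)) → (A ((k:ℝ)*M+1)) := fun v =>
        ⟨fun i => ((v i : ℕ) : ℤ), by
          have hb := box k (fun i => ((v i : ℕ) : ℤ)) (fun i => Int.natCast_nonneg _)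
            (fun i => by show ((v i : ℕ) : ℤ) ≤ (k:ℤ); exact_mod_cast Nat.le_of_lt_succ (v i).isLt)
          exact hb⟩
      have hFinj : Function.Injective F := by
        intro a b hab
        have hab' : (fun i => ((a i : ℕ) : ℤ)) = (fun i => ((b i : ℕ) : ℤ)) :=
          congrArg Subtype.val hab
        funext i
        have : ((a i : ℕ) : ℤ) = ((b i : ℕ) : ℤ) := congrFun hab' i
        exact Fin.ext (by exact_mod_cast this)
      have hcard := Nat.card_le_card_of_injective F hFinj
      have hc1 : Nat.card (Fin n → Fin (k+1)) = (k+1)^n := by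
        simp [Nat.card_eq_fintype_card]
      rw [hc1, Nat.card_coe_set_eq] at hcard
      exact_mod_cast hcard
    have hMpos : (0:ℝ) < M := by linarith
    have hseq : Tendsto (fun k : ℕ => (k:ℝ) * M + 1) atTop atTop :=
      tendsto_atTop_add_const_right _ _ ((tendsto_natCast_atTop_atTop (R := ℝ)).atTop_mul_const hMpos)
    have h2 := hωA.comp hseq
    have hlow : ∀ k : ℕ, ((1/(M+1))^n : ℝ)
        ≤ ((A ((k:ℝ) * M + 1)).ncard : ℝ) / ((k:ℝ) * M + 1)^n := by
      intro k
      have hb : (0:ℝ) < (k:ℝ)*M+1 := by positivity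
      rw [le_div_iff₀ (pow_pos hb n)]
      have key1 : ((1/(M+1))*((k:ℝ)*M+1))^n ≤ ((k:ℝ)+1)^n := by
        refine pow_le_pow_left₀ (by positivity) ?_ n
        rw [div_mul_eq_mul_div, one_mul, div_le_iff₀ (by linarith : (0:ℝ) < M+1)]
        have hk0 : (0:ℝ) ≤ (k:ℝ) := Nat.cast_nonneg k
        nlinarith
      calc (1/(M+1))^n * ((k:ℝ)*M+1)^n = ((1/(M+1))*((k:ℝ)*M+1))^n := (mul_pow _ _ _).symm
        _ ≤ ((k:ℝ)+1)^n := key1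
        _ ≤ _ := cube k
    have := ge_of_tendsto' h2 (fun k => hlow k)
    have hp : (0:ℝ) < (1/(M+1))^n := by positivity
    linarith
  -- key packing inequality
  have key : ∀ (R : ℝ) (m : ℕ), 1 ≤ m →
      ((A R).ncard : ℝ) * ((A ((m:ℝ) * (s/2))).ncard : ℝ)
        ≤ ((A ((m:ℝ) * (R + s/2))).ncard : ℝ) := by
    intro R m hm
    haveI := (hfin ((m:ℝ)*(R+s/2))).to_subtype
    haveI := (hfin R).to_subtype
    haveI := (hfin ((m:ℝ)*(s/2))).to_subtype
    have hmpos : (0:ℝ) < m := by exact_mod_cast hm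
    let F : (A R) × (A ((m:ℝ)*(s/2))) → (A ((m:ℝ)*(R+s/2))) := fun p =>
      ⟨m • p.1.1 + p.2.1, by
        have h1 := f_add (m • p.1.1) p.2.1
        have h2 := f_nsmul m p.1.1
        have h3 : dist x₀ (ρ p.1.1 x₀) < R := p.1.2
        have h4 : dist x₀ (ρ p.2.1 x₀) < (m:ℝ)*(s/2) := p.2.2
        show dist x₀ (ρ (m • p.1.1 + p.2.1) x₀) < (m:ℝ)*(R+s/2)
        nlinarith⟩
    have hFinj : Function.Injective F := by
      rintro ⟨⟨γ, hγ⟩, ⟨δ, hδ⟩⟩ ⟨⟨γ', hγ'⟩, ⟨δ', hδ'⟩⟩ hEq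
      have hEq' : m • γ + δ = m • γ' + δ' := congrArg Subtype.val hEq
      have hγγ : γ = γ' := by
        by_contra hne
        have hsub : γ - γ' ≠ 0 := sub_ne_zero.mpr hne
        have h5 : m • (γ - γ') = δ' - δ := by
          rw [smul_sub, sub_eq_sub_iff_add_eq_add]
          exact hEq'.trans (add_comm _ _)
        have h6 : nst (m • (γ - γ')) = (m:ℝ) * nst (γ - γ') := nst_nsmul m _ hm
        have h7 : (m:ℝ) * s ≤ nst (m • (γ - γ')) := by
          rw [h6]
          exact mul_le_mul_of_nonneg_left (s_le _ hsub) (le_of_lt hmpos)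
        rw [h5] at h7
        have h8 : nst (δ' - δ) ≤ nst δ' + nst δ := by
          rw [sub_eq_add_neg]
          exact (nst_add δ' (-δ)).trans (by rw [nst_neg])
        have h9 := nst_le δ'
        have h10 := nst_le δ
        have hδ2 : dist x₀ (ρ δ x₀) < (m:ℝ)*(s/2) := hδ
        have hδ2' : dist x₀ (ρ δ' x₀) < (m:ℝ)*(s/2) := hδ'
        linarith
      subst hγγ
      have hδδ : δ = δ' := by
        have := hEq'
        exact add_left_cancel this
      subst hδδ
      rfl
    have hcard := Nat.card_le_card_of_injective F hFinj
    rw [Nat.card_prod, Nat.card_coe_set_eq, Nat.card_coe_set_eq,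
      Nat.card_coe_set_eq] at hcard
    exact_mod_cast hcard
  -- asymptotics along dilations
  have s2pos : (0:ℝ) < s/2 := by linarith
  have limAt : ∀ c : ℝ, 0 < c →
      Tendsto (fun m : ℕ => ((A ((m:ℝ) * c)).ncard : ℝ) / (m:ℝ)^n) atTop (nhds (ω * c^n)) := by
    intro c hc
    have h1 : Tendsto (fun m : ℕ => ((m:ℝ) * c)) atTop atTop :=
      (tendsto_natCast_atTop_atTop (R := ℝ)).atTop_mul_const hc
    have h2 := hωA.comp h1
    have h3 := h2.mul_const (c^n)
    refine Tendsto.congr' ?_ h3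
    filter_upwards [eventually_ge_atTop 1] with m hm
    have hm' : (0:ℝ) < m := by exact_mod_cast hm
    show ((A ((m:ℝ) * c)).ncard : ℝ) / ((m:ℝ)*c)^n * c^n = _
    rw [mul_pow]
    field_simp
  have T1 := limAt (s/2) s2pos
  have aR_bound : ∀ R : ℝ, 0 < R →
      ((A R).ncard : ℝ) * (ω * (s/2)^n) ≤ ω * (R + s/2)^n := by
    intro R hR
    have T2 := limAt (R + s/2) (by linarith)
    have T1' := T1.const_mul ((A R).ncard : ℝ)
    refine le_of_tendsto_of_tendsto' T1' T2 ?_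
    intro m
    rcases Nat.eq_zero_or_pos m with h | h
    · simp [h, zero_pow hn.ne']
    · have hm' : (0:ℝ) < (m:ℝ)^n := by positivity
      have hk := key R m h
      calc ((A R).ncard : ℝ) * (((A ((m:ℝ) * (s/2))).ncard : ℝ) / (m:ℝ)^n)
          = ((A R).ncard : ℝ) * ((A ((m:ℝ) * (s/2))).ncard : ℝ) / (m:ℝ)^n := by ring
        _ ≤ ((A ((m:ℝ) * (R + s/2))).ncard : ℝ) / (m:ℝ)^n :=
            div_le_div_of_nonneg_right hk hm'.le |>.trans (le_of_eq rfl)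
  have aR_bound2 : ∀ R : ℝ, 0 < R →
      ((A R).ncard : ℝ) ≤ ((R + s/2)/(s/2))^n := by
    intro R hR
    have h := aR_bound R hR
    have h' : ω * (((A R).ncard : ℝ) * (s/2)^n) ≤ ω * (R+s/2)^n := by
      ring_nf at h ⊢
      linarith
    have h'' := le_of_mul_le_mul_left h' ω_pos
    rw [div_pow, le_div_iff₀ (pow_pos s2pos n)]
    exact h''
  -- conclude ω ≤ (2/s)^n
  have ω_le : ω ≤ (2/s)^n := by
    have hT : Tendsto (fun R : ℝ => (2/s + 1/R)^n) atTop (nhds ((2/s)^n)) := by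
      have h0 : Tendsto (fun R : ℝ => 1/R) atTop (nhds 0) := by
        have := (tendsto_inv_atTop_zero : Tendsto (fun r : ℝ => r⁻¹) atTop (nhds 0))
        refine this.congr (fun R => ?_)
        rw [one_div]
      have h1 : Tendsto (fun R : ℝ => 2/s + 1/R) atTop (nhds (2/s + 0)) :=
        tendsto_const_nhds.add h0
      simpa using h1.pow n
    have hev : (fun R : ℝ => ((A R).ncard : ℝ) / R ^ n) ≤ᶠ[atTop]
        fun R : ℝ => (2/s + 1/R)^n := by
      filter_upwards [eventually_gt_atTop (0:ℝ)] with R hR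
      have hRn : (0:ℝ) < R^n := pow_pos hR n
      rw [div_le_iff₀ hRn]
      have h2 := aR_bound2 R hR
      have heq : ((R + s/2)/(s/2))^n = (2/s + 1/R)^n * R^n := by
        rw [← mul_pow]
        congr 1
        field_simp
      rw [heq] at h2
      exact h2
    exact le_of_tendsto_of_tendsto hωA hT hev
  -- final step
  have hrw : ω ^ ((1:ℝ)/n) ≤ 2/s := by
    have h1 : ω ^ ((1:ℝ)/n) ≤ ((2/s)^n) ^ ((1:ℝ)/n) :=
      Real.rpow_le_rpow ω_nonneg ω_le (by positivity)
    have h2 : (((2/s)^n : ℝ)) ^ ((1:ℝ)/n) = 2/s := by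
      rw [← Real.rpow_natCast (2/s) n, ← Real.rpow_mul (by positivity)]
      rw [mul_one_div, div_self (by exact_mod_cast hn.ne' : (n:ℝ) ≠ 0), Real.rpow_one]
    rw [h2] at h1
    exact h1
  have hpos : 0 < ω ^ ((1:ℝ)/n) := Real.rpow_pos_of_pos ω_pos _
  rw [le_div_iff₀ hpos]
  have := (le_div_iff₀ hs0).mp hrw
  linarith
end

section
/- Abelian Margulis Lemma, lower bound: If Γ = ℤⁿ acts freely and properly discontinuously by isometries on a length space (X,d) with cocompact quotient of diameter D = codiam(Γ,d), then stsys(Γ,d) ≥ (2/n!) · 1/(D^{n−1} · ω(Γ,d)). -/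
open Filter Finset Submodule

lemma aux_pow_sub_pow (x y : ℝ) (p : ℕ) (hy : 0 ≤ y) (hxy : y ≤ x) :
    x ^ (p+1) - y ^ (p+1) ≤ (p+1) * x ^ p * (x - y) := by
  have hx : 0 ≤ x := hy.trans hxy
  rw [← geom_sum₂_mul x y (p+1)]
  apply mul_le_mul_of_nonneg_right ?_ (by linarith)
  calc ∑ i ∈ Finset.range (p+1), x^i * y^(p+1-1-i)
      ≤ ∑ _i ∈ Finset.range (p+1), x^p := by
        apply Finset.sum_le_sum; intro i hi
        have h1 : x^i * y^(p+1-1-i) ≤ x^i * x^(p+1-1-i) :=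
          mul_le_mul_of_nonneg_left (pow_le_pow_left₀ hy hxy _) (pow_nonneg hx _)
        refine h1.trans ?_
        rw [← pow_add]
        apply le_of_eq; congr 1
        have := Finset.mem_range.mp hi; omega
    _ = (p+1) * x^p := by
        rw [Finset.sum_const, Finset.card_range, nsmul_eq_mul]
        push_cast; ring

lemma aux_max_sub_max (u c : ℝ) (hc : 0 ≤ c) : max u 0 - max (u - c) 0 ≤ c := by
  rcases le_total u 0 with h | h <;> rcases le_total (u - c) 0 with h2 | h2 <;>
    simp [max_eq_left, max_eq_right, h, h2] <;> linarith
lemma aux_simplex_count : ∀ (m : ℕ) (w : Fin m → ℝ), (∀ i, 0 < w i) →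
    ∀ T : ℝ, 0 ≤ T → ∀ s : Finset (Fin m → ℕ),
    (∀ j : Fin m → ℕ, (∑ i, w i * (j i : ℝ)) ≤ T → j ∈ s) →
    T ^ m ≤ (m.factorial : ℝ) * ((∏ i, w i) * s.card) := by
  intro m
  induction m with
  | zero =>
    intro w hw T hT s hs
    have h0 : (fun _ : Fin 0 => 0) ∈ s := hs _ (by simp [hT])
    have h1 : 1 ≤ s.card := Finset.card_pos.mpr ⟨_, h0⟩
    have h2 : (1:ℝ) ≤ (s.card : ℝ) := by exact_mod_cast h1
    simpa using h2
  | succ m ih =>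
    intro w hw T hT s hs
    set w0 := w 0 with hw0
    have hw0pos : 0 < w0 := hw 0
    set M := ⌊T / w0⌋₊ with hM
    set b : ℕ → ℝ := fun a => max (T - w0 * a) 0 with hb
    have hbnn : ∀ a, 0 ≤ b a := fun a => le_max_right _ _
    have hbcast : ∀ a : ℕ, b (a+1) = max (T - w0 * a - w0) 0 := by
      intro a; simp only [hb]; push_cast; ring_nf
    have hbmono : ∀ a : ℕ, b (a+1) ≤ b a := by
      intro a
      rw [hbcast a]
      apply max_le_max _ le_rfl
      linarith [hw0pos]
    have hbdiff : ∀ a : ℕ, b a - b (a+1) ≤ w0 := by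
      intro a
      rw [hbcast a]
      have := aux_max_sub_max (T - w0 * a) w0 hw0pos.le
      simp only [hb]
      linarith [this]
    have htel : T ^ (m+1) ≤ ∑ a ∈ Finset.range (M+1), (m+1) * w0 * (b a) ^ m := by
      have hlast : b (M+1) = 0 := by
        apply max_eq_right
        have h2 : T / w0 < ((M:ℝ)+1) := by
          have := Nat.lt_succ_floor (T / w0)
          exact_mod_cast this
        have : T < w0 * ((M:ℝ)+1) := by
          calc T = T / w0 * w0 := by field_simp
            _ < ((M:ℝ)+1) * w0 := mul_lt_mul_of_pos_right h2 hw0pos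
            _ = w0 * ((M:ℝ)+1) := by ring
        push_cast; linarith
      have hfirst : b 0 = T := by simp [hb, hT]
      have key : ∀ a, b a ^ (m+1) - b (a+1) ^ (m+1) ≤ (m+1) * w0 * (b a)^m := by
        intro a
        calc b a ^ (m+1) - b (a+1) ^ (m+1) ≤ (m+1) * (b a)^m * (b a - b (a+1)) :=
              aux_pow_sub_pow _ _ m (hbnn (a+1)) (hbmono a)
          _ ≤ (m+1) * (b a)^m * w0 := by
              apply mul_le_mul_of_nonneg_left (hbdiff a)
              exact mul_nonneg (by positivity) (pow_nonneg (hbnn a) m)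
          _ = (m+1) * w0 * (b a)^m := by ring
      calc T ^ (m+1) = b 0 ^ (m+1) - b (M+1) ^ (m+1) := by rw [hfirst, hlast]; simp
        _ = ∑ a ∈ Finset.range (M+1), (b a ^ (m+1) - b (a+1) ^ (m+1)) := by
            rw [Finset.sum_range_sub']
        _ ≤ ∑ a ∈ Finset.range (M+1), (m+1) * w0 * (b a)^m :=
            Finset.sum_le_sum (fun a _ => key a)
    have hprodnn : (0:ℝ) ≤ ∏ i : Fin m, w i.succ :=
      Finset.prod_nonneg (fun i _ => (hw _).le)
    have hfib : ∀ a ∈ Finset.range (M+1),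
        (b a) ^ m ≤ (m.factorial : ℝ) * ((∏ i : Fin m, w i.succ) *
          ((s.filter (fun j => j 0 = a)).card)) := by
      intro a ha
      have haM : (a : ℝ) ≤ T / w0 := by
        have : a ≤ M := Nat.lt_succ_iff.mp (Finset.mem_range.mp ha)
        calc (a:ℝ) ≤ M := by exact_mod_cast this
          _ ≤ T / w0 := Nat.floor_le (by positivity)
      have hTa : 0 ≤ T - w0 * a := by
        have := (le_div_iff₀ hw0pos).mp haM
        linarith
      have hba : b a = T - w0 * a := max_eq_left hTa
      set sa : Finset (Fin m → ℕ) :=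
        (s.filter (fun j => j 0 = a)).image (fun j => j ∘ Fin.succ) with hsa
      have hcov : ∀ j' : Fin m → ℕ, (∑ i, w i.succ * (j' i : ℝ)) ≤ T - w0 * a → j' ∈ sa := by
        intro j' hj'
        have hmem : (Fin.cons a j' : Fin (m+1) → ℕ) ∈ s := by
          apply hs
          rw [Fin.sum_univ_succ]
          simp only [Fin.cons_zero, Fin.cons_succ]
          linarith
        apply Finset.mem_image.mpr
        refine ⟨Fin.cons a j', Finset.mem_filter.mpr ⟨hmem, by simp⟩, ?_⟩
        funext i; simp [Fin.cons_succ]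
      have hih := ih (fun i => w i.succ) (fun i => hw _) (T - w0 * a) hTa sa hcov
      rw [hba]
      refine hih.trans ?_
      have hcard : (sa.card : ℝ) ≤ ((s.filter (fun j => j 0 = a)).card : ℝ) := by
        exact_mod_cast Finset.card_image_le
      exact mul_le_mul_of_nonneg_left
        (mul_le_mul_of_nonneg_left hcard hprodnn) (by positivity)
    have hsumcard : ∑ a ∈ Finset.range (M+1), ((s.filter (fun j => j 0 = a)).card : ℝ)
        ≤ (s.card : ℝ) := by
      have hN : ∑ a ∈ Finset.range (M+1), (s.filter (fun j => j 0 = a)).card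
          ≤ s.card := by
        classical
        have hdisj : (↑(Finset.range (M+1)) : Set ℕ).PairwiseDisjoint
            (fun a => s.filter (fun j => j 0 = a)) := by
          intro a _ bb _ hab
          simp only [Function.onFun]
          rw [Finset.disjoint_left]
          intro j hj hj2
          rw [Finset.mem_filter] at hj hj2
          exact hab (by rw [← hj.2, ← hj2.2])
        calc ∑ a ∈ Finset.range (M+1), (s.filter (fun j => j 0 = a)).card
            = ((Finset.range (M+1)).disjiUnion _ hdisj).card := by
              rw [Finset.card_disjiUnion]
          _ ≤ s.card := by
              apply Finset.card_le_card
              intro j hj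
              simp only [Finset.mem_disjiUnion] at hj
              obtain ⟨a, _, hj⟩ := hj
              exact (Finset.mem_filter.mp hj).1
      exact_mod_cast hN
    have hprod : (∏ i : Fin (m+1), w i) = w0 * ∏ i : Fin m, w i.succ := by
      rw [Fin.prod_univ_succ]
    have hfacs : ((m+1).factorial : ℝ) = (m+1) * m.factorial := by
      rw [Nat.factorial_succ]; push_cast; ring
    calc T ^ (m+1) ≤ ∑ a ∈ Finset.range (M+1), (m+1) * w0 * (b a) ^ m := htel
      _ ≤ ∑ a ∈ Finset.range (M+1), (m+1) * w0 *
            ((m.factorial : ℝ) * ((∏ i : Fin m, w i.succ) *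
              ((s.filter (fun j => j 0 = a)).card))) := by
          apply Finset.sum_le_sum
          intro a ha
          apply mul_le_mul_of_nonneg_left (hfib a ha)
          exact mul_nonneg (by positivity) hw0pos.le
      _ = (m+1) * w0 * (m.factorial : ℝ) * (∏ i : Fin m, w i.succ) *
            (∑ a ∈ Finset.range (M+1), ((s.filter (fun j => j 0 = a)).card : ℝ)) := by
          rw [Finset.mul_sum]; apply Finset.sum_congr rfl; intros; ring
      _ ≤ (m+1) * w0 * (m.factorial : ℝ) * (∏ i : Fin m, w i.succ) * (s.card : ℝ) := by
          apply mul_le_mul_of_nonneg_left hsumcard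
          exact mul_nonneg (mul_nonneg (mul_nonneg (by positivity) hw0pos.le)
            (by positivity)) hprodnn
      _ = ((m+1).factorial : ℝ) * ((∏ i : Fin (m+1), w i) * s.card) := by
          rw [hprod, hfacs]; ring

lemma aux_complete_basis (m : ℕ) (S : Set (Fin (m+1) → ℤ))
    (hS : AddSubgroup.closure S = ⊤) (γ : Fin (m+1) → ℤ) (hγ : γ ≠ 0) :
    ∃ c : Fin (m+1) → (Fin (m+1) → ℤ), c 0 = γ ∧ (∀ i, i ≠ 0 → c i ∈ S) ∧
      ∀ k k' : Fin (m+1) → ℤ, (∑ i, k i • c i) = (∑ i, k' i • c i) → k = k' := by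
  classical
  let φ : (Fin (m+1) → ℤ) →+ (Fin (m+1) → ℚ) :=
    { toFun := fun g i => (g i : ℚ)
      map_zero' := by funext i; simp
      map_add' := by intro a b; funext i; push_cast; simp }
  have φsmul : ∀ (k : ℤ) (g : Fin (m+1) → ℤ), φ (k • g) = (k : ℚ) • φ g := by
    intro k g; funext i
    show ((k • g i : ℤ) : ℚ) = (k:ℚ) • (g i : ℚ)
    simp [smul_eq_mul]
  have φinj : Function.Injective φ := by
    intro a b hab
    funext i
    have h2 : ((a i : ℚ)) = ((b i : ℚ)) := congrFun hab i
    exact_mod_cast h2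
  have hsingle : ∀ i, φ ((Pi.single i 1 : Fin (m+1) → ℤ))
      = fun j => if i = j then (1:ℚ) else 0 := by
    intro i; funext j
    show ((Pi.single i 1 : Fin (m+1) → ℤ) j : ℚ) = _
    rcases eq_or_ne j i with rfl | hji
    · simp
    · simp [Pi.single_apply, hji, Ne.symm hji]
  have hspan : Submodule.span ℚ (⇑φ '' S) = ⊤ := by
    rw [eq_top_iff]
    have hrange : ∀ g : Fin (m+1) → ℤ, φ g ∈ Submodule.span ℚ (⇑φ '' S) := by
      intro g
      have hg : g ∈ AddSubgroup.closure S := by rw [hS]; trivial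
      have hmem : φ g ∈ (AddSubgroup.closure S).map φ := AddSubgroup.mem_map_of_mem φ hg
      rw [AddMonoidHom.map_closure] at hmem
      have hsub : AddSubgroup.closure (⇑φ '' S) ≤
          (Submodule.span ℚ (⇑φ '' S)).toAddSubgroup :=
        (AddSubgroup.closure_le _).mpr Submodule.subset_span
      exact hsub hmem
    intro v _
    have hv : v = ∑ i, v i • φ (Pi.single i 1) := by
      simp_rw [hsingle]
      exact pi_eq_sum_univ v
    rw [hv]
    exact Submodule.sum_mem _ (fun i _ => Submodule.smul_mem _ _ (hrange _))
  have hφγ : φ γ ≠ 0 := fun h => hγ (φinj (by simpa using h))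
  have hli : LinearIndependent ℚ ((↑) : ({φ γ} : Set (Fin (m+1) → ℚ)) → (Fin (m+1) → ℚ)) :=
    (linearIndepOn_singleton_iff (R := ℚ) (v := id)).mpr hφγ
  obtain ⟨b, hbt, hsb, htspan, hbli'⟩ :=
    exists_linearIndepOn_id_extension hli (Set.subset_union_left (t := ⇑φ '' S))
  have hbli : LinearIndependent ℚ ((↑) : b → (Fin (m+1) → ℚ)) := hbli'
  have hspanb : Submodule.span ℚ b = ⊤ := by
    rw [eq_top_iff, ← hspan]
    apply Submodule.span_le.mpr
    intro x hx
    exact htspan (Set.mem_union_right _ hx)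
  have hbfin : b.Finite := hbli.setFinite
  have : Fintype b := hbfin.fintype
  let B : Module.Basis b ℚ (Fin (m+1) → ℚ) :=
    Module.Basis.mk hbli (by rw [Subtype.range_coe]; exact hspanb.ge)
  have hcard : Fintype.card b = m+1 := by
    have h1 := Module.finrank_eq_card_basis B
    rw [Module.finrank_fin_fun] at h1
    omega
  have hmemb : φ γ ∈ b := hsb rfl
  let e0 : b ≃ Fin (m+1) := Fintype.equivFinOfCardEq hcard
  let e : Fin (m+1) ≃ b := (Equiv.swap (0 : Fin (m+1)) (e0 ⟨φ γ, hmemb⟩)).trans e0.symm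
  have he0 : (e 0 : Fin (m+1) → ℚ) = φ γ := by
    show ((e0.symm (Equiv.swap (0 : Fin (m+1)) (e0 ⟨φ γ, hmemb⟩) 0)) : Fin (m+1) → ℚ) = φ γ
    rw [Equiv.swap_apply_left, Equiv.symm_apply_apply]
  have hchoice : ∀ i : Fin (m+1), i ≠ 0 → ∃ g, g ∈ S ∧ φ g = (e i : Fin (m+1) → ℚ) := by
    intro i hi
    have hne : (e i : Fin (m+1) → ℚ) ≠ φ γ := by
      intro h
      apply hi
      have : e i = e 0 := Subtype.ext (h.trans he0.symm)
      exact e.injective this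
    rcases hbt (e i).2 with h | h
    · exact absurd (Set.mem_singleton_iff.mp h) hne
    · obtain ⟨g, hgS, hgφ⟩ := h
      exact ⟨g, hgS, hgφ⟩
  let c : Fin (m+1) → (Fin (m+1) → ℤ) := fun i =>
    if hi : i = 0 then γ else (hchoice i hi).choose
  have hc0 : c 0 = γ := by simp [c]
  have hcφ : ∀ i, φ (c i) = (e i : Fin (m+1) → ℚ) := by
    intro i
    rcases eq_or_ne i 0 with rfl | hi
    · rw [hc0, he0]
    · simp only [c, dif_neg hi]
      exact (hchoice i hi).choose_spec.2
  have hcS : ∀ i, i ≠ 0 → c i ∈ S := by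
    intro i hi
    simp only [c, dif_neg hi]
    exact (hchoice i hi).choose_spec.1
  have heli : LinearIndependent ℚ (fun i : Fin (m+1) => (e i : Fin (m+1) → ℚ)) :=
    hbli.comp e e.injective
  refine ⟨c, hc0, hcS, ?_⟩
  intro k k' hkk
  have h1 : φ (∑ i, k i • c i) = φ (∑ i, k' i • c i) := by rw [hkk]
  rw [map_sum, map_sum] at h1
  simp only [φsmul, hcφ] at h1
  have h2 : ∑ i, ((k i - k' i : ℤ) : ℚ) • (e i : Fin (m+1) → ℚ) = 0 := by
    push_cast
    simp only [sub_smul]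
    rw [Finset.sum_sub_distrib, h1, sub_self]
  have h3 := Fintype.linearIndependent_iff.mp heli _ h2
  funext i
  have h4 := h3 i
  exact_mod_cast sub_eq_zero.mp (by exact_mod_cast h4)

/-- Abelian Margulis Lemma, lower bound: for a free, properly
discontinuous, cocompact isometric action of `ℤⁿ` on a length space with
codiameter `≤ D`, `stsys(Γ,d) ≥ (2/n!)·1/(D^{n−1}·ω(Γ,d))`. -/
theorem abelian_margulis_lower_bound
    {X : Type*} [MetricSpace X] (n : ℕ) (hn : 0 < n)
    (ρ : (Fin n → ℤ) → X → X)
    (hiso : ∀ γ x y, dist (ρ γ x) (ρ γ y) = dist x y)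
    (hadd : ∀ γ γ' x, ρ (γ + γ') x = ρ γ (ρ γ' x))
    (hzero : ∀ x, ρ 0 x = x)
    (hfree : ∀ γ x, ρ γ x = x → γ = 0)
    (hpd : ∀ (x : X) (r : ℝ), {γ : Fin n → ℤ | dist x (ρ γ x) ≤ r}.Finite)
    (hlength : ∀ x y : X, ∀ ε > (0:ℝ), ∃ z : X,
      dist x z ≤ dist x y / 2 + ε ∧ dist z y ≤ dist x y / 2 + ε)
    (x₀ : X) (D : ℝ)
    (hcodiam : ∀ x y : X, ∃ γ : Fin n → ℤ, dist x (ρ γ y) ≤ D)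
    (nst : (Fin n → ℤ) → ℝ)
    (hnst : ∀ γ : Fin n → ℤ,
      Tendsto (fun k : ℕ => dist x₀ (ρ (k • γ) x₀) / (k : ℝ)) atTop (nhds (nst γ)))
    (ω : ℝ)
    (hω : Tendsto (fun R : ℝ =>
        (({γ : Fin n → ℤ | dist x₀ (ρ γ x₀) < R}.ncard : ℝ)) / R ^ n)
      atTop (nhds ω)) :
    (2 / (n.factorial : ℝ)) * (1 / (D ^ (n - 1) * ω))
      ≤ ⨅ γ : {g : Fin n → ℤ // g ≠ 0}, nst γ.1 := by
  classical
  obtain ⟨m, rfl⟩ : ∃ m, n = m + 1 := ⟨n - 1, (Nat.succ_pred_eq_of_pos hn).symm⟩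
  -- basic displacement lemmas
  have dist_shift : ∀ a b : Fin (m+1) → ℤ,
      dist (ρ a x₀) (ρ b x₀) = dist x₀ (ρ (b - a) x₀) := by
    intro a b
    conv_lhs => rw [show b = a + (b - a) by ring]
    rw [hadd, hiso]
  have disp_neg : ∀ g, dist x₀ (ρ (-g) x₀) = dist x₀ (ρ g x₀) := by
    intro g
    have h := dist_shift g 0
    rw [hzero, zero_sub] at h
    rw [← h, dist_comm]
  have disp_add : ∀ a b : Fin (m+1) → ℤ,
      dist x₀ (ρ (a+b) x₀) ≤ dist x₀ (ρ a x₀) + dist x₀ (ρ b x₀) := by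
    intro a b
    calc dist x₀ (ρ (a+b) x₀)
        ≤ dist x₀ (ρ a x₀) + dist (ρ a x₀) (ρ (a+b) x₀) := dist_triangle _ _ _
      _ = dist x₀ (ρ a x₀) + dist x₀ (ρ b x₀) := by
          rw [dist_shift a (a+b), add_sub_cancel_left]
  have disp_zero : dist x₀ (ρ 0 x₀) = 0 := by rw [hzero]; simp
  have disp_nsmul : ∀ (g : Fin (m+1) → ℤ) (k : ℕ),
      dist x₀ (ρ (k • g) x₀) ≤ k * dist x₀ (ρ g x₀) := by
    intro g k
    induction k with
    | zero => simp [disp_zero]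
    | succ k ih =>
      rw [succ_nsmul]
      refine (disp_add _ _).trans ?_
      push_cast
      linarith
  have disp_sum : ∀ (s : Finset (Fin (m+1))) (f : Fin (m+1) → (Fin (m+1) → ℤ)),
      dist x₀ (ρ (∑ i ∈ s, f i) x₀) ≤ ∑ i ∈ s, dist x₀ (ρ (f i) x₀) := by
    intro s f
    induction s using Finset.induction with
    | empty => simp [disp_zero]
    | @insert a s ha ih =>
      rw [Finset.sum_insert ha, Finset.sum_insert ha]
      exact (disp_add _ _).trans (by linarith)
  have hD0 : 0 ≤ D := by
    obtain ⟨γ', h⟩ := hcodiam x₀ x₀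
    exact dist_nonneg.trans h
  have nst_nonneg : ∀ g, 0 ≤ nst g := by
    intro g
    refine ge_of_tendsto' (hnst g) (fun k => ?_)
    positivity
  -- the chain lemma: short elements generate everything
  have hclosure : ∀ ε : ℝ, 0 < ε → ∀ g : Fin (m+1) → ℤ,
      g ∈ AddSubgroup.closure {h : Fin (m+1) → ℤ | dist x₀ (ρ h x₀) ≤ 2*D + ε} := by
    intro ε hε
    set S := {h : Fin (m+1) → ℤ | dist x₀ (ρ h x₀) ≤ 2*D + ε} with hSdef
    have hgx : ∀ x : X, ∃ γ : Fin (m+1) → ℤ, dist x (ρ γ x₀) ≤ D := fun x => hcodiam x x₀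
    choose gp hgp using hgx
    have Q : ∀ k : ℕ, ∀ x y : X, dist x y ≤ ε + k * (ε/2) →
        gp y - gp x ∈ AddSubgroup.closure S := by
      intro k
      induction k with
      | zero =>
        intro x y hxy
        have hxy' : dist x y ≤ ε := by push_cast at hxy; linarith
        apply AddSubgroup.subset_closure
        show dist x₀ (ρ (gp y - gp x) x₀) ≤ 2*D + ε
        rw [← dist_shift (gp x) (gp y)]
        have h1 := hgp x
        have h2 := hgp y
        calc dist (ρ (gp x) x₀) (ρ (gp y) x₀)
            ≤ dist (ρ (gp x) x₀) x + dist x y + dist y (ρ (gp y) x₀) :=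
              dist_triangle4 _ _ _ _
          _ ≤ D + ε + D := by
              rw [dist_comm (ρ (gp x) x₀) x]
              gcongr
          _ ≤ 2*D + ε := by linarith
      | succ k ih =>
        intro x y hxy
        obtain ⟨z, hz1, hz2⟩ := hlength x y (ε/4) (by linarith)
        have hk0 : (0:ℝ) ≤ (k:ℝ) := Nat.cast_nonneg k
        have hd : dist x y / 2 + ε/4 ≤ ε + k * (ε/2) := by
          push_cast at hxy ⊢
          nlinarith [mul_nonneg hk0 hε.le]
        have h1 := ih x z (hz1.trans hd)
        have h2 := ih z y (hz2.trans hd)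
        have h3 := AddSubgroup.add_mem _ h2 h1
        rwa [sub_add_sub_cancel] at h3
    intro g
    obtain ⟨k, hk⟩ := exists_nat_ge ((dist x₀ (ρ g x₀) - ε) / (ε/2))
    have hdist : dist x₀ (ρ g x₀) ≤ ε + k * (ε/2) := by
      rw [div_le_iff₀ (by linarith)] at hk
      linarith
    have ha : gp (ρ g x₀) - gp x₀ ∈ AddSubgroup.closure S := Q k x₀ (ρ g x₀) hdist
    have hb : g + gp x₀ - gp (ρ g x₀) ∈ AddSubgroup.closure S := by
      apply AddSubgroup.subset_closure
      show dist x₀ (ρ (g + gp x₀ - gp (ρ g x₀)) x₀) ≤ 2*D + ε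
      rw [← dist_shift (gp (ρ g x₀)) (g + gp x₀)]
      have h1 := hgp (ρ g x₀)
      have h2 : dist (ρ g x₀) (ρ (g + gp x₀) x₀) ≤ D := by
        rw [hadd, hiso]
        exact hgp x₀
      calc dist (ρ (gp (ρ g x₀)) x₀) (ρ (g + gp x₀) x₀)
          ≤ dist (ρ (gp (ρ g x₀)) x₀) (ρ g x₀) + dist (ρ g x₀) (ρ (g + gp x₀) x₀) :=
            dist_triangle _ _ _
        _ ≤ D + D := by
            rw [dist_comm]
            gcongr
        _ ≤ 2*D + ε := by linarith
    have h4 := AddSubgroup.add_mem _ ha hb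
    rwa [show (gp (ρ g x₀) - gp x₀) + (g + gp x₀ - gp (ρ g x₀)) = g by ring] at h4
  -- the key estimate for each nonzero γ
  have key : ∀ γ : Fin (m+1) → ℤ, γ ≠ 0 →
      (2 / (((m+1).factorial : ℕ) : ℝ)) * (1 / (D ^ m * ω)) ≤ nst γ := by
    intro γ hγ
    -- per-ε estimate
    have keyε : ∀ ε : ℝ, 0 < ε →
        (2:ℝ)^(m+1) ≤ ((m+1).factorial : ℝ) * ω * ((nst γ + ε) * (2*D + ε)^m) := by
      intro ε hε
      set w0 : ℝ := nst γ + ε with hw0def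
      set w : ℝ := 2*D + ε with hwdef
      have hw0pos : 0 < w0 := by
        have := nst_nonneg γ
        simp only [hw0def]
        linarith
      have hwpos : 0 < w := by simp only [hwdef]; linarith
      -- stable norm eventual bound
      obtain ⟨K, hK⟩ : ∃ K : ℕ, ∀ k : ℕ, k ≥ K →
          dist x₀ (ρ (k • γ) x₀) / k < w0 := by
        have hev := (hnst γ).eventually
          (eventually_lt_nhds (show nst γ < w0 by simp only [hw0def]; linarith))
        exact eventually_atTop.mp hev
      set C : ℝ := ∑ k ∈ Finset.range (K+1), dist x₀ (ρ (k • γ) x₀) with hCdef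
      have hC0 : 0 ≤ C := Finset.sum_nonneg (fun i _ => dist_nonneg)
      have hCnat : ∀ k : ℕ, dist x₀ (ρ (k • γ) x₀) ≤ k * w0 + C := by
        intro k
        rcases lt_or_ge k (K+1) with h | h
        · have hle : dist x₀ (ρ (k • γ) x₀) ≤ C :=
            Finset.single_le_sum (f := fun i : ℕ => dist x₀ (ρ (i • γ) x₀))
              (fun i _ => dist_nonneg) (Finset.mem_range.mpr h)
          have : 0 ≤ (k : ℝ) * w0 := mul_nonneg (Nat.cast_nonneg k) hw0pos.le
          linarith
        · have hk := hK k (by omega)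
          have hkpos : (0:ℝ) < k := by
            have h1 : 1 ≤ k := by omega
            have : (1:ℝ) ≤ k := by exact_mod_cast h1
            linarith
          rw [div_lt_iff₀ hkpos] at hk
          linarith
      -- a basis adapted to γ with short completing vectors
      obtain ⟨c, hc0, hcS, hcInj⟩ := aux_complete_basis m
        {h : Fin (m+1) → ℤ | dist x₀ (ρ h x₀) ≤ 2*D + ε}
        (by rw [eq_top_iff]; exact fun g _ => hclosure ε hε g) γ hγ
      -- lattice combinations with signs
      set coeff : (Fin (m+1) → Bool) → (Fin (m+1) → ℕ) → Fin (m+1) → ℤ :=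
        fun σ j i => if σ i then (j i : ℤ) + 1 else -((j i : ℤ) + 1) with hcoeffdef
      set Φ : (Fin (m+1) → Bool) → (Fin (m+1) → ℕ) → (Fin (m+1) → ℤ) :=
        fun σ j => ∑ i, coeff σ j i • c i with hΦdef
      set w' : Fin (m+1) → ℝ := fun i => if i = 0 then w0 else w with hw'def
      have hw'pos : ∀ i, 0 < w' i := by
        intro i
        simp only [hw'def]
        split
        · exact hw0pos
        · exact hwpos
      have hdispcoeff : ∀ (σ : Fin (m+1) → Bool) (j : Fin (m+1) → ℕ) (i : Fin (m+1)),
          dist x₀ (ρ (coeff σ j i • c i) x₀)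
            ≤ ((j i : ℝ) + 1) * dist x₀ (ρ (c i) x₀) := by
        intro σ j i
        have hnatsmul : dist x₀ (ρ (((j i : ℤ) + 1) • c i) x₀)
            ≤ ((j i : ℝ) + 1) * dist x₀ (ρ (c i) x₀) := by
          have hcast : ((j i : ℤ) + 1) • c i = (j i + 1 : ℕ) • c i := by
            rw [← natCast_zsmul]
            push_cast
            ring_nf
          rw [hcast]
          have h5 := disp_nsmul (c i) (j i + 1)
          push_cast at h5 ⊢
          linarith
        simp only [hcoeffdef]
        split
        · exact hnatsmul
        · rw [neg_smul, disp_neg]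
          exact hnatsmul
      -- per-term displacement bound
      have hterm : ∀ (σ : Fin (m+1) → Bool) (j : Fin (m+1) → ℕ) (i : Fin (m+1)),
          dist x₀ (ρ (coeff σ j i • c i) x₀)
            ≤ w' i * (j i : ℝ) + w' i + (if i = (0 : Fin (m+1)) then C else 0) := by
        intro σ j i
        rcases eq_or_ne i 0 with rfl | hi
        · have hbase : dist x₀ (ρ (((j (0 : Fin (m+1)) : ℤ) + 1) • γ) x₀)
              ≤ ((j (0 : Fin (m+1)) : ℝ) + 1) * w0 + C := by
            have h5 := hCnat (j 0 + 1)
            have hcast : ((j (0 : Fin (m+1)) : ℤ) + 1) • γ = (j 0 + 1 : ℕ) • γ := by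
              rw [← natCast_zsmul]
              push_cast
              ring_nf
            rw [hcast]
            push_cast at h5 ⊢
            linarith
          have hw'0 : w' (0 : Fin (m+1)) = w0 := by simp [hw'def]
          rw [if_pos (rfl : (0 : Fin (m+1)) = 0), hw'0]
          simp only [hcoeffdef, hc0]
          cases hσ : σ 0 <;>
            simp only [if_true, if_false, Bool.false_eq_true, ite_true, ite_false]
          · rw [neg_smul, disp_neg]
            linarith [hbase]
          · linarith [hbase]
        · have hS2 : dist x₀ (ρ (c i) x₀) ≤ w := by
            rw [hwdef]
            exact hcS i hi
          have h6 := hdispcoeff σ j i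
          have h7 : dist x₀ (ρ (coeff σ j i • c i) x₀) ≤ ((j i : ℝ) + 1) * w := by
            refine h6.trans ?_
            apply mul_le_mul_of_nonneg_left hS2 (by positivity)
          rw [if_neg hi]
          have hw'i : w' i = w := by simp [hw'def, hi]
          rw [hw'i]
          linarith [h7]
      -- total displacement bound
      have hsumw' : (∑ i, w' i) = w0 + m * w := by
        rw [Fin.sum_univ_succ]
        simp only [hw'def]
        congr 1
        calc ∑ i : Fin m, (if Fin.succ i = 0 then w0 else w) = ∑ _i : Fin m, w := by
              apply Finset.sum_congr rfl
              intro i _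
              rw [if_neg (Fin.succ_ne_zero i)]
          _ = m * w := by
              rw [Finset.sum_const, Finset.card_univ, Fintype.card_fin, nsmul_eq_mul]
      have hdispΦ : ∀ (σ : Fin (m+1) → Bool) (j : Fin (m+1) → ℕ),
          dist x₀ (ρ (Φ σ j) x₀) ≤ (∑ i, w' i * (j i : ℝ)) + ((w0 + m * w) + C) := by
        intro σ j
        have h1 : dist x₀ (ρ (Φ σ j) x₀)
            ≤ ∑ i, dist x₀ (ρ (coeff σ j i • c i) x₀) := by
          simp only [hΦdef]
          exact disp_sum Finset.univ _
        have h2 : (∑ i, dist x₀ (ρ (coeff σ j i • c i) x₀))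
            ≤ ∑ i, (w' i * (j i : ℝ) + w' i + (if i = (0 : Fin (m+1)) then C else 0)) :=
          Finset.sum_le_sum (fun i _ => hterm σ j i)
        have h3 : (∑ i, (w' i * (j i : ℝ) + w' i + (if i = (0 : Fin (m+1)) then C else 0)))
            = (∑ i, w' i * (j i : ℝ)) + (∑ i, w' i) + C := by
          rw [Finset.sum_add_distrib, Finset.sum_add_distrib]
          congr 1
          simp
        rw [h3, hsumw'] at h2
        linarith [h1.trans h2]
      -- injectivity of the parametrization
      have hcomp : ∀ (σ σ' : Fin (m+1) → Bool) (j j' : Fin (m+1) → ℕ) (i : Fin (m+1)),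
          coeff σ j i = coeff σ' j' i → σ i = σ' i ∧ j i = j' i := by
        intro σ σ' j j' i h
        simp only [hcoeffdef] at h
        cases hσ : σ i <;> cases hσ' : σ' i <;> rw [hσ, hσ'] at h <;>
          simp only [if_true, if_false, Bool.false_eq_true, ite_true, ite_false] at h <;>
          first
            | exact ⟨rfl, by omega⟩
            | exact (False.elim (by omega))
      have hΦinj : ∀ (σ σ' : Fin (m+1) → Bool) (j j' : Fin (m+1) → ℕ),
          Φ σ j = Φ σ' j' → σ = σ' ∧ j = j' := by
        intro σ σ' j j' h
        simp only [hΦdef] at h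
        have hk := hcInj _ _ h
        constructor
        · funext i
          exact (hcomp σ σ' j j' i (congrFun hk i)).1
        · funext i
          exact (hcomp σ σ' j j' i (congrFun hk i)).2
      -- counting inequality
      set C' : ℝ := 1 + C + (w0 + m * w) with hC'def
      have hNR : ∀ R : ℝ, C' ≤ R →
          (2:ℝ)^(m+1) * (R - C')^(m+1)
            ≤ ((m+1).factorial : ℝ) * (w0 * w^m) *
              (({g : Fin (m+1) → ℤ | dist x₀ (ρ g x₀) < R}.ncard : ℝ)) := by
        intro R hRC
        set T : ℝ := R - C' with hTdef
        have hT0 : 0 ≤ T := by simp only [hTdef]; linarith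
        have hfinR : {g : Fin (m+1) → ℤ | dist x₀ (ρ g x₀) < R}.Finite :=
          (hpd x₀ R).subset (fun g hg => show dist x₀ (ρ g x₀) ≤ R from le_of_lt hg)
        have hmemΦ : ∀ (σ : Fin (m+1) → Bool) (j : Fin (m+1) → ℕ),
            (∑ i, w' i * (j i : ℝ)) ≤ T →
            Φ σ j ∈ {g : Fin (m+1) → ℤ | dist x₀ (ρ g x₀) < R} := by
          intro σ j hj
          simp only [Set.mem_setOf_eq]
          calc dist x₀ (ρ (Φ σ j) x₀)
              ≤ (∑ i, w' i * (j i : ℝ)) + ((w0 + m * w) + C) := hdispΦ σ j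
            _ ≤ T + ((w0 + m * w) + C) := by linarith
            _ < R := by
                simp only [hTdef, hC'def]
                linarith
        set Jset : Set (Fin (m+1) → ℕ) := {j | (∑ i, w' i * (j i : ℝ)) ≤ T} with hJdef
        have hJfin : Jset.Finite := by
          have himg : (fun j => Φ (fun _ => true) j) '' Jset
              ⊆ {g : Fin (m+1) → ℤ | dist x₀ (ρ g x₀) < R} := by
            rintro _ ⟨j, hj, rfl⟩
            exact hmemΦ _ j hj
          apply Set.Finite.of_finite_image (hfinR.subset himg)
          intro j1 _ j2 _ h
          exact (hΦinj _ _ _ _ h).2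
        set s : Finset (Fin (m+1) → ℕ) := hJfin.toFinset with hsdef
        have hcount := aux_simplex_count (m+1) w' hw'pos T hT0 s
          (fun j hj => hJfin.mem_toFinset.mpr hj)
        have hprodw' : (∏ i, w' i) = w0 * w^m := by
          rw [Fin.prod_univ_succ]
          simp only [hw'def]
          congr 1
          calc ∏ i : Fin m, (if Fin.succ i = 0 then w0 else w) = ∏ _i : Fin m, w := by
                apply Finset.prod_congr rfl
                intro i _
                rw [if_neg (Fin.succ_ne_zero i)]
            _ = w ^ m := by rw [Finset.prod_const, Finset.card_univ, Fintype.card_fin]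
        have hpairs : ((Finset.univ : Finset (Fin (m+1) → Bool)) ×ˢ s).card
            ≤ hfinR.toFinset.card := by
          apply Finset.card_le_card_of_injOn (fun p => Φ p.1 p.2)
          · rintro ⟨σ, j⟩ hp
            rw [Finset.mem_coe, Finset.mem_product] at hp
            have hj : j ∈ Jset := hJfin.mem_toFinset.mp hp.2
            exact hfinR.mem_toFinset.mpr (hmemΦ σ j hj)
          · rintro ⟨σ1, j1⟩ _ ⟨σ2, j2⟩ _ h
            have h9 := hΦinj _ _ _ _ h
            exact Prod.ext h9.1 h9.2
        have hcardpairs : ((Finset.univ : Finset (Fin (m+1) → Bool)) ×ˢ s).card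
            = 2^(m+1) * s.card := by
          rw [Finset.card_product, Finset.card_univ]
          congr 1
          simp
        have h2s : (2:ℝ)^(m+1) * (s.card : ℝ) ≤ (hfinR.toFinset.card : ℝ) := by
          rw [hcardpairs] at hpairs
          exact_mod_cast hpairs
        rw [hprodw'] at hcount
        have hncard : ({g : Fin (m+1) → ℤ | dist x₀ (ρ g x₀) < R}.ncard : ℝ)
            = (hfinR.toFinset.card : ℝ) := by
          rw [Set.ncard_eq_toFinset_card _ hfinR]
        rw [hncard]
        have hKnn : (0:ℝ) ≤ ((m+1).factorial : ℝ) * (w0 * w^m) :=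
          mul_nonneg (Nat.cast_nonneg _)
            (mul_nonneg hw0pos.le (pow_nonneg hwpos.le m))
        calc (2:ℝ)^(m+1) * (R - C')^(m+1) = (2:ℝ)^(m+1) * T^(m+1) := by rw [hTdef]
          _ ≤ (2:ℝ)^(m+1) * (((m+1).factorial : ℝ) * (w0 * w^m * s.card)) := by
              apply mul_le_mul_of_nonneg_left hcount (by positivity)
          _ = (((m+1).factorial : ℝ) * (w0 * w^m)) * ((2:ℝ)^(m+1) * s.card) := by ring
          _ ≤ (((m+1).factorial : ℝ) * (w0 * w^m)) * (hfinR.toFinset.card : ℝ) :=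
              mul_le_mul_of_nonneg_left h2s hKnn
      -- pass to the limit R → ∞
      set K0 : ℝ := ((m+1).factorial : ℝ) * (w0 * w^m) with hK0def
      have hK0pos : 0 < K0 := by
        have hf : (0:ℝ) < ((m+1).factorial : ℝ) := by
          exact_mod_cast Nat.factorial_pos (m+1)
        exact mul_pos hf (mul_pos hw0pos (pow_pos hwpos m))
      have hG : Tendsto (fun R : ℝ => (2:ℝ)^(m+1) * (1 - C'/R)^(m+1) / K0) atTop
          (nhds ((2:ℝ)^(m+1) / K0)) := by
        have h1 : Tendsto (fun R : ℝ => C'/R) atTop (nhds 0) :=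
          tendsto_const_nhds.div_atTop tendsto_id
        have h1b : Tendsto (fun R : ℝ => 1 - C'/R) atTop (nhds (1 - 0)) :=
          tendsto_const_nhds.sub h1
        rw [sub_zero] at h1b
        have h2 : Tendsto (fun R : ℝ => (1 - C'/R)^(m+1)) atTop (nhds (1^(m+1))) :=
          h1b.pow (m+1)
        rw [one_pow] at h2
        have h4 := (h2.const_mul ((2:ℝ)^(m+1))).div_const K0
        simpa using h4
      have hEv : ∀ᶠ R in atTop, (2:ℝ)^(m+1) * (1 - C'/R)^(m+1) / K0
          ≤ (({g : Fin (m+1) → ℤ | dist x₀ (ρ g x₀) < R}.ncard : ℝ)) / R^(m+1) := by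
        filter_upwards [eventually_ge_atTop (max C' 1)] with R hR
        have hRC : C' ≤ R := le_trans (le_max_left _ _) hR
        have hR1 : (1:ℝ) ≤ R := le_trans (le_max_right _ _) hR
        have hRpos : (0:ℝ) < R := lt_of_lt_of_le one_pos hR1
        have hNRR := hNR R hRC
        have heq1 : (1 - C'/R) = (R - C')/R := by field_simp
        have hshape : (2:ℝ)^(m+1) * ((R - C')/R)^(m+1) / K0
            = ((2:ℝ)^(m+1) * (R - C')^(m+1)) / (K0 * R^(m+1)) := by
          rw [div_pow, mul_div_assoc', div_div, mul_comm (R^(m+1)) K0]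
        rw [heq1, hshape, div_le_div_iff₀ (mul_pos hK0pos (pow_pos hRpos (m+1)))
          (pow_pos hRpos (m+1))]
        calc (2:ℝ)^(m+1) * (R - C')^(m+1) * R^(m+1)
            ≤ (K0 * ({g : Fin (m+1) → ℤ | dist x₀ (ρ g x₀) < R}.ncard : ℝ)) * R^(m+1) :=
              mul_le_mul_of_nonneg_right hNRR (pow_nonneg hRpos.le (m+1))
          _ = ({g : Fin (m+1) → ℤ | dist x₀ (ρ g x₀) < R}.ncard : ℝ) * (K0 * R^(m+1)) := by
              ring
      have hAω : (2:ℝ)^(m+1) / K0 ≤ ω := le_of_tendsto_of_tendsto hG hω hEv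
      have h10 : (2:ℝ)^(m+1) ≤ ω * K0 := (div_le_iff₀ hK0pos).mp hAω
      calc (2:ℝ)^(m+1) ≤ ω * K0 := h10
        _ = ((m+1).factorial : ℝ) * ω * (w0 * w^m) := by rw [hK0def]; ring
    -- pass to the limit ε → 0
    have hElim : (2:ℝ)^(m+1) ≤ ((m+1).factorial : ℝ) * ω * (nst γ * (2*D)^m) := by
      have hcont : Tendsto
          (fun ε : ℝ => ((m+1).factorial : ℝ) * ω * ((nst γ + ε) * (2*D + ε)^m))
          (nhdsWithin 0 (Set.Ioi 0))
          (nhds (((m+1).factorial : ℝ) * ω * (nst γ * (2*D)^m))) := by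
        apply Tendsto.mono_left _ nhdsWithin_le_nhds
        have hc : Continuous
            (fun ε : ℝ => ((m+1).factorial : ℝ) * ω * ((nst γ + ε) * (2*D + ε)^m)) :=
          continuous_const.mul (((continuous_const.add continuous_id).mul
            ((continuous_const.add continuous_id).pow m)))
        have h5 := hc.tendsto 0
        simpa using h5
      refine ge_of_tendsto hcont ?_
      filter_upwards [self_mem_nhdsWithin] with ε hε
      exact keyε ε hε
    -- derive positivity and conclude
    have hfacpos : (0:ℝ) < ((m+1).factorial : ℝ) := by
      exact_mod_cast Nat.factorial_pos (m+1)
    have hprodpos : 0 < ω * (nst γ * (2*D)^m) := by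
      by_contra hcon
      push_neg at hcon
      have h6 : ((m+1).factorial : ℝ) * ω * (nst γ * (2*D)^m) ≤ 0 := by
        rw [mul_assoc]
        exact mul_nonpos_of_nonneg_of_nonpos hfacpos.le hcon
      have h2 : (0:ℝ) < 2^(m+1) := by positivity
      linarith [hElim]
    have hω0 : 0 ≤ ω := by
      refine ge_of_tendsto hω ?_
      filter_upwards [eventually_ge_atTop (1:ℝ)] with R hR
      have h7 : (0:ℝ) ≤ R := by linarith
      positivity
    have hnstpos : 0 < nst γ := by
      rcases lt_or_eq_of_le (nst_nonneg γ) with h | h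
      · exact h
      · exfalso
        rw [← h] at hprodpos
        simp at hprodpos
    have hωpos : 0 < ω := by
      rcases lt_or_eq_of_le hω0 with h | h
      · exact h
      · exfalso
        rw [← h] at hprodpos
        simp at hprodpos
    have h2Dpos : (0:ℝ) < (2*D)^m := by
      by_contra hcon
      push_neg at hcon
      have h5 : ω * (nst γ * (2*D)^m) = (ω * nst γ) * (2*D)^m := by ring
      rw [h5] at hprodpos
      have := mul_nonpos_of_nonneg_of_nonpos (mul_pos hωpos hnstpos).le hcon
      linarith
    have hDmpos : (0:ℝ) < D^m := by
      have h2 : (2*D)^m = 2^m * D^m := by rw [mul_pow]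
      nlinarith [pow_pos (show (0:ℝ) < 2 by norm_num) m]
    -- final algebra
    have heq : (2 / (((m+1).factorial : ℕ) : ℝ)) * (1 / (D ^ m * ω))
        = 2^(m+1) / (((m+1).factorial : ℝ) * ω * (2^m * D^m)) := by
      rw [div_mul_div_comm]
      rw [eq_div_iff (by positivity)]
      field_simp
      ring
    rw [heq, div_le_iff₀ (by positivity)]
    calc (2:ℝ)^(m+1) ≤ ((m+1).factorial : ℝ) * ω * (nst γ * (2*D)^m) := hElim
      _ = nst γ * (((m+1).factorial : ℝ) * ω * (2^m * D^m)) := by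
          rw [mul_pow]
          ring
  -- conclude
  haveI hne : Nonempty {g : Fin (m+1) → ℤ // g ≠ 0} :=
    ⟨⟨(Pi.single (0 : Fin (m+1)) (1:ℤ) : Fin (m+1) → ℤ),
      fun h => one_ne_zero (α := ℤ) (by simpa using congrFun h 0)⟩⟩
  simp only [Nat.add_sub_cancel]
  apply le_ciInf
  intro γ'
  exact key γ'.1 γ'.2
end

section
/- Rigidity in the Margulis upper bound: Suppose Γ = ℤⁿ acts as a lattice by translations on ℝⁿ equipped with a norm ‖·‖, with σ = inf_{γ≠e} ‖γ‖, and suppose ω(Γ, ‖·‖) = 2ⁿ/σⁿ. Then the closed ball of radius σ/2 of the norm equals the closed Dirichlet domain of Γ centered at the origin, and it is a convex polyhedron whose Γ-translates tile ℝⁿ (a Γ-parallelohedron). -/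
open Filter MeasureTheory
open scoped Pointwise ENNReal

section Aux
variable {n : ℕ}

/-- lattice vector -/
noncomputable def mulat (B : Module.Basis (Fin n) ℝ (Fin n → ℝ)) (z : Fin n → ℤ) : Fin n → ℝ :=
  ∑ i, (z i : ℝ) • B i

lemma mulat_eq (B : Module.Basis (Fin n) ℝ (Fin n → ℝ)) (z : Fin n → ℤ) :
    mulat B z = B.equivFun.symm (fun i => (z i : ℝ)) := by
  rw [Module.Basis.equivFun_symm_apply]; rfl

lemma mulat_sub (B : Module.Basis (Fin n) ℝ (Fin n → ℝ)) (z z' : Fin n → ℤ) :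
    mulat B (z - z') = mulat B z - mulat B z' := by
  simp only [mulat, ← Finset.sum_sub_distrib, ← sub_smul]
  apply Finset.sum_congr rfl
  intro i _
  congr 1
  push_cast [Pi.sub_apply]
  ring

lemma mulat_inj (B : Module.Basis (Fin n) ℝ (Fin n → ℝ)) {z : Fin n → ℤ} (h : mulat B z = 0) : z = 0 := by
  rw [mulat_eq] at h
  have h0 : B.equivFun.symm (0 : Fin n → ℝ) = 0 := by simp
  have h2 : (fun i => (z i : ℝ)) = (0 : Fin n → ℝ) := B.equivFun.symm.injective (h.trans h0.symm)
  funext i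
  have h3 : (z i : ℝ) = 0 := congrFun h2 i
  exact_mod_cast h3

end Aux

section Aux2
variable {n : ℕ} {N : (Fin n → ℝ) → ℝ}
  (hN0 : ∀ x, N x = 0 ↔ x = 0)
  (hNadd : ∀ x y, N (x + y) ≤ N x + N y)
  (hNsmul : ∀ (r : ℝ) (x), N (r • x) = |r| * N x)

include hN0 hNsmul in
lemma Nzero : N 0 = 0 := (hN0 0).2 rfl

include hNsmul in
lemma Nneg (x : Fin n → ℝ) : N (-x) = N x := by
  have := hNsmul (-1) x
  simpa using this

include hN0 hNadd hNsmul in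
lemma Nnonneg (x : Fin n → ℝ) : 0 ≤ N x := by
  have h1 : N (x + (-x)) ≤ N x + N (-x) := hNadd x (-x)
  rw [add_neg_cancel, Nzero hN0 hNsmul, Nneg hNsmul] at h1
  linarith

include hN0 hNadd hNsmul in
lemma Nsum {ι : Type*} (s : Finset ι) (f : ι → (Fin n → ℝ)) :
    N (∑ i ∈ s, f i) ≤ ∑ i ∈ s, N (f i) := by
  classical
  induction s using Finset.induction with
  | empty => simp [Nzero hN0 hNsmul]
  | insert _ _ hx ih =>
    rw [Finset.sum_insert hx, Finset.sum_insert hx]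
    exact le_trans (hNadd _ _) (by linarith)

include hN0 hNadd hNsmul in
lemma N_le_C : ∃ C > 0, ∀ x, N x ≤ C * ‖x‖ := by
  have hpos : (0:ℝ) ≤ ∑ i, N ((Pi.single i (1:ℝ) : Fin n → ℝ)) :=
    Finset.sum_nonneg fun i _ => Nnonneg hN0 hNadd hNsmul _
  refine ⟨(∑ i, N ((Pi.single i (1:ℝ) : Fin n → ℝ))) + 1, by linarith, fun x => ?_⟩
  have hx : x = ∑ i, (x i) • (Pi.single i (1:ℝ) : Fin n → ℝ) := by
    funext j
    simp [Finset.sum_apply, Pi.single_apply]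
  calc N x ≤ ∑ i, N ((x i) • (Pi.single i (1:ℝ) : Fin n → ℝ)) := by
        conv_lhs => rw [hx]
        exact Nsum hN0 hNadd hNsmul _ _
    _ = ∑ i, |x i| * N ((Pi.single i (1:ℝ) : Fin n → ℝ)) := by simp [hNsmul]
    _ ≤ ∑ i, ‖x‖ * N ((Pi.single i (1:ℝ) : Fin n → ℝ)) := by
        apply Finset.sum_le_sum
        intro i _
        have h1 : |x i| ≤ ‖x‖ := by
          simpa using norm_le_pi_norm x i
        exact mul_le_mul_of_nonneg_right h1 (Nnonneg hN0 hNadd hNsmul _)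
    _ = (∑ i, N ((Pi.single i (1:ℝ) : Fin n → ℝ))) * ‖x‖ := by rw [← Finset.mul_sum]; ring
    _ ≤ ((∑ i, N ((Pi.single i (1:ℝ) : Fin n → ℝ))) + 1) * ‖x‖ := by
        have := norm_nonneg x; nlinarith

include hN0 hNadd hNsmul in
lemma N_cont : Continuous N := by
  obtain ⟨C, hC, hCle⟩ := N_le_C hN0 hNadd hNsmul
  have key : ∀ x y, dist (N x) (N y) ≤ C.toNNReal * dist x y := by
    intro x y
    have t1 : N x ≤ N y + N (x - y) := by
      have := hNadd y (x - y); simpa using this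
    have t2 : N y ≤ N x + N (x - y) := by
      have := hNadd x (y - x)
      have hyx : N (y - x) = N (x - y) := by
        rw [← Nneg hNsmul (y - x)]; congr 1; abel
      rw [hyx] at this
      simpa using this
    have h3 : |N x - N y| ≤ N (x - y) := abs_sub_le_iff.2 ⟨by linarith, by linarith⟩
    have h4 : N (x - y) ≤ C * ‖x - y‖ := hCle _
    rw [Real.dist_eq, dist_eq_norm]
    calc |N x - N y| ≤ C * ‖x - y‖ := le_trans h3 h4
      _ = C.toNNReal * ‖x - y‖ := by rw [Real.coe_toNNReal _ hC.le]
  exact (LipschitzWith.of_dist_le_mul key).continuous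

include hN0 hNadd hNsmul in
lemma C_le_N (hn : 0 < n) : ∃ c > 0, ∀ x, c * ‖x‖ ≤ N x := by
  have hsn : (Metric.sphere (0 : Fin n → ℝ) 1).Nonempty := by
    refine ⟨(Pi.single (⟨0, hn⟩ : Fin n) (1:ℝ) : Fin n → ℝ), ?_⟩
    simp only [Metric.mem_sphere, dist_zero_right, Pi.norm_single]
    simp
  obtain ⟨a, ha, hmin⟩ := (isCompact_sphere (0 : Fin n → ℝ) 1).exists_isMinOn hsn
    ((N_cont hN0 hNadd hNsmul).continuousOn)
  have ha1 : ‖a‖ = 1 := by simpa using ha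
  have haN : 0 < N a := by
    rcases lt_or_eq_of_le (Nnonneg hN0 hNadd hNsmul a) with h | h
    · exact h
    · exfalso
      have : a = 0 := (hN0 a).1 h.symm
      rw [this] at ha1; simp at ha1
  refine ⟨N a, haN, fun x => ?_⟩
  rcases eq_or_ne x 0 with rfl | hx
  · simp [Nzero hN0 hNsmul]
  · have hxn : (0:ℝ) < ‖x‖ := norm_pos_iff.2 hx
    have hu : (‖x‖⁻¹ • x) ∈ Metric.sphere (0 : Fin n → ℝ) 1 := by
      simp [norm_smul, abs_of_pos (inv_pos.2 hxn), inv_mul_cancel₀ hxn.ne']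
    have h1 : N a ≤ N (‖x‖⁻¹ • x) := hmin hu
    have h2 : N (‖x‖⁻¹ • x) = ‖x‖⁻¹ * N x := by
      rw [hNsmul, abs_of_pos (inv_pos.2 hxn)]
    rw [h2] at h1
    calc N a * ‖x‖ ≤ (‖x‖⁻¹ * N x) * ‖x‖ := by nlinarith
      _ = N x := by field_simp

end Aux2

section Aux3
variable {n : ℕ} {N : (Fin n → ℝ) → ℝ}
  (hN0 : ∀ x, N x = 0 ↔ x = 0)
  (hNadd : ∀ x y, N (x + y) ≤ N x + N y)
  (hNsmul : ∀ (r : ℝ) (x), N (r • x) = |r| * N x)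

lemma coord_bound (B : Module.Basis (Fin n) ℝ (Fin n → ℝ)) :
    ∃ C > 0, ∀ x : Fin n → ℝ, ‖B.equivFun x‖ ≤ C * ‖x‖ := by
  set g := LinearMap.toContinuousLinearMap (B.equivFun.toLinearMap) with hg
  refine ⟨‖g‖ + 1, by positivity, fun x => ?_⟩
  have h1 : ‖g x‖ ≤ ‖g‖ * ‖x‖ := g.le_opNorm x
  have h2 : g x = B.equivFun x := rfl
  rw [h2] at h1
  nlinarith [norm_nonneg x]

include hN0 hNadd hNsmul in
lemma finite_Nball (hn : 0 < n) (B : Module.Basis (Fin n) ℝ (Fin n → ℝ)) (R : ℝ) :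
    {z : Fin n → ℤ | N (mulat B z) ≤ R}.Finite := by
  obtain ⟨c, hc, hcle⟩ := C_le_N hN0 hNadd hNsmul hn
  obtain ⟨C, hC, hCle⟩ := coord_bound B
  set M : ℤ := ⌈C * R / c⌉ with hM
  apply Set.Finite.subset (Set.finite_Icc (fun _ : Fin n => -M) (fun _ => M))
  intro z hz
  simp only [Set.mem_setOf_eq] at hz
  have key : ∀ i, |(z i : ℝ)| ≤ C * R / c := by
    intro i
    have e1 : B.equivFun (mulat B z) = fun i => (z i : ℝ) := by
      rw [mulat_eq]; exact B.equivFun.apply_symm_apply _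
    have e2 : |(z i : ℝ)| ≤ ‖B.equivFun (mulat B z)‖ := by
      rw [e1]
      simpa using norm_le_pi_norm (fun i => (z i : ℝ)) i
    have e3 : ‖B.equivFun (mulat B z)‖ ≤ C * ‖mulat B z‖ := hCle _
    have e4 : c * ‖mulat B z‖ ≤ N (mulat B z) := hcle _
    have e5 : ‖mulat B z‖ ≤ R / c := by
      rw [le_div_iff₀ hc]; nlinarith
    calc |(z i : ℝ)| ≤ C * ‖mulat B z‖ := le_trans e2 e3
      _ ≤ C * (R / c) := by nlinarith
      _ = C * R / c := by ring
  constructor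
  · intro i
    have h1 := (abs_le.1 (key i)).1
    have h2 : (-(M:ℝ)) ≤ (z i : ℝ) := by
      have := Int.le_ceil (C * R / c)
      push_cast
      linarith
    exact_mod_cast h2
  · intro i
    have h1 := (abs_le.1 (key i)).2
    have h2 : ((z i : ℝ)) ≤ (M : ℝ) := le_trans h1 (Int.le_ceil _)
    exact_mod_cast h2

include hN0 hNadd hNsmul in
lemma sigma_le {B : Module.Basis (Fin n) ℝ (Fin n → ℝ)} {σ : ℝ}
    (hσ : σ = ⨅ z : {z : Fin n → ℤ // z ≠ 0}, N (∑ i, (z.1 i : ℝ) • B i))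
    {z : Fin n → ℤ} (hz : z ≠ 0) : σ ≤ N (mulat B z) := by
  rw [hσ]
  have hbdd : BddBelow (Set.range fun z : {z : Fin n → ℤ // z ≠ 0} => N (∑ i, (z.1 i : ℝ) • B i)) := by
    refine ⟨0, ?_⟩
    rintro y ⟨w, rfl⟩
    exact Nnonneg hN0 hNadd hNsmul _
  exact ciInf_le hbdd ⟨z, hz⟩

include hN0 hNadd hNsmul in
lemma sigma_pos (hn : 0 < n) {B : Module.Basis (Fin n) ℝ (Fin n → ℝ)} {σ : ℝ}
    (hσ : σ = ⨅ z : {z : Fin n → ℤ // z ≠ 0}, N (∑ i, (z.1 i : ℝ) • B i)) : 0 < σ := by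
  obtain ⟨c, hc, hcle⟩ := C_le_N hN0 hNadd hNsmul hn
  obtain ⟨C, hC, hCle⟩ := coord_bound B
  have key : ∀ z : Fin n → ℤ, z ≠ 0 → c / C ≤ N (mulat B z) := by
    intro z hz
    obtain ⟨i, hi⟩ : ∃ i, z i ≠ 0 := by
      by_contra h
      push_neg at h
      exact hz (funext h)
    have h1 : (1:ℝ) ≤ |(z i : ℝ)| := by
      have h0 : (1:ℤ) ≤ |z i| := Int.one_le_abs hi
      have : ((1:ℤ):ℝ) ≤ (|z i| : ℝ) := by exact_mod_cast h0
      simpa [Int.cast_abs] using this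
    have e1 : B.equivFun (mulat B z) = fun i => (z i : ℝ) := by
      rw [mulat_eq]; exact B.equivFun.apply_symm_apply _
    have e2 : |(z i : ℝ)| ≤ ‖B.equivFun (mulat B z)‖ := by
      rw [e1]; simpa using norm_le_pi_norm (fun i => (z i : ℝ)) i
    have e3 : ‖B.equivFun (mulat B z)‖ ≤ C * ‖mulat B z‖ := hCle _
    have e4 : c * ‖mulat B z‖ ≤ N (mulat B z) := hcle _
    have e5 : (1:ℝ) ≤ C * ‖mulat B z‖ := by linarith
    have e6 : 1 / C ≤ ‖mulat B z‖ := by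
      rw [div_le_iff₀ hC]; nlinarith
    calc c / C = c * (1 / C) := by ring
      _ ≤ c * ‖mulat B z‖ := by nlinarith
      _ ≤ N (mulat B z) := e4
  have hne : Nonempty {z : Fin n → ℤ // z ≠ 0} := by
    refine ⟨⟨fun _ => 1, ?_⟩⟩
    intro h
    have := congrFun h ⟨0, hn⟩
    simp at this
  have : c / C ≤ σ := by
    rw [hσ]
    exact le_ciInf fun z => key z.1 z.2
  have : 0 < c / C := div_pos hc hC
  linarith

end Aux3

section Aux4
variable {n : ℕ} {N : (Fin n → ℝ) → ℝ}
  (hN0 : ∀ x, N x = 0 ↔ x = 0)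
  (hNadd : ∀ x y, N (x + y) ≤ N x + N y)
  (hNsmul : ∀ (r : ℝ) (x), N (r • x) = |r| * N x)

include hNsmul in
lemma Nball_smul {r : ℝ} (hr : 0 < r) :
    {x : Fin n → ℝ | N x ≤ r} = r • {x : Fin n → ℝ | N x ≤ 1} := by
  ext x
  rw [Set.mem_smul_set_iff_inv_smul_mem₀ hr.ne']
  simp only [Set.mem_setOf_eq, hNsmul, abs_of_pos (inv_pos.2 hr)]
  rw [inv_mul_le_iff₀ hr, mul_one]

include hN0 hNadd hNsmul in
lemma vol_Nball {r : ℝ} (hr : 0 < r) :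
    volume {x : Fin n → ℝ | N x ≤ r}
      = ENNReal.ofReal (r ^ n) * volume {x : Fin n → ℝ | N x ≤ 1} := by
  rw [Nball_smul hNsmul hr, Measure.addHaar_smul, Module.finrank_fin_fun,
    abs_of_nonneg (pow_nonneg hr.le n)]

include hN0 hNadd hNsmul in
lemma vol_K1_pos : 0 < volume {x : Fin n → ℝ | N x ≤ 1} := by
  obtain ⟨C, hC, hCle⟩ := N_le_C hN0 hNadd hNsmul
  have hsub : Metric.ball (0 : Fin n → ℝ) (1 / C) ⊆ {x | N x ≤ 1} := by
    intro x hx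
    simp only [Metric.mem_ball, dist_zero_right] at hx
    have := hCle x
    have : N x < C * (1 / C) := lt_of_le_of_lt this (by nlinarith)
    simp only [Set.mem_setOf_eq]
    rw [mul_one_div, div_self hC.ne'] at this
    linarith
  calc (0:ℝ≥0∞) < volume (Metric.ball (0 : Fin n → ℝ) (1 / C)) :=
        Metric.measure_ball_pos _ _ (by positivity)
    _ ≤ _ := measure_mono hsub

include hN0 hNadd hNsmul in
lemma vol_K1_lt_top (hn : 0 < n) : volume {x : Fin n → ℝ | N x ≤ 1} < ⊤ := by
  obtain ⟨c, hc, hcle⟩ := C_le_N hN0 hNadd hNsmul hn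
  have hsub : {x : Fin n → ℝ | N x ≤ 1} ⊆ Metric.closedBall 0 (1 / c) := by
    intro x hx
    simp only [Set.mem_setOf_eq] at hx
    simp only [Metric.mem_closedBall, dist_zero_right]
    have := hcle x
    rw [le_div_iff₀ hc]
    linarith
  exact lt_of_le_of_lt (measure_mono hsub) (measure_closedBall_lt_top)

include hN0 hNadd hNsmul in
lemma vol_Noball (hn : 0 < n) {r : ℝ} (hr : 0 < r) :
    volume {x : Fin n → ℝ | N x < r}
      = ENNReal.ofReal (r ^ n) * volume {x : Fin n → ℝ | N x ≤ 1} := by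
  set V := volume {x : Fin n → ℝ | N x ≤ 1}
  refine le_antisymm ?_ ?_
  · calc volume {x : Fin n → ℝ | N x < r} ≤ volume {x : Fin n → ℝ | N x ≤ r} :=
        measure_mono (Set.setOf_subset_setOf.2 fun x hx => le_of_lt hx)
      _ = ENNReal.ofReal (r ^ n) * V := vol_Nball hN0 hNadd hNsmul hr
  · have key : ∀ s : ℝ, s ∈ Set.Ioo 0 r →
        ENNReal.ofReal (s ^ n) * V ≤ volume {x : Fin n → ℝ | N x < r} := by
      intro s hs
      rw [← vol_Nball hN0 hNadd hNsmul hs.1]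
      exact measure_mono (Set.setOf_subset_setOf.2 fun x hx => lt_of_le_of_lt hx hs.2)
    have htend : Tendsto (fun s : ℝ => ENNReal.ofReal (s ^ n) * V)
        (nhdsWithin r (Set.Iio r)) (nhds (ENNReal.ofReal (r ^ n) * V)) := by
      apply ENNReal.Tendsto.mul_const
      · exact (ENNReal.continuous_ofReal.tendsto _).comp
          ((continuous_pow n).tendsto r |>.mono_left nhdsWithin_le_nhds)
      · right
        exact (vol_K1_lt_top hN0 hNadd hNsmul hn).ne
    refine le_of_tendsto htend ?_
    filter_upwards [Ioo_mem_nhdsLT_of_mem (⟨hr, le_rfl⟩ : r ∈ Set.Ioc (0:ℝ) r)]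
      with s hs using key s hs

end Aux4

section Aux5
variable {n : ℕ} {N : (Fin n → ℝ) → ℝ}
  (hN0 : ∀ x, N x = 0 ↔ x = 0)
  (hNadd : ∀ x y, N (x + y) ≤ N x + N y)
  (hNsmul : ∀ (r : ℝ) (x), N (r • x) = |r| * N x)

/-- translated open ball of the norm `N` -/
def tball (N : (Fin n → ℝ) → ℝ) (c : Fin n → ℝ) (r : ℝ) : Set (Fin n → ℝ) :=
  {y | N (y - c) < r}

include hN0 hNadd hNsmul in
lemma tball_open (c : Fin n → ℝ) (r : ℝ) : IsOpen (tball N c r) := by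
  have hc : Continuous fun y : Fin n → ℝ => N (y - c) :=
    (N_cont hN0 hNadd hNsmul).comp (continuous_id.sub continuous_const)
  exact isOpen_lt hc continuous_const

lemma tball_eq (c : Fin n → ℝ) (r : ℝ) :
    tball N c r = (fun y => -c + y) ⁻¹' {x | N x < r} := by
  ext y
  simp [tball, neg_add_eq_sub]

include hN0 hNadd hNsmul in
lemma tball_vol (hn : 0 < n) (c : Fin n → ℝ) {r : ℝ} (hr : 0 < r) :
    volume (tball N c r) = ENNReal.ofReal (r ^ n) * volume {x : Fin n → ℝ | N x ≤ 1} := by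
  rw [tball_eq, measure_preimage_add, vol_Noball hN0 hNadd hNsmul hn hr]

include hNadd hNsmul in
lemma Nsub' (a b : Fin n → ℝ) : N (a - b) ≤ N a + N b := by
  have := hNadd a (-b)
  rw [Nneg hNsmul] at this
  simpa [sub_eq_add_neg] using this

lemma mulat_zero (B : Module.Basis (Fin n) ℝ (Fin n → ℝ)) : mulat B 0 = 0 := by
  simp [mulat]

end Aux5

section Cover
variable {n : ℕ} {N : (Fin n → ℝ) → ℝ}
  (hN0 : ∀ x, N x = 0 ↔ x = 0)
  (hNadd : ∀ x y, N (x + y) ≤ N x + N y)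
  (hNsmul : ∀ (r : ℝ) (x), N (r • x) = |r| * N x)

include hN0 hNadd hNsmul in
set_option maxHeartbeats 1000000 in
lemma Ncovering (hn : 0 < n) (B : Module.Basis (Fin n) ℝ (Fin n → ℝ)) {σ : ℝ}
    (hσ : σ = ⨅ z : {z : Fin n → ℤ // z ≠ 0}, N (∑ i, (z.1 i : ℝ) • B i))
    (hω : Filter.Tendsto
      (fun R : ℝ =>
        (({z : Fin n → ℤ | N (∑ i, (z i : ℝ) • B i) < R}.ncard : ℝ)) / R ^ n)
      Filter.atTop (nhds ((2 : ℝ) ^ n / σ ^ n)))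
    (x : Fin n → ℝ) : ∃ z : Fin n → ℤ, N (x - mulat B z) ≤ σ / 2 := by
  by_contra hcon
  push_neg at hcon
  have hσpos : 0 < σ := sigma_pos hN0 hNadd hNsmul hn hσ
  have hσle : ∀ z : Fin n → ℤ, z ≠ 0 → σ ≤ N (mulat B z) :=
    fun z hz => sigma_le hN0 hNadd hNsmul hσ hz
  have hNx : 0 ≤ N x := Nnonneg hN0 hNadd hNsmul x
  -- the minimum distance from x to the lattice
  have hS0fin : {z : Fin n → ℤ | N (x - mulat B z) ≤ N x}.Finite := by
    apply (finite_Nball hN0 hNadd hNsmul hn B (2 * N x)).subset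
    intro z hz
    simp only [Set.mem_setOf_eq] at hz ⊢
    have h1 : N (mulat B z) ≤ N x + N (x - mulat B z) := by
      have := Nsub' hNadd hNsmul x (x - mulat B z)
      simpa using this
    linarith
  have h0mem : (0 : Fin n → ℤ) ∈ hS0fin.toFinset := by
    rw [Set.Finite.mem_toFinset]
    simp [mulat_zero]
  have htne : hS0fin.toFinset.Nonempty := ⟨0, h0mem⟩
  set m : ℝ := hS0fin.toFinset.inf' htne (fun z => N (x - mulat B z)) with hmdef
  have hmlt : σ / 2 < m := by
    rw [hmdef, Finset.lt_inf'_iff]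
    intro z _
    exact hcon z
  have hm : ∀ z : Fin n → ℤ, m ≤ N (x - mulat B z) := by
    intro z
    by_cases hz : z ∈ hS0fin.toFinset
    · exact Finset.inf'_le _ hz
    · rw [Set.Finite.mem_toFinset, Set.mem_setOf_eq, not_le] at hz
      have hmx : m ≤ N x := by
        have h5 : m ≤ N (x - mulat B 0) := Finset.inf'_le _ h0mem
        rwa [mulat_zero, sub_zero] at h5
      linarith
  set ε : ℝ := min ((m - σ / 2) / 2) (σ / 4) with hεdef
  have hε : 0 < ε := lt_min (by linarith) (by linarith)
  have hε1 : ∀ z : Fin n → ℤ, σ / 2 + 2 * ε ≤ N (x - mulat B z) := by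
    intro z
    have h1 := hm z
    have h2 : ε ≤ (m - σ / 2) / 2 := min_le_left _ _
    linarith
  have hε2 : 4 * ε ≤ σ := by
    have := min_le_right ((m - σ / 2) / 2) (σ / 4)
    linarith
  set V := volume {x : Fin n → ℝ | N x ≤ 1} with hVdef
  have hV0 : V ≠ 0 := (vol_K1_pos hN0 hNadd hNsmul).ne'
  have hVT : V ≠ ⊤ := (vol_K1_lt_top hN0 hNadd hNsmul hn).ne
  -- the disjoint family
  set A : (Fin n → ℤ) → Set (Fin n → ℝ) := fun z => tball N (mulat B z) (σ / 2) with hAdef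
  set C : (Fin n → ℤ) → Set (Fin n → ℝ) := fun z => tball N (x + mulat B z) ε with hCdef
  set D : (Fin n → ℤ) → Set (Fin n → ℝ) := fun z => A z ∪ C z with hDdef
  have hAC : ∀ z z' : Fin n → ℤ, Disjoint (A z) (C z') := by
    intro z z'
    rw [Set.disjoint_left]
    intro y hy hy'
    simp only [hAdef, hCdef, tball, Set.mem_setOf_eq] at hy hy'
    have hid : x - mulat B (z - z') = (y - mulat B z) - (y - (x + mulat B z')) := by
      rw [mulat_sub]; abel
    have h1 : N (x - mulat B (z - z')) ≤ N (y - mulat B z) + N (y - (x + mulat B z')) := by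
      rw [hid]; exact Nsub' hNadd hNsmul _ _
    have h2 := hε1 (z - z')
    linarith
  have hAA : ∀ z z' : Fin n → ℤ, z ≠ z' → Disjoint (A z) (A z') := by
    intro z z' hzz
    rw [Set.disjoint_left]
    intro y hy hy'
    simp only [hAdef, tball, Set.mem_setOf_eq] at hy hy'
    have hid : mulat B (z - z') = (y - mulat B z') - (y - mulat B z) := by
      rw [mulat_sub]; abel
    have h1 : N (mulat B (z - z')) ≤ N (y - mulat B z') + N (y - mulat B z) := by
      rw [hid]; exact Nsub' hNadd hNsmul _ _
    have h2 := hσle (z - z') (sub_ne_zero.2 hzz)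
    linarith
  have hCC : ∀ z z' : Fin n → ℤ, z ≠ z' → Disjoint (C z) (C z') := by
    intro z z' hzz
    rw [Set.disjoint_left]
    intro y hy hy'
    simp only [hCdef, tball, Set.mem_setOf_eq] at hy hy'
    have hid : mulat B (z - z') = (y - (x + mulat B z')) - (y - (x + mulat B z)) := by
      rw [mulat_sub]; abel
    have h1 : N (mulat B (z - z')) ≤ N (y - (x + mulat B z')) + N (y - (x + mulat B z)) := by
      rw [hid]; exact Nsub' hNadd hNsmul _ _
    have h2 := hσle (z - z') (sub_ne_zero.2 hzz)
    linarith
  have hDD : ∀ z z' : Fin n → ℤ, z ≠ z' → Disjoint (D z) (D z') := by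
    intro z z' hzz
    simp only [hDdef, Set.disjoint_union_left, Set.disjoint_union_right]
    exact ⟨⟨hAA z z' hzz, (hAC z' z).symm⟩, ⟨hAC z z', hCC z z' hzz⟩⟩
  have hDmeas : ∀ z : Fin n → ℤ, MeasurableSet (D z) :=
    fun z => ((tball_open hN0 hNadd hNsmul _ _).union (tball_open hN0 hNadd hNsmul _ _)).measurableSet
  have hDvol : ∀ z : Fin n → ℤ,
      volume (D z) = ENNReal.ofReal ((σ / 2) ^ n + ε ^ n) * V := by
    intro z
    have h1 : volume (D z) = volume (A z) + volume (C z) :=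
      measure_union (hAC z z) (tball_open hN0 hNadd hNsmul _ _).measurableSet
    rw [h1, hAdef, hCdef, tball_vol hN0 hNadd hNsmul hn _ (by linarith : (0:ℝ) < σ / 2),
      tball_vol hN0 hNadd hNsmul hn _ hε, ← hVdef,
      ENNReal.ofReal_add (by positivity) (by positivity), add_mul]
  -- the counting bound
  set Mx : ℝ := N x + σ with hMxdef
  have hMx : 0 ≤ Mx := by linarith
  have main : ∀ R : ℝ, 1 ≤ R →
      ({z : Fin n → ℤ | N (mulat B z) < R}.ncard : ℝ) * ((σ / 2) ^ n + ε ^ n)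
        ≤ (R + Mx) ^ n := by
    intro R hR
    have hfin : {z : Fin n → ℤ | N (mulat B z) < R}.Finite :=
      (finite_Nball hN0 hNadd hNsmul hn B R).subset
        (Set.setOf_subset_setOf.2 fun z hz => le_of_lt hz)
    set t := hfin.toFinset with htdef
    have hsub : (⋃ z ∈ t, D z) ⊆ {y : Fin n → ℝ | N y ≤ R + Mx} := by
      intro y hy
      simp only [Set.mem_iUnion, exists_prop] at hy
      obtain ⟨z, hzt, hzD⟩ := hy
      rw [htdef, Set.Finite.mem_toFinset, Set.mem_setOf_eq] at hzt
      rcases hzD with hyA | hyC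
      · simp only [hAdef, tball, Set.mem_setOf_eq] at hyA
        have h1 : N y ≤ N (y - mulat B z) + N (mulat B z) := by
          have := hNadd (y - mulat B z) (mulat B z)
          simpa using this
        simp only [Set.mem_setOf_eq]
        linarith
      · simp only [hCdef, tball, Set.mem_setOf_eq] at hyC
        have h1 : N y ≤ N (y - (x + mulat B z)) + N (x + mulat B z) := by
          have := hNadd (y - (x + mulat B z)) (x + mulat B z)
          simpa using this
        have h2 : N (x + mulat B z) ≤ N x + N (mulat B z) := hNadd _ _
        simp only [Set.mem_setOf_eq]
        linarith
    have hmeasure : (t.card : ℝ≥0∞) * (ENNReal.ofReal ((σ / 2) ^ n + ε ^ n) * V)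
        ≤ ENNReal.ofReal ((R + Mx) ^ n) * V := by
      have h1 : volume (⋃ z ∈ t, D z) = ∑ z ∈ t, volume (D z) :=
        measure_biUnion_finset (fun z _ z' _ hzz => hDD z z' hzz) (fun z _ => hDmeas z)
      have h2 : ∑ z ∈ t, volume (D z) = t.card • (ENNReal.ofReal ((σ / 2) ^ n + ε ^ n) * V) := by
        rw [Finset.sum_congr rfl (fun z _ => hDvol z), Finset.sum_const]
      have h3 : volume (⋃ z ∈ t, D z) ≤ volume {y : Fin n → ℝ | N y ≤ R + Mx} :=
        measure_mono hsub
      have h4 : volume {y : Fin n → ℝ | N y ≤ R + Mx} = ENNReal.ofReal ((R + Mx) ^ n) * V :=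
        vol_Nball hN0 hNadd hNsmul (by linarith : (0:ℝ) < R + Mx)
      calc (t.card : ℝ≥0∞) * (ENNReal.ofReal ((σ / 2) ^ n + ε ^ n) * V)
          = t.card • (ENNReal.ofReal ((σ / 2) ^ n + ε ^ n) * V) := by
            rw [nsmul_eq_mul]
        _ = volume (⋃ z ∈ t, D z) := by rw [h1, h2]
        _ ≤ volume {y : Fin n → ℝ | N y ≤ R + Mx} := h3
        _ = ENNReal.ofReal ((R + Mx) ^ n) * V := h4
    have hcancel : (t.card : ℝ≥0∞) * ENNReal.ofReal ((σ / 2) ^ n + ε ^ n)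
        ≤ ENNReal.ofReal ((R + Mx) ^ n) := by
      rw [← ENNReal.mul_le_mul_iff_left hV0 hVT]
      calc (t.card : ℝ≥0∞) * ENNReal.ofReal ((σ / 2) ^ n + ε ^ n) * V
          = (t.card : ℝ≥0∞) * (ENNReal.ofReal ((σ / 2) ^ n + ε ^ n) * V) := by ring
        _ ≤ ENNReal.ofReal ((R + Mx) ^ n) * V := hmeasure
    have hofreal : ENNReal.ofReal ((t.card : ℝ) * ((σ / 2) ^ n + ε ^ n))
        ≤ ENNReal.ofReal ((R + Mx) ^ n) := by
      rw [ENNReal.ofReal_mul (Nat.cast_nonneg t.card), ENNReal.ofReal_natCast]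
      exact hcancel
    have hreal : (t.card : ℝ) * ((σ / 2) ^ n + ε ^ n) ≤ (R + Mx) ^ n := by
      exact (ENNReal.ofReal_le_ofReal_iff (pow_nonneg (by linarith) n)).1 hofreal
    rwa [Set.ncard_eq_toFinset_card _ hfin]
  -- take the limit
  have hq : (0:ℝ) < (σ / 2) ^ n + ε ^ n := by positivity
  have hgt : Filter.Tendsto (fun R : ℝ => (1 + Mx / R) ^ n / ((σ / 2) ^ n + ε ^ n))
      Filter.atTop (nhds (1 / ((σ / 2) ^ n + ε ^ n))) := by
    have h1 : Filter.Tendsto (fun R : ℝ => Mx / R) Filter.atTop (nhds 0) :=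
      Filter.Tendsto.div_atTop tendsto_const_nhds Filter.tendsto_id
    have h2 : Filter.Tendsto (fun R : ℝ => 1 + Mx / R) Filter.atTop (nhds 1) := by
      simpa using (tendsto_const_nhds :
        Filter.Tendsto (fun _ : ℝ => (1:ℝ)) Filter.atTop (nhds 1)).add h1
    have h3 := h2.pow n
    rw [one_pow] at h3
    exact h3.div_const _
  have hle : (fun R : ℝ =>
        (({z : Fin n → ℤ | N (∑ i, (z i : ℝ) • B i) < R}.ncard : ℝ)) / R ^ n)
      ≤ᶠ[Filter.atTop] fun R : ℝ => (1 + Mx / R) ^ n / ((σ / 2) ^ n + ε ^ n) := by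
    filter_upwards [Filter.eventually_ge_atTop (1:ℝ)] with R hR
    have hR0 : (0:ℝ) < R := by linarith
    have h1 := main R hR
    have h2 : ((1:ℝ) + Mx / R) ^ n * R ^ n = (R + Mx) ^ n := by
      rw [← mul_pow]
      congr 1
      field_simp
    rw [div_le_div_iff₀ (by positivity) hq]
    calc ({z : Fin n → ℤ | N (∑ i, (z i : ℝ) • B i) < R}.ncard : ℝ) * ((σ / 2) ^ n + ε ^ n)
        = ({z : Fin n → ℤ | N (mulat B z) < R}.ncard : ℝ) * ((σ / 2) ^ n + ε ^ n) := rfl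
      _ ≤ (R + Mx) ^ n := h1
      _ = (1 + Mx / R) ^ n * R ^ n := h2.symm
  have hckey : (2:ℝ) ^ n / σ ^ n ≤ 1 / ((σ / 2) ^ n + ε ^ n) :=
    le_of_tendsto_of_tendsto hω hgt hle
  have hc2 : (2:ℝ) ^ n / σ ^ n = 1 / (σ / 2) ^ n := by
    rw [div_pow]
    field_simp
  rw [hc2, div_le_div_iff₀ (by positivity) hq] at hckey
  have hεn := pow_pos hε n
  linarith

end Cover

set_option maxHeartbeats 1000000 in
/-- rigidity in the Margulis upper bound: if a lattice
`Γ ≅ ℤⁿ` (spanned by a basis `B` of `ℝⁿ`) in a normed `ℝⁿ` has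
`σ = inf_{γ≠0} ‖γ‖` and asymptotic volume `ω = 2ⁿ/σⁿ`, then the closed
`σ/2`-ball equals the closed Dirichlet domain of `Γ` at the origin, and it is
a convex polyhedron whose `Γ`-translates tile `ℝⁿ` (a `Γ`-parallelohedron). -/
theorem margulis_upper_bound_rigidity
    (n : ℕ) (hn : 0 < n) (N : (Fin n → ℝ) → ℝ)
    (hN0 : ∀ x, N x = 0 ↔ x = 0)
    (hNadd : ∀ x y, N (x + y) ≤ N x + N y)
    (hNsmul : ∀ (r : ℝ) (x), N (r • x) = |r| * N x)
    (B : Module.Basis (Fin n) ℝ (Fin n → ℝ))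
    (σ : ℝ)
    (hσ : σ = ⨅ z : {z : Fin n → ℤ // z ≠ 0}, N (∑ i, (z.1 i : ℝ) • B i))
    (hω : Tendsto
      (fun R : ℝ =>
        (({z : Fin n → ℤ | N (∑ i, (z i : ℝ) • B i) < R}.ncard : ℝ)) / R ^ n)
      atTop (nhds ((2 : ℝ) ^ n / σ ^ n))) :
    {x : Fin n → ℝ | N x ≤ σ / 2}
        = {p : Fin n → ℝ | ∀ z : Fin n → ℤ, z ≠ 0 →
            N p ≤ N (p - ∑ i, (z i : ℝ) • B i)} ∧
    Convex ℝ {x : Fin n → ℝ | N x ≤ σ / 2} ∧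
    (∃ (m : ℕ) (f : Fin m → ((Fin n → ℝ) →ₗ[ℝ] ℝ)) (b : Fin m → ℝ),
      {x : Fin n → ℝ | N x ≤ σ / 2} = ⋂ i, {x | f i x ≤ b i}) ∧
    (⋃ z : Fin n → ℤ,
        (fun x => (∑ i, (z i : ℝ) • B i) + x) '' {x : Fin n → ℝ | N x ≤ σ / 2})
      = Set.univ ∧
    Pairwise fun z z' : Fin n → ℤ =>
      Disjoint
        (interior ((fun x => (∑ i, (z i : ℝ) • B i) + x) '' {x : Fin n → ℝ | N x ≤ σ / 2}))
        (interior ((fun x => (∑ i, (z' i : ℝ) • B i) + x) '' {x : Fin n → ℝ | N x ≤ σ / 2})) := by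
  have hσpos : 0 < σ := sigma_pos hN0 hNadd hNsmul hn hσ
  have hσle : ∀ z : Fin n → ℤ, z ≠ 0 → σ ≤ N (mulat B z) :=
    fun z hz => sigma_le hN0 hNadd hNsmul hσ hz
  have hcov : ∀ p : Fin n → ℝ, ∃ z : Fin n → ℤ, N (p - mulat B z) ≤ σ / 2 :=
    Ncovering hN0 hNadd hNsmul hn B hσ hω
  have hNneg : ∀ x, 0 ≤ N x := Nnonneg hN0 hNadd hNsmul
  set K : Set (Fin n → ℝ) := {x | N x ≤ σ / 2} with hKdef
  -- image of K under translation
  have himg : ∀ z : Fin n → ℤ, (fun x => mulat B z + x) '' K = {y | N (y - mulat B z) ≤ σ / 2} := by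
    intro z
    ext y
    constructor
    · rintro ⟨w, hw, rfl⟩
      simp only [Set.mem_setOf_eq] at hw ⊢
      simpa [hKdef] using hw
    · intro hy
      exact ⟨y - mulat B z, hy, by show mulat B z + (y - mulat B z) = y; rw [add_comm]; exact sub_add_cancel _ _⟩
  -- part 1 : ball = Dirichlet domain
  have part1 : K = {p : Fin n → ℝ | ∀ z : Fin n → ℤ, z ≠ 0 →
      N p ≤ N (p - ∑ i, (z i : ℝ) • B i)} := by
    ext p
    simp only [hKdef, Set.mem_setOf_eq]
    constructor
    · intro hp z hz
      have h1 : N (mulat B z) ≤ N p + N (p - mulat B z) := by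
        have := Nsub' hNadd hNsmul p (p - mulat B z)
        simpa using this
      have h2 := hσle z hz
      show N p ≤ N (p - mulat B z)
      linarith
    · intro hp
      obtain ⟨z, hz⟩ := hcov p
      by_cases h0 : z = 0
      · subst h0
        rwa [mulat_zero, sub_zero] at hz
      · exact le_trans (hp z h0) hz
  -- part 2 : convexity
  have hconv : ∀ (c : Fin n → ℝ) (r : ℝ), Convex ℝ {y : Fin n → ℝ | N (y - c) ≤ r} := by
    intro c r x hx y hy a b ha hb hab
    simp only [Set.mem_setOf_eq] at hx hy ⊢
    have hid : a • x + b • y - c = a • (x - c) + b • (y - c) := by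
      have h5 : a • (x - c) + b • (y - c) = a • x + b • y - (a + b) • c := by
        rw [smul_sub, smul_sub, add_smul]
        abel
      rw [h5, hab, one_smul]
    calc N (a • x + b • y - c) ≤ N (a • (x - c)) + N (b • (y - c)) := by
          rw [hid]; exact hNadd _ _
      _ = a * N (x - c) + b * N (y - c) := by
          rw [hNsmul, hNsmul, abs_of_nonneg ha, abs_of_nonneg hb]
      _ ≤ a * r + b * r := by
          have := hNneg (x - c)
          have := hNneg (y - c)
          nlinarith
      _ = r := by rw [← add_mul, hab, one_mul]
  have part2 : Convex ℝ K := by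
    have := hconv 0 (σ / 2)
    simpa using this
  -- interior of translates
  have hint : ∀ z : Fin n → ℤ,
      interior ((fun x => mulat B z + x) '' K) ⊆ {y | N (y - mulat B z) < σ / 2} := by
    intro z
    rw [himg z]
    intro y hy
    obtain ⟨δ, hδ, hball⟩ : ∃ δ > 0, Metric.ball y δ ⊆ {y | N (y - mulat B z) ≤ σ / 2} :=
      Metric.mem_nhds_iff.1 (mem_interior_iff_mem_nhds.1 hy)
    set w : Fin n → ℝ := y - mulat B z with hwdef
    rcases eq_or_lt_of_le (hNneg w) with h0 | h0
    · show N w < σ / 2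
      rw [← h0]
      linarith
    · have hw0 : w ≠ 0 := fun h => by rw [h, (hN0 0).2 rfl] at h0; exact lt_irrefl _ h0
      have hwn : (0:ℝ) < ‖w‖ := norm_pos_iff.2 hw0
      set θ : ℝ := δ / (2 * ‖w‖) with hθdef
      have hθ : 0 < θ := by positivity
      have hy' : y + θ • w ∈ Metric.ball y δ := by
        rw [Metric.mem_ball, dist_eq_norm]
        have : ‖y + θ • w - y‖ = θ * ‖w‖ := by
          rw [add_sub_cancel_left, norm_smul, Real.norm_eq_abs, abs_of_pos hθ]
        rw [this, hθdef]
        rw [div_mul_eq_mul_div]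
        rw [div_lt_iff₀ (by positivity)]
        nlinarith
      have hmem := hball hy'
      simp only [Set.mem_setOf_eq] at hmem
      have hid : y + θ • w - mulat B z = (1 + θ) • w := by
        rw [add_smul, one_smul, hwdef]
        abel
      rw [hid, hNsmul, abs_of_pos (by linarith)] at hmem
      show N w < σ / 2
      nlinarith
  -- part 5 : pairwise disjoint interiors
  have part5 : Pairwise fun z z' : Fin n → ℤ =>
      Disjoint (interior ((fun x => mulat B z + x) '' K))
        (interior ((fun x => mulat B z' + x) '' K)) := by
    intro z z' hzz
    rw [Set.disjoint_left]
    intro y hy hy'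
    have h1 := hint z hy
    have h2 := hint z' hy'
    simp only [Set.mem_setOf_eq] at h1 h2
    have hid : mulat B (z - z') = (y - mulat B z') - (y - mulat B z) := by
      rw [mulat_sub]; abel
    have h3 : N (mulat B (z - z')) ≤ N (y - mulat B z') + N (y - mulat B z) := by
      rw [hid]; exact Nsub' hNadd hNsmul _ _
    have h4 := hσle (z - z') (sub_ne_zero.2 hzz)
    linarith
  -- part 4 : covering
  have part4 : (⋃ z : Fin n → ℤ, (fun x => mulat B z + x) '' K) = Set.univ := by
    rw [Set.eq_univ_iff_forall]
    intro y
    obtain ⟨z, hz⟩ := hcov y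
    exact Set.mem_iUnion.2 ⟨z, ⟨y - mulat B z, hz, by show mulat B z + (y - mulat B z) = y; rw [add_comm]; exact sub_add_cancel _ _⟩⟩
  -- part 3 : polyhedron
  have part3 : ∃ (m : ℕ) (f : Fin m → ((Fin n → ℝ) →ₗ[ℝ] ℝ)) (b : Fin m → ℝ),
      K = ⋂ i, {x | f i x ≤ b i} := by
    classical
    have hNcont : Continuous N := N_cont hN0 hNadd hNsmul
    have hUopen : IsOpen {y : Fin n → ℝ | N y < σ / 2} :=
      isOpen_lt hNcont continuous_const
    have hUconv : Convex ℝ {y : Fin n → ℝ | N y < σ / 2} := by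
      intro x hx y hy a b ha hb hab
      simp only [Set.mem_setOf_eq] at hx hy ⊢
      have h1 : N (a • x + b • y) ≤ a * N x + b * N y := by
        calc N (a • x + b • y) ≤ N (a • x) + N (b • y) := hNadd _ _
          _ = a * N x + b * N y := by
              rw [hNsmul, hNsmul, abs_of_nonneg ha, abs_of_nonneg hb]
      rcases eq_or_lt_of_le ha with ha0 | ha0
      · have hb1 : b = 1 := by linarith
        rw [← ha0, zero_smul, zero_add, hb1, one_smul]
        exact hy
      · have h2 : a * N x + b * N y < a * (σ / 2) + b * (σ / 2) := by nlinarith [hNneg y]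
        have h3 : a * (σ / 2) + b * (σ / 2) = σ / 2 := by rw [← add_mul, hab, one_mul]
        linarith
    -- the set of neighbours
    have hSfin : {z : Fin n → ℤ | z ≠ 0 ∧ ∃ y, N (y - mulat B z) ≤ σ / 2 ∧ N y ≤ σ / 2}.Finite := by
      apply (finite_Nball hN0 hNadd hNsmul hn B σ).subset
      rintro z ⟨hz0, y, h1, h2⟩
      show N (mulat B z) ≤ σ
      have hid : mulat B z = y - (y - mulat B z) := by abel
      have h3 : N (y - (y - mulat B z)) ≤ N y + N (y - mulat B z) := Nsub' hNadd hNsmul _ _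
      rw [← hid] at h3
      linarith
    set tS := hSfin.toFinset with htSdef
    have hSgood : ∀ z ∈ tS, ∃ fu : ((Fin n → ℝ) →L[ℝ] ℝ) × ℝ,
        (∀ y, N y ≤ σ / 2 → fu.1 y ≤ fu.2) ∧
        (∀ y, N (y - mulat B z) ≤ σ / 2 → fu.2 ≤ fu.1 y) ∧ 0 < fu.2 := by
      intro z hz
      rw [htSdef, Set.Finite.mem_toFinset] at hz
      obtain ⟨hz0, -⟩ := hz
      have hdisj : Disjoint {y : Fin n → ℝ | N y < σ / 2} {y | N (y - mulat B z) ≤ σ / 2} := by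
        rw [Set.disjoint_left]
        intro y hy hy'
        simp only [Set.mem_setOf_eq] at hy hy'
        have hid : mulat B z = y - (y - mulat B z) := by abel
        have h3 : N (y - (y - mulat B z)) ≤ N y + N (y - mulat B z) := Nsub' hNadd hNsmul _ _
        rw [← hid] at h3
        have h4 := hσle z hz0
        linarith
      obtain ⟨f, u, hfu, hft⟩ :=
        geometric_hahn_banach_open hUconv hUopen (hconv (mulat B z) (σ / 2)) hdisj
      have hu0 : 0 < u := by
        have h0U : (0 : Fin n → ℝ) ∈ {y : Fin n → ℝ | N y < σ / 2} := by
          show N 0 < σ / 2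
          rw [(hN0 0).2 rfl]
          linarith
        have := hfu 0 h0U
        rwa [map_zero] at this
      refine ⟨(f, u), ?_, fun y hy => hft y hy, hu0⟩
      intro y hy
      by_contra hgt
      push_neg at hgt
      have hfy : 0 < f y := lt_trans hu0 hgt
      set t' : ℝ := (u / f y + 1) / 2 with ht'def
      have hd0 : 0 < u / f y := div_pos hu0 hfy
      have hd1 : u / f y < 1 := (div_lt_one hfy).2 hgt
      have h2 : 0 < t' := by rw [ht'def]; linarith
      have h3 : t' < 1 := by rw [ht'def]; linarith
      have hty : N (t' • y) < σ / 2 := by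
        rw [hNsmul, abs_of_pos h2]
        nlinarith [hNneg y]
      have h4 := hfu _ hty
      rw [ContinuousLinearMap.map_smul, smul_eq_mul] at h4
      have h5 : t' * f y = (u + f y) / 2 := by
        rw [ht'def]
        field_simp
      rw [h5] at h4
      linarith
    set e := tS.equivFin with hedef
    refine ⟨tS.card,
      fun i => ((Classical.choose (hSgood (e.symm i).1 (e.symm i).2)).1 :
        (Fin n → ℝ) →L[ℝ] ℝ).toLinearMap,
      fun i => (Classical.choose (hSgood (e.symm i).1 (e.symm i).2)).2, ?_⟩
    apply Set.Subset.antisymm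
    · intro y hy
      apply Set.mem_iInter.2
      intro i
      have hsp := Classical.choose_spec (hSgood (e.symm i).1 (e.symm i).2)
      exact hsp.1 y hy
    · intro y hy
      by_contra hyK
      have hNy : σ / 2 < N y := by
        simpa [hKdef, not_le] using hyK
      have hNy0 : 0 < N y := by linarith
      set ts : ℝ := (σ / 2) / N y with htsdef
      have hts0 : 0 < ts := by positivity
      have hts1 : ts < 1 := (div_lt_one hNy0).2 hNy
      set yb : Fin n → ℝ := ts • y with hybdef
      have hybK : N yb = σ / 2 := by
        rw [hybdef, hNsmul, abs_of_pos hts0, htsdef]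
        field_simp
      have hTfin : {z : Fin n → ℤ | N (mulat B z) ≤ N y + σ}.Finite :=
        finite_Nball hN0 hNadd hNsmul hn B (N y + σ)
      set tT := hTfin.toFinset.filter (fun z => z ≠ 0) with htTdef
      set G : Set (Fin n → ℝ) := ⋃ z ∈ tT, {w | N (w - mulat B z) ≤ σ / 2} with hGdef
      have hGclosed : IsClosed G := by
        apply isClosed_biUnion_finset
        intro z _
        exact isClosed_le (hNcont.comp (continuous_id.sub continuous_const)) continuous_const
      have hGmem : ∀ s : ℝ, s ∈ Set.Ioc ts 1 → s • y ∈ G := by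
        intro s hs
        obtain ⟨z, hz⟩ := hcov (s • y)
        have hsy : N (s • y) = s * N y := by
          rw [hNsmul, abs_of_pos (lt_trans hts0 hs.1)]
        have htsny : ts * N y = σ / 2 := by
          rw [htsdef]; field_simp
        have hz0 : z ≠ 0 := by
          intro h
          rw [h, mulat_zero, sub_zero, hsy] at hz
          nlinarith [hs.1]
        have hbound : N (mulat B z) ≤ N y + σ := by
          have hid : mulat B z = s • y - (s • y - mulat B z) := by abel
          have h6 : N (s • y - (s • y - mulat B z)) ≤ N (s • y) + N (s • y - mulat B z) :=
            Nsub' hNadd hNsmul _ _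
          rw [← hid, hsy] at h6
          nlinarith [hs.2, hNy0]
        have hztT : z ∈ tT := by
          rw [htTdef, Finset.mem_filter, Set.Finite.mem_toFinset]
          exact ⟨hbound, hz0⟩
        exact Set.mem_biUnion hztT hz
      have hybG : yb ∈ G := by
        have htend : Tendsto (fun s : ℝ => s • y) (nhdsWithin ts (Set.Ioi ts)) (nhds yb) := by
          have hc : Continuous (fun s : ℝ => s • y) := continuous_id.smul continuous_const
          exact (hc.tendsto ts).mono_left nhdsWithin_le_nhds
        apply hGclosed.mem_of_tendsto htend
        filter_upwards [Ioc_mem_nhdsGT_of_mem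
          (⟨le_rfl, hts1⟩ : ts ∈ Set.Ico ts 1)] with s hs using hGmem s hs
      obtain ⟨z₀, hz₀mem, hz₀ball⟩ := Set.mem_iUnion₂.1 hybG
      rw [htTdef, Finset.mem_filter] at hz₀mem
      have hz₀0 : z₀ ≠ 0 := hz₀mem.2
      simp only [Set.mem_setOf_eq] at hz₀ball
      have hz₀S : z₀ ∈ tS := by
        rw [htSdef, Set.Finite.mem_toFinset]
        exact ⟨hz₀0, yb, hz₀ball, le_of_eq hybK⟩
      set i₀ := e ⟨z₀, hz₀S⟩ with hi₀def
      have hsymm : e.symm i₀ = ⟨z₀, hz₀S⟩ := by rw [hi₀def, Equiv.symm_apply_apply]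
      have hsp := Classical.choose_spec (hSgood (e.symm i₀).1 (e.symm i₀).2)
      set fu := Classical.choose (hSgood (e.symm i₀).1 (e.symm i₀).2) with hfudef
      have hyle : fu.1 y ≤ fu.2 := Set.mem_iInter.1 hy i₀
      have hle1 : fu.1 yb ≤ fu.2 := hsp.1 yb (le_of_eq hybK)
      have hle2 : fu.2 ≤ fu.1 yb := by
        apply hsp.2.1 yb
        rw [hsymm]
        exact hz₀ball
      have hu0 : 0 < fu.2 := hsp.2.2
      have hfyb : fu.1 yb = ts * fu.1 y := by
        rw [hybdef, ContinuousLinearMap.map_smul, smul_eq_mul]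
      nlinarith [hle1, hle2, hyle, hu0, hts0, hts1, hfyb]
  exact ⟨part1, part2, part3, part4, part5⟩
end

section
/- For ℤ with the word metric d_{2k} of the generating set {±1, ±2k}: d_{2k}(0, k) = k while ‖k‖_{st,2k} ≤ 1/2. Hence the difference d_{2k}(0,k) − ‖k‖_{st,2k} ≥ k − 1/2 is unbounded as k → ∞, showing the Bounded Distance constant cannot depend only on rank, systole, and codiameter. -/
open Filter

/-- Word length in an additive group with respect to a set `S`, allowing
letters in `S ∪ (-S)`. -/
noncomputable def addWordLength {G : Type*} [AddGroup G] (S : Set G) (g : G) : ℕ :=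
  sInf {k | ∃ l : List G, l.length = k ∧ (∀ x ∈ l, x ∈ S ∨ -x ∈ S) ∧ l.sum = g}

private lemma decomp_aux (k : ℕ) (l : List ℤ)
    (hl : ∀ x ∈ l, x ∈ ({1, (2 * k : ℤ)} : Set ℤ) ∨ -x ∈ ({1, (2 * k : ℤ)} : Set ℤ)) :
    ∃ A B : ℤ, l.sum = A + 2 * k * B ∧ |A| + |B| ≤ l.length := by
  induction l with
  | nil => exact ⟨0, 0, by simp, by simp⟩
  | cons x xs ih =>
    obtain ⟨A, B, hsum, hlen⟩ := ih (fun y hy => hl y (List.mem_cons_of_mem x hy))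
    rcases hl x (List.mem_cons_self) with h | h
    · rcases h with h | h
      · refine ⟨A + 1, B, ?_, ?_⟩
        · simp only [List.sum_cons, hsum, h]; ring
        · simp only [List.length_cons]
          have := abs_add_le A 1
          push_cast
          have : |A + 1| ≤ |A| + 1 := by simpa using abs_add_le A 1
          omega
      · refine ⟨A, B + 1, ?_, ?_⟩
        · simp only [List.sum_cons, hsum, Set.mem_singleton_iff.mp h]; ring
        · simp only [List.length_cons]
          have : |B + 1| ≤ |B| + 1 := by simpa using abs_add_le B 1
          push_cast
          omega
    · rcases h with h | h
      · have hx : x = -1 := by linarith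
        refine ⟨A - 1, B, ?_, ?_⟩
        · simp only [List.sum_cons, hsum, hx]; ring
        · simp only [List.length_cons]
          have : |A - 1| ≤ |A| + 1 := by simpa using abs_sub A 1
          push_cast
          omega
      · have hx : x = -(2 * k) := by
          have := Set.mem_singleton_iff.mp h; linarith
        refine ⟨A, B - 1, ?_, ?_⟩
        · simp only [List.sum_cons, hsum, hx]; ring
        · simp only [List.length_cons]
          have : |B - 1| ≤ |B| + 1 := by simpa using abs_sub B 1
          push_cast
          omega

private lemma word_len_k (k : ℕ) (hk : 1 ≤ k) :
    addWordLength ({1, (2 * k : ℤ)} : Set ℤ) (k : ℤ) = k := by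
  apply le_antisymm
  · apply Nat.sInf_le
    refine ⟨List.replicate k (1 : ℤ), by simp, ?_, by simp⟩
    intro x hx
    rw [List.eq_of_mem_replicate hx]
    exact Or.inl (Or.inl rfl)
  · apply le_csInf
    · exact ⟨k, List.replicate k (1 : ℤ), by simp, fun x hx => by
        rw [List.eq_of_mem_replicate hx]; exact Or.inl (Or.inl rfl), by simp⟩
    · rintro n ⟨l, hlen, hmem, hsum⟩
      obtain ⟨A, B, hAB, hle⟩ := decomp_aux k l hmem
      rw [hsum] at hAB
      -- A = k * (1 - 2*B)
      have hA : A = (k : ℤ) * (1 - 2 * B) := by linarith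
      have hBne : (1 : ℤ) - 2 * B ≠ 0 := by omega
      have h1 : (1 : ℤ) ≤ |1 - 2 * B| := by
        rcases abs_pos.mpr hBne with h; omega
      have hAk : (k : ℤ) ≤ |A| := by
        rw [hA, abs_mul, abs_of_nonneg (by positivity : (0:ℤ) ≤ (k:ℤ))]
        nlinarith [abs_nonneg ((1:ℤ) - 2*B)]
      have hB0 : (0:ℤ) ≤ |B| := abs_nonneg B
      rw [hlen] at hle
      omega

private lemma word_len_hk_le (k h : ℕ) :
    addWordLength ({1, (2 * k : ℤ)} : Set ℤ) ((h : ℤ) * (k : ℤ)) ≤ h / 2 + h % 2 * k := by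
  apply Nat.sInf_le
  refine ⟨List.replicate (h / 2) ((2 * k : ℤ)) ++ List.replicate (h % 2 * k) (1 : ℤ),
    by simp, ?_, ?_⟩
  · intro x hx
    rcases List.mem_append.mp hx with hx | hx
    · rw [List.eq_of_mem_replicate hx]; exact Or.inl (Or.inr rfl)
    · rw [List.eq_of_mem_replicate hx]; exact Or.inl (Or.inl rfl)
  · rw [List.sum_append, List.sum_replicate, List.sum_replicate]
    simp only [nsmul_eq_mul, mul_one]
    have : (h : ℤ) = 2 * (↑(h / 2) : ℤ) + ↑(h % 2) := by omega
    rw [this]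
    push_cast
    ring

/-- for `ℤ` with the word metric `d_{2k}` of `{±1, ±2k}`:
`d_{2k}(0,k) = k` while the stable norm satisfies `‖k‖_{st,2k} ≤ 1/2`; hence
`d_{2k}(0,k) − ‖k‖_{st,2k} ≥ k − 1/2` is unbounded as `k → ∞`. -/
theorem unbounded_gap_distance_stable_norm
    (k : ℕ) (hk : 1 ≤ k) :
    addWordLength ({1, (2 * k : ℤ)} : Set ℤ) (k : ℤ) = k ∧
    ∀ L : ℝ,
      Tendsto (fun h : ℕ =>
          (addWordLength ({1, (2 * k : ℤ)} : Set ℤ) ((h : ℤ) * (k : ℤ)) : ℝ) / (h : ℝ))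
        atTop (nhds L) →
      L ≤ 1 / 2 ∧
      (k : ℝ) - 1 / 2 ≤
        (addWordLength ({1, (2 * k : ℤ)} : Set ℤ) (k : ℤ) : ℝ) - L := by
  refine ⟨word_len_k k hk, ?_⟩
  intro L hL
  have hg : Tendsto (fun h : ℕ => (1 : ℝ) / 2 + (k : ℝ) / h) atTop (nhds (1 / 2)) := by
    have : Tendsto (fun h : ℕ => (k : ℝ) / h) atTop (nhds 0) :=
      Tendsto.div_atTop tendsto_const_nhds tendsto_natCast_atTop_atTop
    simpa using tendsto_const_nhds.add this
  have hLle : L ≤ 1 / 2 := by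
    refine le_of_tendsto_of_tendsto hL hg ?_
    filter_upwards [eventually_ge_atTop 1] with h hh
    have hh' : (0 : ℝ) < h := by exact_mod_cast hh
    have hnat := word_len_hk_le k h
    have hb : (addWordLength ({1, (2 * k : ℤ)} : Set ℤ) ((h : ℤ) * (k : ℤ)) : ℝ)
        ≤ (h : ℝ) / 2 + k := by
      have h1 : (↑(h / 2) : ℝ) ≤ (h : ℝ) / 2 := by
        rw [le_div_iff₀ (by norm_num : (0:ℝ) < 2)]
        exact_mod_cast Nat.div_mul_le_self h 2
      have h2 : (↑(h % 2 * k) : ℝ) ≤ (k : ℝ) := by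
        have : h % 2 * k ≤ k := by
          have := Nat.mod_lt h (by norm_num : 0 < 2)
          nlinarith
        exact_mod_cast this
      calc (addWordLength ({1, (2 * k : ℤ)} : Set ℤ) ((h : ℤ) * (k : ℤ)) : ℝ)
          ≤ (↑(h / 2 + h % 2 * k) : ℝ) := by exact_mod_cast hnat
        _ = (↑(h / 2) : ℝ) + ↑(h % 2 * k) := by push_cast; ring
        _ ≤ (h : ℝ) / 2 + k := add_le_add h1 h2
    rw [div_le_iff₀ hh']
    calc (addWordLength ({1, (2 * k : ℤ)} : Set ℤ) ((h : ℤ) * (k : ℤ)) : ℝ)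
        ≤ (h : ℝ) / 2 + k := hb
      _ = (1 / 2 + (k : ℝ) / h) * h := by field_simp
  refine ⟨hLle, ?_⟩
  rw [word_len_k k hk]
  linarith
end

section
/- Define on ℤ the function |||m||| = |m| + √|m|. Then ||| · ||| induces a left-invariant metric d(m, m') = |||m − m'||| on ℤ (in particular it satisfies the triangle inequality), the associated stable norm is ‖m‖_st = lim_{h→∞} |||mh|||/h = |m|, and the difference |||m||| − ‖m‖_st = √|m| is unbounded. -/
open Filter

lemma sqrt_subadd (x y : ℝ) (hx : 0 ≤ x) (hy : 0 ≤ y) :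
    Real.sqrt (x + y) ≤ Real.sqrt x + Real.sqrt y := by
  have h1 : x + y ≤ (Real.sqrt x + Real.sqrt y) ^ 2 := by
    have hx' := Real.sq_sqrt hx
    have hy' := Real.sq_sqrt hy
    have := mul_nonneg (Real.sqrt_nonneg x) (Real.sqrt_nonneg y)
    nlinarith
  calc Real.sqrt (x + y) ≤ Real.sqrt ((Real.sqrt x + Real.sqrt y) ^ 2) :=
        Real.sqrt_le_sqrt h1
    _ = Real.sqrt x + Real.sqrt y :=
        Real.sqrt_sq (by positivity)

/-- the function `|||m||| = |m| + √|m|` on `ℤ` induces a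
left-invariant metric (it is symmetric, vanishes only at `0`, and is
subadditive), its stable norm is `‖m‖_st = lim_h |||mh|||/h = |m|`, and the
difference `|||m||| − ‖m‖_st = √|m|` is unbounded. -/
theorem sqrt_perturbed_norm_stable_norm_and_unbounded_gap :
    (∀ m : ℤ, ((|m| : ℝ) + Real.sqrt |(m : ℝ)| = 0) ↔ m = 0) ∧
    (∀ m : ℤ, (|(-m)| : ℝ) + Real.sqrt |((-m : ℤ) : ℝ)|
        = (|m| : ℝ) + Real.sqrt |(m : ℝ)|) ∧
    (∀ m m' : ℤ, (|m + m'| : ℝ) + Real.sqrt |((m + m' : ℤ) : ℝ)|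
        ≤ ((|m| : ℝ) + Real.sqrt |(m : ℝ)|) + ((|m'| : ℝ) + Real.sqrt |(m' : ℝ)|)) ∧
    (∀ m : ℤ, Tendsto
        (fun h : ℕ => ((|(h : ℤ) * m| : ℝ) + Real.sqrt |(((h : ℤ) * m : ℤ) : ℝ)|) / (h : ℝ))
        atTop (nhds (|m| : ℝ))) ∧
    (∀ m : ℤ, ((|m| : ℝ) + Real.sqrt |(m : ℝ)|) - (|m| : ℝ) = Real.sqrt |(m : ℝ)|) ∧
    ∀ C : ℝ, ∃ m : ℤ, C < ((|m| : ℝ) + Real.sqrt |(m : ℝ)|) - (|m| : ℝ) := by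
  refine ⟨?_, ?_, ?_, ?_, ?_, ?_⟩
  · intro m
    constructor
    · intro h
      have h1 : (0:ℝ) ≤ (|m| : ℝ) := by positivity
      have h2 : (0:ℝ) ≤ Real.sqrt |(m : ℝ)| := Real.sqrt_nonneg _
      have h3 : (|m| : ℝ) = 0 := by linarith
      have : |m| = 0 := by exact_mod_cast h3
      exact abs_eq_zero.mp this
    · rintro rfl; simp
  · intro m; simp [abs_neg]
  · intro m m'
    push_cast
    have h1 : |(m:ℝ) + (m':ℝ)| ≤ |(m:ℝ)| + |(m':ℝ)| := abs_add_le _ _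
    have h2 : Real.sqrt |(m:ℝ) + (m':ℝ)| ≤ Real.sqrt |(m:ℝ)| + Real.sqrt |(m':ℝ)| :=
      le_trans (Real.sqrt_le_sqrt h1) (sqrt_subadd _ _ (abs_nonneg _) (abs_nonneg _))
    linarith
  · intro m
    have habs : (0:ℝ) ≤ |(m:ℝ)| := abs_nonneg _
    have key : ∀ᶠ h : ℕ in atTop,
        (fun h : ℕ => (|(m:ℝ)| + Real.sqrt (|(m:ℝ)| / h))) h
        = ((|(h : ℤ) * m| : ℝ) + Real.sqrt |(((h : ℤ) * m : ℤ) : ℝ)|) / (h : ℝ) := by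
      filter_upwards [eventually_ge_atTop 1] with h hh
      have h0 : (0:ℝ) < (h:ℕ) := by exact_mod_cast Nat.lt_of_lt_of_le Nat.zero_lt_one hh
      have hs : Real.sqrt (h:ℝ) * Real.sqrt (h:ℝ) = (h:ℝ) := Real.mul_self_sqrt h0.le
      have hsp : (0:ℝ) < Real.sqrt (h:ℝ) := Real.sqrt_pos.mpr h0
      push_cast
      rw [abs_mul, abs_of_nonneg h0.le, Real.sqrt_mul h0.le, Real.sqrt_div habs]
      field_simp
      ring_nf
      nlinarith [hs, Real.sqrt_nonneg (|(m:ℝ)|)]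
    refine Tendsto.congr' key ?_
    have t1 : Tendsto (fun h : ℕ => |(m:ℝ)| / h) atTop (nhds 0) :=
      tendsto_const_div_atTop_nhds_zero_nat _
    have t2 : Tendsto (fun h : ℕ => Real.sqrt (|(m:ℝ)| / h)) atTop (nhds 0) := by
      have := (Real.continuous_sqrt.tendsto 0).comp t1
      simpa only [Function.comp_def, Real.sqrt_zero] using this
    have h3 := (tendsto_const_nhds (x := |(m:ℝ)|)).add t2
    simpa [Int.cast_abs] using h3
  · intro m; ring
  · intro C
    obtain ⟨k, hk⟩ := exists_nat_gt C
    refine ⟨(k : ℤ) ^ 2, ?_⟩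
    have : Real.sqrt |(((k:ℤ)^2 : ℤ) : ℝ)| = (k : ℝ) := by
      push_cast
      rw [abs_of_nonneg (by positivity), Real.sqrt_sq (by positivity)]
    rw [add_sub_cancel_left, this]
    exact hk
end
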